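/- arXiv:2405.16979 — 13 statements merged into one kernel-verified Lean document; each statement's English description precedes it below -/
import Mathlib

section
/- For every integer n ≥ 2, the complex polynomial X^{2n+2} + n·X^{2n+1} − 1 is squarefree; equivalently, every complex root of t^{2n+2} + n·t^{2n+1} = 1 is a simple root. -/
open Polynomial

theorem key (n : ℕ) (hn : 2 ≤ n) :
    Separable ((X : ℂ[X]) ^ (2 * n + 2) + C (n : ℂ) * X ^ (2 * n + 1) - 1) := by
  rw [Separable, Polynomial.isCoprime_iff_aeval_ne_zero_of_isAlgClosed (k := ℂ) ℂ]
  intro t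
  by_contra hc
  push_neg at hc
  obtain ⟨h1, h2⟩ := hc
  simp only [derivative_sub, derivative_add, derivative_one, derivative_X_pow,
    derivative_C_mul, derivative_natCast_mul, map_add, map_sub, map_mul, map_pow, aeval_X,
    aeval_C, map_one, map_natCast, sub_zero, aeval_natCast] at h1 h2
  have e1 : 2*n+2-1 = 2*n+1 := by omega
  have e2 : 2*n+1-1 = 2*n := by omega
  rw [e1, e2] at h2
  have hn0 : (n:ℂ) ≠ 0 := Nat.cast_ne_zero.mpr (by omega)
  have hd : ((2*n+2:ℕ):ℂ) ≠ 0 := Nat.cast_ne_zero.mpr (by omega)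
  have ht0 : t ≠ 0 := by
    rintro rfl
    simp [pow_succ] at h1
  have h2' : t^(2*n) * (((2*n+2:ℕ):ℂ)*t + (n:ℂ)*((2*n+1:ℕ):ℂ)) = 0 := by
    linear_combination h2
  have hfac : ((2*n+2:ℕ):ℂ)*t + (n:ℂ)*((2*n+1:ℕ):ℂ) = 0 :=
    (mul_eq_zero.mp h2').resolve_left (pow_ne_zero _ ht0)
  push_cast at hfac hd
  have ht : t = -((n:ℂ)*(2*(n:ℂ)+1))/(2*(n:ℂ)+2) := by
    field_simp
    linear_combination hfac
  set r : ℝ := -((n:ℝ)*(2*(n:ℝ)+1))/(2*(n:ℝ)+2) with hr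
  have htr : t = (r:ℂ) := by rw [ht, hr]; push_cast; ring
  have hpow : t^(2*n+1) * (t + (n:ℂ)) = 1 := by linear_combination h1
  have hsum : t + (n:ℂ) = (n:ℂ)/(2*(n:ℂ)+2) := by
    rw [ht]; field_simp; ring
  rw [hsum] at hpow
  have hT : t^(2*n+1) = (2*(n:ℂ)+2)/(n:ℂ) := by
    field_simp at hpow ⊢
    linear_combination hpow
  have hval : ((r^(2*n+1) : ℝ) : ℂ) = (((2*(n:ℝ)+2)/(n:ℝ) : ℝ) : ℂ) := by
    push_cast
    rw [← htr, hT]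
  have hreal : r^(2*n+1) = (2*(n:ℝ)+2)/(n:ℝ) := Complex.ofReal_inj.mp hval
  have hrneg : r < 0 := by
    rw [hr]
    apply div_neg_of_neg_of_pos
    · have : (0:ℝ) < (n:ℝ) := by positivity
      nlinarith
    · positivity
  have hodd : Odd (2*n+1) := ⟨n, by ring⟩
  have h5 : r^(2*n+1) < 0 := hodd.pow_neg hrneg
  have h6 : (0:ℝ) < (2*(n:ℝ)+2)/(n:ℝ) := by positivity
  linarith [hreal ▸ h5]

/-- For every integer `n ≥ 2`, the complex polynomial
`X^(2n+2) + n·X^(2n+1) − 1` is squarefree; equivalently, every complex root of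
`t^(2n+2) + n·t^(2n+1) = 1` is a simple root. -/
theorem stmt_1 (n : ℕ) (hn : 2 ≤ n) :
    Squarefree ((X : ℂ[X]) ^ (2 * n + 2) + C (n : ℂ) * X ^ (2 * n + 1) - 1) ∧
    ∀ t : ℂ, t ^ (2 * n + 2) + (n : ℂ) * t ^ (2 * n + 1) = 1 →
      Polynomial.rootMultiplicity t
        ((X : ℂ[X]) ^ (2 * n + 2) + C (n : ℂ) * X ^ (2 * n + 1) - 1) = 1 := by
  have hsep := key n hn
  refine ⟨hsep.squarefree, fun t ht => ?_⟩
  have hroot : IsRoot ((X : ℂ[X]) ^ (2 * n + 2) + C (n : ℂ) * X ^ (2 * n + 1) - 1) t := by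
    simp [IsRoot, sub_eq_zero, ht]
  have hne : ((X : ℂ[X]) ^ (2 * n + 2) + C (n : ℂ) * X ^ (2 * n + 1) - 1) ≠ 0 :=
    hsep.squarefree.ne_zero
  have h1 := (rootMultiplicity_pos hne).mpr hroot
  have h2 := rootMultiplicity_le_one_of_separable hsep t
  omega
end

section
/- Let n ≥ 2 be an integer, and let a_+ denote the unique real root of t^{2n+2} + n·t^{2n+1} = 1 lying in (0,1) and a_- the unique real root lying in (−n−1, −n) (these exist for n ≥ 2). Then every complex root α of t^{2n+2} + n·t^{2n+1} = 1 with α ≠ a_- satisfies a_+ ≤ |α| ≤ 1. -/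
/-!
The lower bound is the triangle inequality: `1 = ‖α^(2n+2) + n α^(2n+1)‖ ≤ h(‖α‖)`, and `h` is
increasing on `[0, ∞)` with `h(a₊) = 1`.

For the upper bound, a root `α` with `‖α‖ > 1` gives a root `β = α⁻¹` of `t^(2n+2) - n t = 1` in
the open unit disk, and `a₋⁻¹` is another root, of modulus `< 1/n`. Both lie in the disk of
radius `2/3`, on which `t ↦ t^(2n+2) - n t` is injective because `(2n+2) (2/3)^(2n+1) < n`;
hence `α = a₋`.
-/

open Finset

lemma norm_pow_sub_pow_le {𝕜 : Type*} [NormedField 𝕜] {x y : 𝕜} {c : ℝ}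
    (hx : ‖x‖ ≤ c) (hy : ‖y‖ ≤ c) (k : ℕ) :
    ‖x ^ k - y ^ k‖ ≤ k * c ^ (k - 1) * ‖x - y‖ := by
  have hc : 0 ≤ c := (norm_nonneg x).trans hx
  have hterm : ∀ i ∈ range k, ‖x ^ i * y ^ (k - 1 - i)‖ ≤ c ^ (k - 1) := by
    intro i hi
    have hik : i + (k - 1 - i) = k - 1 := by have := mem_range.mp hi; omega
    calc ‖x ^ i * y ^ (k - 1 - i)‖ = ‖x‖ ^ i * ‖y‖ ^ (k - 1 - i) := by
          rw [norm_mul, norm_pow, norm_pow]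
      _ ≤ c ^ i * c ^ (k - 1 - i) := by gcongr
      _ = c ^ (k - 1) := by rw [← pow_add, hik]
  calc ‖x ^ k - y ^ k‖
      = ‖∑ i ∈ range k, x ^ i * y ^ (k - 1 - i)‖ * ‖x - y‖ := by
        rw [← geom_sum₂_mul, norm_mul]
    _ ≤ (∑ _i ∈ range k, c ^ (k - 1)) * ‖x - y‖ := by
        gcongr
        exact (norm_sum_le _ _).trans (sum_le_sum hterm)
    _ = k * c ^ (k - 1) * ‖x - y‖ := by
        rw [sum_const, card_range, nsmul_eq_mul]

lemma eq_of_pow_sub_mul_eq {𝕜 : Type*} [NormedField 𝕜] {x y a : 𝕜} {c : ℝ} {k : ℕ}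
    (hx : ‖x‖ ≤ c) (hy : ‖y‖ ≤ c) (hc : k * c ^ (k - 1) < ‖a‖)
    (h : x ^ k - a * x = y ^ k - a * y) : x = y := by
  have hpow : x ^ k - y ^ k = a * (x - y) := by linear_combination h
  have hle : ‖a‖ * ‖x - y‖ ≤ k * c ^ (k - 1) * ‖x - y‖ := by
    rw [← norm_mul, ← hpow]
    exact norm_pow_sub_pow_le hx hy k
  have hnorm : ‖x - y‖ = 0 := by
    by_contra hne
    have := mul_lt_mul_of_pos_right hc ((norm_nonneg _).lt_of_ne' hne)
    linarith
  exact sub_eq_zero.mp (norm_eq_zero.mp hnorm)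

lemma inv_pow_eq_of_pow_add_mul_pow_eq_one {K : Type*} [Field K] {x a : K} {k : ℕ}
    (h : x ^ (k + 2) + a * x ^ (k + 1) = 1) : x⁻¹ ^ (k + 2) = a * x⁻¹ + 1 := by
  have hx : x ≠ 0 := by
    rintro rfl
    simp at h
  have hxx : x * x⁻¹ = 1 := mul_inv_cancel₀ hx
  calc x⁻¹ ^ (k + 2) = x⁻¹ ^ (k + 2) * (x ^ (k + 2) + a * x ^ (k + 1)) := by rw [h, mul_one]
    _ = (x * x⁻¹) ^ (k + 2) + a * x⁻¹ * (x * x⁻¹) ^ (k + 1) := by ring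
    _ = a * x⁻¹ + 1 := by rw [hxx, one_pow, one_pow]; ring

lemma pow_add_mul_pow_lt_pow_add_mul_pow {r a c : ℝ} {k : ℕ} (hr : 0 ≤ r) (hra : r < a)
    (hc : 0 ≤ c) : r ^ (k + 2) + c * r ^ (k + 1) < a ^ (k + 2) + c * a ^ (k + 1) := by
  have h1 : r ^ (k + 2) < a ^ (k + 2) := pow_lt_pow_left₀ hra hr (by omega)
  have h2 : r ^ (k + 1) ≤ a ^ (k + 1) := pow_le_pow_left₀ hr hra.le _
  nlinarith

lemma norm_le_of_pow_eq_mul_add_one {𝕜 : Type*} [RCLike 𝕜] {β : 𝕜} {n : ℕ} (hn : 2 ≤ n)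
    (hβ : β ^ (2 * n + 2) = n * β + 1) (hβ1 : ‖β‖ < 1) : ‖β‖ ≤ 2 / 3 := by
  set m := ‖β‖
  have hm : 0 ≤ m := norm_nonneg β
  have htri : n * m ≤ m ^ (2 * n + 2) + 1 := by
    calc (n : ℝ) * m = ‖β ^ (2 * n + 2) - 1‖ := by
          rw [hβ, add_sub_cancel_right, norm_mul, RCLike.norm_natCast]
      _ ≤ m ^ (2 * n + 2) + 1 := by simpa [m] using norm_sub_le (β ^ (2 * n + 2)) 1
  have hpow : m ^ (2 * n + 2) ≤ m ^ 3 := pow_le_pow_of_le_one hm hβ1.le (by omega)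
  have hn' : (2 : ℝ) ≤ n := by exact_mod_cast hn
  -- `2m - 1 - m³ = (1 - m)(m² + m - 1)` is positive on `(2/3, 1)`
  by_contra! hm23
  nlinarith [mul_pos (sub_pos.mpr hβ1) (by nlinarith : 0 < m ^ 2 + m - 1)]

lemma two_mul_add_two_mul_two_thirds_pow_lt {n : ℕ} (hn : 2 ≤ n) :
    (2 * n + 2) * (2 / 3 : ℝ) ^ (2 * n + 1) < n := by
  have hpow : (2 / 3 : ℝ) ^ (2 * n + 1) ≤ (2 / 3) ^ 5 :=
    pow_le_pow_of_le_one (by norm_num) (by norm_num) (by omega)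
  have hn' : (2 : ℝ) ≤ n := by exact_mod_cast hn
  nlinarith [pow_nonneg (by norm_num : (0 : ℝ) ≤ 2 / 3) (2 * n + 1)]

theorem stmt_4_general (n : ℕ) (hn : 2 ≤ n)
    (ap : ℝ)
    (hapr : ap ^ (2 * n + 2) + (n : ℝ) * ap ^ (2 * n + 1) = 1)
    (am : ℝ) (ham : am ∈ Set.Ioo (-(n : ℝ) - 1) (-(n : ℝ)))
    (hamr : am ^ (2 * n + 2) + (n : ℝ) * am ^ (2 * n + 1) = 1) :
    ∀ α : ℂ, α ^ (2 * n + 2) + (n : ℂ) * α ^ (2 * n + 1) = 1 → α ≠ (am : ℂ) →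
      ap ≤ ‖α‖ ∧ ‖α‖ ≤ 1 := by
  intro α hα hne
  have htri : 1 ≤ ‖α‖ ^ (2 * n + 2) + n * ‖α‖ ^ (2 * n + 1) := by
    calc (1 : ℝ) = ‖α ^ (2 * n + 2) + (n : ℂ) * α ^ (2 * n + 1)‖ := by rw [hα, norm_one]
      _ ≤ ‖α ^ (2 * n + 2)‖ + ‖(n : ℂ) * α ^ (2 * n + 1)‖ := norm_add_le _ _
      _ = ‖α‖ ^ (2 * n + 2) + n * ‖α‖ ^ (2 * n + 1) := by
        rw [norm_mul, norm_pow, norm_pow, Complex.norm_natCast]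
  refine ⟨?_, ?_⟩
  · by_contra! hlt
    have := pow_add_mul_pow_lt_pow_add_mul_pow (k := 2 * n) (norm_nonneg α) hlt (Nat.cast_nonneg n)
    linarith
  by_contra! hgt
  have hamC : (am : ℂ) ^ (2 * n + 2) + (n : ℂ) * (am : ℂ) ^ (2 * n + 1) = 1 := by
    exact_mod_cast congrArg Complex.ofReal hamr
  have hβ := inv_pow_eq_of_pow_add_mul_pow_eq_one hα
  have hβm := inv_pow_eq_of_pow_add_mul_pow_eq_one hamC
  have hn' : (2 : ℝ) ≤ n := by exact_mod_cast hn
  have ham_lt : am < -n := ham.2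
  have hβm1 : ‖(am : ℂ)⁻¹‖ < 1 := by
    rw [norm_inv, Complex.norm_real, Real.norm_eq_abs, abs_of_neg (by linarith)]
    exact inv_lt_one_of_one_lt₀ (by linarith)
  have hβ1 : ‖α⁻¹‖ < 1 := by rw [norm_inv]; exact inv_lt_one_of_one_lt₀ hgt
  apply hne
  refine inv_injective (eq_of_pow_sub_mul_eq (k := 2 * n + 2) (a := n)
    (norm_le_of_pow_eq_mul_add_one hn hβ hβ1) (norm_le_of_pow_eq_mul_add_one hn hβm hβm1)
    ?_ (by rw [hβ, hβm]; ring))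
  simpa using two_mul_add_two_mul_two_thirds_pow_lt hn

/-- Let `n ≥ 2`, let `a₊ ∈ (0,1)` and `a₋ ∈ (−n−1, −n)` be the real roots of
`t^(2n+2) + n·t^(2n+1) = 1`. Then every complex root `α ≠ a₋` satisfies `a₊ ≤ |α| ≤ 1`. -/
theorem stmt_4 (n : ℕ) (hn : 2 ≤ n)
    (ap : ℝ) (hap : ap ∈ Set.Ioo (0 : ℝ) 1)
    (hapr : ap ^ (2 * n + 2) + (n : ℝ) * ap ^ (2 * n + 1) = 1)
    (am : ℝ) (ham : am ∈ Set.Ioo (-(n : ℝ) - 1) (-(n : ℝ)))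
    (hamr : am ^ (2 * n + 2) + (n : ℝ) * am ^ (2 * n + 1) = 1) :
    ∀ α : ℂ, α ^ (2 * n + 2) + (n : ℂ) * α ^ (2 * n + 1) = 1 → α ≠ (am : ℂ) →
      ap ≤ ‖α‖ ∧ ‖α‖ ≤ 1 :=
  stmt_4_general n hn ap hapr am ham hamr
end

section
/- Let n ≥ 2 be an integer, and let a_+ denote the unique real root of t^{2n+2} + n·t^{2n+1} = 1 lying in (0,1) and a_- the unique real root lying in (−n−1, −n) (these exist for n ≥ 2). Set g̃(t) = t^n + 2·t^{−(n+1)}. Then for every complex t with a_+ ≤ |t| ≤ 1 one has |g̃(t)| ≤ g̃(a_+), and moreover g̃(1) < g̃(a_+); in other words, the maximum of |g̃| over the closed annulus {t : a_+ ≤ |t| ≤ 1} equals g̃(a_+) = a_+^n + 2·a_+^{−(n+1)} and is strictly larger than g̃(1) = 3. -/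
/-!
Since `‖tⁿ + 2 t^(-(n+1))‖ ≤ |t|ⁿ + 2 |t|^(-(n+1))`, with equality for `t > 0`, it suffices
that `r ↦ rⁿ + 2 r^(-(n+1))` is strictly decreasing on `(0, 1]`. After the substitution
`x = 1/r` this is the increase of `x ↦ x^(-n) + 2 x^(n+1)` on `[1, ∞)`: for `1 ≤ v < u` the
loss `v^(-n) - u^(-n) = (uⁿ - vⁿ)/(uⁿvⁿ)` is at most `uⁿ - vⁿ`, which is less than the gain
`u^(n+1) - v^(n+1)`.
-/

lemma inv_sub_inv_le_sub {u v : ℝ} (hv : 1 ≤ v) (hvu : v ≤ u) : v⁻¹ - u⁻¹ ≤ u - v := by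
  rw [inv_sub_inv (by positivity) (by linarith)]
  exact div_le_self (sub_nonneg.2 hvu) (one_le_mul_of_one_le_of_one_le hv (hv.trans hvu))

lemma pow_sub_pow_lt_pow_succ_sub_pow_succ {u v : ℝ} (hv : 1 ≤ v) (hvu : v < u) (n : ℕ) :
    u ^ n - v ^ n < u ^ (n + 1) - v ^ (n + 1) := by
  have hvn : 0 < v ^ n := by positivity
  have hvun : v ^ n ≤ u ^ n := pow_le_pow_left₀ (by linarith) hvu.le n
  calc u ^ n - v ^ n < u ^ n - v ^ n + (u - v) * v ^ n := by nlinarith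
    _ ≤ u ^ n - v ^ n + ((u - 1) * u ^ n - (v - 1) * v ^ n) := by nlinarith
    _ = u ^ (n + 1) - v ^ (n + 1) := by ring

lemma strictMonoOn_inv_pow_add_mul_pow_succ (n : ℕ) {c : ℝ} (hc : 1 ≤ c) :
    StrictMonoOn (fun x : ℝ => (x ^ n)⁻¹ + c * x ^ (n + 1)) (Set.Ici 1) := by
  intro v (hv : 1 ≤ v) u _ hvu
  have hvun : v ^ (n + 1) ≤ u ^ (n + 1) := pow_le_pow_left₀ (by linarith) hvu.le (n + 1)
  have key : (v ^ n)⁻¹ - (u ^ n)⁻¹ < c * (u ^ (n + 1) - v ^ (n + 1)) := calc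
    _ ≤ u ^ n - v ^ n :=
      inv_sub_inv_le_sub (one_le_pow₀ hv) (pow_le_pow_left₀ (by linarith) hvu.le n)
    _ < u ^ (n + 1) - v ^ (n + 1) := pow_sub_pow_lt_pow_succ_sub_pow_succ hv hvu n
    _ ≤ c * (u ^ (n + 1) - v ^ (n + 1)) := le_mul_of_one_le_left (sub_nonneg.2 hvun) hc
  show _ < _
  linarith

lemma strictAntiOn_pow_add_mul_zpow_neg_succ (n : ℕ) {c : ℝ} (hc : 1 ≤ c) :
    StrictAntiOn (fun r : ℝ => r ^ n + c * r ^ (-((n : ℤ) + 1))) (Set.Ioc 0 1) := by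
  intro s ⟨hs, _⟩ r ⟨_, hr⟩ hsr
  have key := strictMonoOn_inv_pow_add_mul_pow_succ n hc
    (show r⁻¹ ∈ Set.Ici 1 from one_le_inv₀ (hs.trans hsr) |>.2 hr)
    (show s⁻¹ ∈ Set.Ici 1 from one_le_inv₀ hs |>.2 (hsr.le.trans hr))
    (inv_lt_inv₀ (hs.trans hsr) hs |>.2 hsr)
  have hz : ∀ x : ℝ, x ^ (-((n : ℤ) + 1)) = x⁻¹ ^ (n + 1) := fun x => by
    rw [← zpow_natCast, inv_zpow', Nat.cast_succ]
  simpa only [hz, inv_pow, inv_inv] using key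

lemma norm_pow_add_mul_zpow_le {K : Type*} [NormedDivisionRing K] (t c : K) (n : ℕ) (m : ℤ) :
    ‖t ^ n + c * t ^ m‖ ≤ ‖t‖ ^ n + ‖c‖ * ‖t‖ ^ m := by
  simpa only [norm_pow, norm_mul, norm_zpow] using norm_add_le (t ^ n) (c * t ^ m)

theorem stmt_5_general (n : ℕ)
    (ap : ℝ) (hap : ap ∈ Set.Ioo (0 : ℝ) 1) :
    (∀ t : ℂ, ap ≤ ‖t‖ → ‖t‖ ≤ 1 →
      ‖t ^ n + 2 * t ^ (-((n : ℤ) + 1))‖ ≤ ap ^ n + 2 * ap ^ (-((n : ℤ) + 1))) ∧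
    IsGreatest ((fun t : ℂ => ‖t ^ n + 2 * t ^ (-((n : ℤ) + 1))‖) ''
        {t : ℂ | ap ≤ ‖t‖ ∧ ‖t‖ ≤ 1})
      (ap ^ n + 2 * ap ^ (-((n : ℤ) + 1))) ∧
    (1 : ℝ) ^ n + 2 * (1 : ℝ) ^ (-((n : ℤ) + 1)) < ap ^ n + 2 * ap ^ (-((n : ℤ) + 1)) ∧
    (1 : ℝ) ^ n + 2 * (1 : ℝ) ^ (-((n : ℤ) + 1)) = 3 := by
  obtain ⟨hap0, hap1⟩ := hap
  have hdecr := strictAntiOn_pow_add_mul_zpow_neg_succ n one_le_two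
  have hbound : ∀ t : ℂ, ap ≤ ‖t‖ → ‖t‖ ≤ 1 →
      ‖t ^ n + 2 * t ^ (-((n : ℤ) + 1))‖ ≤ ap ^ n + 2 * ap ^ (-((n : ℤ) + 1)) := fun t h1 h2 =>
    (norm_pow_add_mul_zpow_le t 2 n _).trans <| by
      simpa only [Complex.norm_two] using
        hdecr.antitoneOn ⟨hap0, hap1.le⟩ ⟨hap0.trans_le h1, h2⟩ h1
  have hnorm_ap : ‖(ap : ℂ)‖ = ap := Complex.norm_of_nonneg hap0.le
  have hvalue : ‖(ap : ℂ) ^ n + 2 * (ap : ℂ) ^ (-((n : ℤ) + 1))‖ =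
      ap ^ n + 2 * ap ^ (-((n : ℤ) + 1)) := by
    rw [← Complex.norm_of_nonneg (by positivity : 0 ≤ ap ^ n + 2 * ap ^ (-((n : ℤ) + 1)))]
    push_cast
    rfl
  refine ⟨hbound, ⟨⟨ap, ⟨hnorm_ap.ge, hnorm_ap.le.trans hap1.le⟩, hvalue⟩, ?_⟩,
    hdecr ⟨hap0, hap1.le⟩ ⟨one_pos, le_rfl⟩ hap1, by norm_num⟩
  rintro _ ⟨t, ⟨h1, h2⟩, rfl⟩
  exact hbound t h1 h2

/-- With `n ≥ 2` and `a₊ ∈ (0,1)`, `a₋ ∈ (−n−1,−n)` the real roots of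
`t^(2n+2) + n·t^(2n+1) = 1`, and `g̃(t) = tⁿ + 2·t^(−(n+1))`: for every complex `t` with
`a₊ ≤ |t| ≤ 1` one has `|g̃(t)| ≤ g̃(a₊)`, and `g̃(1) < g̃(a₊)`; i.e. the maximum of `|g̃|`
over the closed annulus equals `g̃(a₊)` and is strictly larger than `g̃(1) = 3`. -/
theorem stmt_5 (n : ℕ) (hn : 2 ≤ n)
    (ap : ℝ) (hap : ap ∈ Set.Ioo (0 : ℝ) 1)
    (hapr : ap ^ (2 * n + 2) + (n : ℝ) * ap ^ (2 * n + 1) = 1)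
    (am : ℝ) (ham : am ∈ Set.Ioo (-(n : ℝ) - 1) (-(n : ℝ)))
    (hamr : am ^ (2 * n + 2) + (n : ℝ) * am ^ (2 * n + 1) = 1) :
    (∀ t : ℂ, ap ≤ ‖t‖ → ‖t‖ ≤ 1 →
      ‖t ^ n + 2 * t ^ (-((n : ℤ) + 1))‖ ≤ ap ^ n + 2 * ap ^ (-((n : ℤ) + 1))) ∧
    IsGreatest ((fun t : ℂ => ‖t ^ n + 2 * t ^ (-((n : ℤ) + 1))‖) ''
        {t : ℂ | ap ≤ ‖t‖ ∧ ‖t‖ ≤ 1})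
      (ap ^ n + 2 * ap ^ (-((n : ℤ) + 1))) ∧
    (1 : ℝ) ^ n + 2 * (1 : ℝ) ^ (-((n : ℤ) + 1)) < ap ^ n + 2 * ap ^ (-((n : ℤ) + 1)) ∧
    (1 : ℝ) ^ n + 2 * (1 : ℝ) ^ (-((n : ℤ) + 1)) = 3 :=
  stmt_5_general n ap hap
end

section
/- Let n ≥ 2 be an integer, and let a_+ denote the unique real root of t^{2n+2} + n·t^{2n+1} = 1 lying in (0,1) and a_- the unique real root lying in (−n−1, −n) (these exist for n ≥ 2). Set g(t) = (n+1)·t^n + t^{n+1} + t^{−(n+1)}. Then for every complex root α of t^{2n+2} + n·t^{2n+1} = 1 with α ≠ a_+ and α ≠ a_-, one has |g(α)| < g(a_+); moreover g(a_+) < 2n+3. -/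
/-!
A root `α` of `t^(2n+2) + n t^(2n+1) = 1` satisfies `α^(-(n+1)) = αⁿ (α + n)`, so
`g(α) = αⁿ (2(α + n) + 1)` and `|g(α)| ≤ rⁿ (2s + 1)` with `r = |α|`, `s = |α + n|`, `r^(2n+1) s = 1`.

If `s ≥ 1/2`, then `r ≥ a₊` because `t ↦ t^(2n+1) (t + n)` is increasing on `t ≥ 0`, with equality
only when the triangle inequality `|α + n| ≤ |α| + n` is an equality, i.e. `α = a₊`; and on this
range `rⁿ (2s + 1) = rⁿ + 2 r^(-(n+1))` is strictly decreasing in `r`.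

If `s < 1/2`, then `|α| ≥ 3/2`, which forces `|α + n| ≤ 1/4`. Near `-n` the roots are the fixed
points of `z ↦ z^(-(2n+1)) - n`, which is a contraction there, so `α = a₋`.
-/

open Finset

theorem norm_pow_sub_pow_le_s6 {R : Type*} [SeminormedCommRing R] [NormOneClass R] (x y : R)
    (m : ℕ) : ‖x ^ m - y ^ m‖ ≤ ‖x - y‖ * m * max ‖x‖ ‖y‖ ^ (m - 1) := by
  obtain _ | m := m
  · simp
  set M := max ‖x‖ ‖y‖
  have hterm : ∀ i ∈ range (m + 1), ‖x ^ i * y ^ (m + 1 - 1 - i)‖ ≤ M ^ m := fun i hi ↦ by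
    have hi : i + (m + 1 - 1 - i) = m := by simp only [mem_range] at hi; omega
    calc ‖x ^ i * y ^ (m + 1 - 1 - i)‖ ≤ ‖x‖ ^ i * ‖y‖ ^ (m + 1 - 1 - i) :=
          (norm_mul_le _ _).trans (by gcongr <;> exact norm_pow_le _ _)
      _ ≤ M ^ i * M ^ (m + 1 - 1 - i) := by gcongr; exacts [le_max_left _ _, le_max_right _ _]
      _ = M ^ m := by rw [← pow_add, hi]
  calc ‖x ^ (m + 1) - y ^ (m + 1)‖
      = ‖(∑ i ∈ range (m + 1), x ^ i * y ^ (m + 1 - 1 - i)) * (x - y)‖ := by rw [geom_sum₂_mul]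
    _ ≤ (∑ i ∈ range (m + 1), M ^ m) * ‖x - y‖ :=
        (norm_mul_le _ _).trans (by gcongr; exact (norm_sum_le _ _).trans (sum_le_sum hterm))
    _ = ‖x - y‖ * ↑(m + 1) * M ^ (m + 1 - 1) := by
        simp only [sum_const, card_range, nsmul_eq_mul, add_tsub_cancel_right]; ring

theorem abs_norm_sub_natCast_le (z : ℂ) (n : ℕ) : |‖z‖ - n| ≤ ‖z + n‖ := by
  simpa using abs_norm_sub_norm_le z (-(n : ℂ))

theorem pow_mul_two_mul_add_one_lt {x s : ℝ} (n : ℕ) (hx : 1 < x) (hs : 1 ≤ 2 * s) :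
    x ^ n * (2 * s + 1) < 2 * x ^ (2 * n + 1) * s + 1 := by
  have hy : 1 ≤ x ^ n := one_le_pow₀ hx.le
  rw [show x ^ (2 * n + 1) = x * (x ^ n) ^ 2 by ring]
  set y := x ^ n
  have hxy : 0 ≤ y * (x * y - 1) := mul_nonneg (by linarith) (by nlinarith)
  nlinarith [mul_le_mul_of_nonneg_right hs hxy, sq_nonneg (y - 1)]

theorem pow_mul_two_mul_add_one_lt_of_lt {a r s c : ℝ} (n : ℕ) (ha : 0 < a) (har : a < r)
    (hs : 1 ≤ 2 * s) (h : r ^ (2 * n + 1) * s = a ^ (2 * n + 1) * c) :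
    r ^ n * (2 * s + 1) < a ^ n * (2 * c + 1) := by
  obtain ⟨x, hx, rfl⟩ : ∃ x, 1 < x ∧ r = a * x := ⟨r / a, (one_lt_div ha).2 har, by field_simp⟩
  have hc : x ^ (2 * n + 1) * s = c := by
    refine mul_left_cancel₀ (pow_ne_zero (2 * n + 1) ha.ne') ?_
    linear_combination h
  rw [mul_pow, mul_assoc, ← hc]
  gcongr
  linarith [pow_mul_two_mul_add_one_lt n hx hs]

theorem add_quarter_pow_lt_sub_quarter_sq_pow {n : ℕ} (hn : 2 ≤ n) :
    (2 * n + 1) * ((n : ℝ) + 1 / 4) ^ (2 * n) < (((n : ℝ) - 1 / 4) ^ 2) ^ (2 * n + 1) := by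
  have hn' : (2 : ℝ) ≤ n := by exact_mod_cast hn
  have hbase : 5 / 4 * ((n : ℝ) + 1 / 4) ≤ ((n : ℝ) - 1 / 4) ^ 2 := by nlinarith
  have hfive : (3 : ℝ) ≤ (5 / 4) ^ (2 * n + 1) :=
    calc (3 : ℝ) ≤ (5 / 4) ^ 5 := by norm_num
      _ ≤ (5 / 4) ^ (2 * n + 1) := pow_le_pow_right₀ (by norm_num) (by omega)
  have hpos : (0 : ℝ) < ((n : ℝ) + 1 / 4) ^ (2 * n) := by positivity
  calc (2 * n + 1) * ((n : ℝ) + 1 / 4) ^ (2 * n) < 3 * ((n : ℝ) + 1 / 4) ^ (2 * n + 1) := by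
        rw [pow_succ]; nlinarith
    _ ≤ (5 / 4) ^ (2 * n + 1) * ((n : ℝ) + 1 / 4) ^ (2 * n + 1) := by gcongr
    _ = (5 / 4 * ((n : ℝ) + 1 / 4)) ^ (2 * n + 1) := by rw [mul_pow]
    _ ≤ (((n : ℝ) - 1 / 4) ^ 2) ^ (2 * n + 1) := by gcongr

section Roots

variable {n : ℕ}

theorem zpow_neg_succ_of_root {K : Type*} [Field K] {z : K} (hz : z ^ (2 * n + 1) * (z + n) = 1) :
    z ^ (-((n : ℤ) + 1)) = z ^ n * (z + n) := by
  rw [show -((n : ℤ) + 1) = -((n + 1 : ℕ) : ℤ) by push_cast; ring, zpow_neg, zpow_natCast]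
  exact inv_eq_of_mul_eq_one_right (by linear_combination hz)

theorem norm_pow_mul_norm_add_of_root {z : ℂ} (hz : z ^ (2 * n + 1) * (z + n) = 1) :
    ‖z‖ ^ (2 * n + 1) * ‖z + n‖ = 1 := by
  simpa using congrArg norm hz

theorem le_norm_of_root {a : ℝ} (har : a ^ (2 * n + 1) * (a + n) = 1) {z : ℂ}
    (hz : z ^ (2 * n + 1) * (z + n) = 1) : a ≤ ‖z‖ := by
  by_contra! hlt
  have hs : ‖z + n‖ ≤ ‖z‖ + n := by simpa using norm_add_le z n
  have : ‖z‖ ^ (2 * n + 1) * (‖z‖ + n) < a ^ (2 * n + 1) * (a + n) := by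
    gcongr
  nlinarith [norm_pow_mul_norm_add_of_root hz, pow_nonneg (norm_nonneg z) (2 * n + 1)]

theorem eq_of_root_of_norm_eq {a : ℝ} (hn : n ≠ 0) (ha : 0 < a)
    (har : a ^ (2 * n + 1) * (a + n) = 1) {z : ℂ} (hz : z ^ (2 * n + 1) * (z + n) = 1)
    (hza : ‖z‖ = a) : z = a := by
  have hs : ‖z + n‖ = ‖z‖ + ‖(n : ℂ)‖ := by
    refine mul_left_cancel₀ (pow_ne_zero (2 * n + 1) ha.ne') ?_
    rw [Complex.norm_natCast, hza, har, ← hza, norm_pow_mul_norm_add_of_root hz]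
  rw [norm_add_eq_iff_real, Complex.norm_natCast, hza] at hs
  have hn' : (n : ℂ) ≠ 0 := by exact_mod_cast hn
  refine mul_left_cancel₀ hn' ?_
  simpa [mul_comm] using hs

theorem norm_pow_mul_lt_of_root {a : ℝ} (hn : n ≠ 0) (ha : 0 < a)
    (har : a ^ (2 * n + 1) * (a + n) = 1) {z : ℂ} (hz : z ^ (2 * n + 1) * (z + n) = 1)
    (hza : z ≠ a) (hs : 1 ≤ 2 * ‖z + n‖) :
    ‖z‖ ^ n * (2 * ‖z + n‖ + 1) < a ^ n * (2 * (a + n) + 1) := by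
  have hlt : a < ‖z‖ := (le_norm_of_root har hz).lt_of_ne
    fun h ↦ hza (eq_of_root_of_norm_eq hn ha har hz h.symm)
  exact pow_mul_two_mul_add_one_lt_of_lt n ha hlt hs
    (by rw [norm_pow_mul_norm_add_of_root hz, har])

theorem norm_add_natCast_le_of_root (hn : 2 ≤ n) {z : ℂ} (hz : z ^ (2 * n + 1) * (z + n) = 1)
    (hz' : 3 / 2 ≤ ‖z‖) : ‖z + n‖ ≤ 1 / 4 := by
  have : (4 : ℝ) ≤ ‖z‖ ^ (2 * n + 1) :=
    calc (4 : ℝ) ≤ (3 / 2) ^ 5 := by norm_num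
      _ ≤ (3 / 2) ^ (2 * n + 1) := pow_le_pow_right₀ (by norm_num) (by omega)
      _ ≤ ‖z‖ ^ (2 * n + 1) := by gcongr
  nlinarith [norm_pow_mul_norm_add_of_root hz, norm_nonneg (z + n)]

theorem eq_of_root_of_three_halves_le_norm (hn : 2 ≤ n) {z w : ℂ}
    (hz : z ^ (2 * n + 1) * (z + n) = 1) (hw : w ^ (2 * n + 1) * (w + n) = 1)
    (hz' : 3 / 2 ≤ ‖z‖) (hw' : 3 / 2 ≤ ‖w‖) : z = w := by
  have hz'' := abs_le.1 ((abs_norm_sub_natCast_le z n).trans (norm_add_natCast_le_of_root hn hz hz'))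
  have hw'' := abs_le.1 ((abs_norm_sub_natCast_le w n).trans (norm_add_natCast_le_of_root hn hw hw'))
  have hn' : (2 : ℝ) ≤ n := by exact_mod_cast hn
  by_contra hne
  have hd : 0 < ‖w - z‖ := norm_pos_iff.2 (sub_ne_zero.2 (Ne.symm hne))
  have hident : (w - z) * (z * w) ^ (2 * n + 1) = z ^ (2 * n + 1) - w ^ (2 * n + 1) := by
    linear_combination z ^ (2 * n + 1) * hw - w ^ (2 * n + 1) * hz
  have hupper : (‖z‖ * ‖w‖) ^ (2 * n + 1) ≤ (2 * n + 1) * ((n : ℝ) + 1 / 4) ^ (2 * n) := by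
    refine le_of_mul_le_mul_left ?_ hd
    calc ‖w - z‖ * (‖z‖ * ‖w‖) ^ (2 * n + 1) = ‖z ^ (2 * n + 1) - w ^ (2 * n + 1)‖ := by
          rw [← hident, norm_mul, norm_pow, norm_mul]
      _ ≤ ‖z - w‖ * ↑(2 * n + 1) * max ‖z‖ ‖w‖ ^ (2 * n + 1 - 1) := norm_pow_sub_pow_le_s6 _ _ _
      _ ≤ ‖w - z‖ * ((2 * n + 1) * ((n : ℝ) + 1 / 4) ^ (2 * n)) := by
          rw [norm_sub_rev, mul_assoc, Nat.add_sub_cancel]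
          push_cast
          gcongr
          exact max_le (by linarith) (by linarith)
  have hlower : (((n : ℝ) - 1 / 4) ^ 2) ^ (2 * n + 1) ≤ (‖z‖ * ‖w‖) ^ (2 * n + 1) := by
    have : ((n : ℝ) - 1 / 4) ^ 2 ≤ ‖z‖ * ‖w‖ := by rw [sq]; gcongr <;> linarith
    gcongr
  linarith [add_quarter_pow_lt_sub_quarter_sq_pow hn]

end Roots

/-- With `n ≥ 2`, `a₊ ∈ (0,1)` and `a₋ ∈ (−n−1,−n)` the real roots of
`t^(2n+2) + n·t^(2n+1) = 1`, and `g(t) = (n+1)tⁿ + t^(n+1) + t^(−(n+1))`: every complex root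
`α ∉ {a₊, a₋}` satisfies `|g(α)| < g(a₊)`; moreover `g(a₊) < 2n+3`. -/
theorem stmt_6 (n : ℕ) (hn : 2 ≤ n)
    (ap : ℝ) (hap : ap ∈ Set.Ioo (0 : ℝ) 1)
    (hapr : ap ^ (2 * n + 2) + (n : ℝ) * ap ^ (2 * n + 1) = 1)
    (am : ℝ) (ham : am ∈ Set.Ioo (-(n : ℝ) - 1) (-(n : ℝ)))
    (hamr : am ^ (2 * n + 2) + (n : ℝ) * am ^ (2 * n + 1) = 1) :
    (∀ α : ℂ, α ^ (2 * n + 2) + (n : ℂ) * α ^ (2 * n + 1) = 1 →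
      α ≠ (ap : ℂ) → α ≠ (am : ℂ) →
      ‖((n : ℂ) + 1) * α ^ n + α ^ (n + 1) + α ^ (-((n : ℤ) + 1))‖ <
        ((n : ℝ) + 1) * ap ^ n + ap ^ (n + 1) + ap ^ (-((n : ℤ) + 1))) ∧
    ((n : ℝ) + 1) * ap ^ n + ap ^ (n + 1) + ap ^ (-((n : ℤ) + 1)) < 2 * n + 3 := by
  have hn' : (2 : ℝ) ≤ n := by exact_mod_cast hn
  have hap' : ap ^ (2 * n + 1) * (ap + n) = 1 := by linear_combination hapr
  have ham' : (am : ℂ) ^ (2 * n + 1) * (am + n) = 1 := by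
    exact_mod_cast (by linear_combination hamr : am ^ (2 * n + 1) * (am + n) = 1)
  have hgap : ((n : ℝ) + 1) * ap ^ n + ap ^ (n + 1) + ap ^ (-((n : ℤ) + 1)) =
      ap ^ n * (2 * (ap + n) + 1) := by
    rw [zpow_neg_succ_of_root hap']; ring
  rw [hgap]
  refine ⟨fun α hα hαp hαm ↦ ?_, ?_⟩
  · replace hα : α ^ (2 * n + 1) * (α + n) = 1 := by linear_combination hα
    calc ‖((n : ℂ) + 1) * α ^ n + α ^ (n + 1) + α ^ (-((n : ℤ) + 1))‖
        = ‖α‖ ^ n * ‖2 * (α + n) + 1‖ := by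
          rw [zpow_neg_succ_of_root hα, ← norm_pow, ← norm_mul]; ring_nf
      _ ≤ ‖α‖ ^ n * (2 * ‖α + n‖ + 1) := by
          gcongr
          exact (norm_add_le _ _).trans (by simp)
      _ < ap ^ n * (2 * (ap + n) + 1) := by
          rcases le_or_gt 1 (2 * ‖α + n‖) with hs | hs
          · exact norm_pow_mul_lt_of_root (by omega) hap.1 hap' hα hαp hs
          · refine absurd (eq_of_root_of_three_halves_le_norm hn hα ham' ?_ ?_) hαm
            · linarith [(abs_le.1 (abs_norm_sub_natCast_le α n)).1]
            · rw [Complex.norm_real, Real.norm_eq_abs, abs_of_neg (by linarith [ham.2])]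
              linarith [ham.2]
  · have : ap ^ n ≤ 1 := pow_le_one₀ hap.1.le hap.2.le
    nlinarith [hap.1, hap.2]
end

section
/- Let n ≥ 2 be an integer, and let a_- denote the unique real root of t^{2n+2} + n·t^{2n+1} = 1 lying in (−n−1, −n). Set g(t) = (n+1)·t^n + t^{n+1} + t^{−(n+1)}. Then n^n − 1 < (−1)^n · g(a_-) < n^n. -/
lemma aux_pow (x y : ℝ) (hy : 0 ≤ y) (hxy : y ≤ x) :
    ∀ k : ℕ, x ^ (k + 1) ≤ y ^ (k + 1) + ((k : ℝ) + 1) * (x - y) * x ^ k := by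
  intro k
  induction k with
  | zero => norm_num
  | succ k ih =>
      have hx0 : 0 ≤ x := hy.trans hxy
      have hyk : y ^ (k + 1) ≤ x ^ (k + 1) := pow_le_pow_left₀ hy hxy _
      have h2 : (x - y) * y ^ (k + 1) ≤ (x - y) * x ^ (k + 1) :=
        mul_le_mul_of_nonneg_left hyk (by linarith)
      push_cast
      calc x ^ (k + 1 + 1) = x * x ^ (k + 1) := by ring
        _ ≤ x * (y ^ (k + 1) + ((k : ℝ) + 1) * (x - y) * x ^ k) :=
            mul_le_mul_of_nonneg_left ih hx0
        _ = y ^ (k + 1 + 1) + (x - y) * y ^ (k + 1) + ((k : ℝ) + 1) * (x - y) * x ^ (k + 1) := by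
            ring
        _ ≤ y ^ (k + 1 + 1) + (x - y) * x ^ (k + 1) + ((k : ℝ) + 1) * (x - y) * x ^ (k + 1) := by
            linarith
        _ = y ^ (k + 1 + 1) + ((k : ℝ) + 1 + 1) * (x - y) * x ^ (k + 1) := by ring

/-- Let `n ≥ 2` and let `a₋ ∈ (−n−1, −n)` be the real root of
`t^(2n+2) + n·t^(2n+1) = 1` in that interval. With `g(t) = (n+1)tⁿ + t^(n+1) + t^(−(n+1))`,
one has `nⁿ − 1 < (−1)ⁿ·g(a₋) < nⁿ`. -/
theorem stmt_7 (n : ℕ) (hn : 2 ≤ n)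
    (am : ℝ) (ham : am ∈ Set.Ioo (-(n : ℝ) - 1) (-(n : ℝ)))
    (hamr : am ^ (2 * n + 2) + (n : ℝ) * am ^ (2 * n + 1) = 1) :
    (n : ℝ) ^ n - 1 <
      (-1 : ℝ) ^ n * (((n : ℝ) + 1) * am ^ n + am ^ (n + 1) + am ^ (-((n : ℤ) + 1))) ∧
    (-1 : ℝ) ^ n * (((n : ℝ) + 1) * am ^ n + am ^ (n + 1) + am ^ (-((n : ℤ) + 1))) <
      (n : ℝ) ^ n := by
  obtain ⟨h1, h2⟩ := ham
  -- rewrite the zpow as an inverse of a natural power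
  have hz : am ^ (-((n : ℤ) + 1)) = (am ^ (n + 1))⁻¹ := by
    rw [show -((n : ℤ) + 1) = -(((n + 1 : ℕ) : ℤ)) by push_cast; ring, zpow_neg, zpow_natCast]
  have hmul : am ^ (n + 1) * (am ^ n * (am + (n : ℝ))) = 1 := by
    linear_combination hamr
  have hinv : (am ^ (n + 1))⁻¹ = am ^ n * (am + (n : ℝ)) := inv_eq_of_mul_eq_one_right hmul
  rw [hz, hinv]
  set x : ℝ := -am with hxdef
  have hn2 : (2 : ℝ) ≤ (n : ℝ) := by exact_mod_cast hn
  have hxn : (n : ℝ) < x := by rw [hxdef]; linarith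
  have hxn1 : x < (n : ℝ) + 1 := by rw [hxdef]; linarith
  have hx0 : (0 : ℝ) < x := by linarith
  have hε : (0 : ℝ) < x - (n : ℝ) := by linarith
  have hkey : (x - (n : ℝ)) * x ^ (2 * n + 1) = 1 := by
    have ho : Odd (2 * n + 1) := ⟨n, by ring⟩
    rw [hxdef, ho.neg_pow]
    linear_combination hamr
  have hxpow : x ^ n = (-1 : ℝ) ^ n * am ^ n := by rw [hxdef, neg_pow]
  have hE : (-1 : ℝ) ^ n * (((n : ℝ) + 1) * am ^ n + am ^ (n + 1) + am ^ n * (am + (n : ℝ)))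
      = x ^ n * (2 * (n : ℝ) + 1 - 2 * x) := by
    rw [hxpow, hxdef]
    ring
  rw [hE]
  have hxnn : (0 : ℝ) < x ^ n := pow_pos hx0 n
  have hxn1p : (0 : ℝ) < x ^ (n + 1) := pow_pos hx0 (n + 1)
  -- 2 * (x - n) * x^n < 1
  have hkey' : (x - (n : ℝ)) * (x ^ n * x ^ (n + 1)) = 1 := by
    rw [show x ^ n * x ^ (n + 1) = x ^ (2 * n + 1) by ring]
    exact hkey
  have hxx : (2 : ℝ) < x ^ (n + 1) := by
    have : x ≤ x ^ (n + 1) := le_self_pow₀ (by linarith) (by omega)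
    linarith
  have h2small : 2 * ((x - (n : ℝ)) * x ^ n) < 1 := by
    have h := mul_lt_mul_of_pos_left hxx (mul_pos hε hxnn)
    nlinarith [h, hkey']
  have hnn_le : (n : ℝ) ^ n ≤ x ^ n := pow_le_pow_left₀ (by linarith) (le_of_lt hxn) n
  constructor
  · nlinarith [hnn_le, h2small]
  · -- upper bound, via Bernoulli-type lemma
    obtain ⟨m, rfl⟩ : ∃ m, n = m + 2 := ⟨n - 2, by omega⟩
    have hN : ((m + 2 : ℕ) : ℝ) = (m : ℝ) + 2 := by push_cast; ring
    have haux := aux_pow x ((m : ℝ) + 2) (by positivity) (by rw [hN] at hxn; linarith) (m + 1)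
    have hxm1 : (0 : ℝ) < x ^ (m + 1) := pow_pos hx0 (m + 1)
    have hprod : (x - ((m : ℝ) + 2)) * x ^ (m + 1) * (((m : ℝ) + 2) - 2 * x) < 0 := by
      apply mul_neg_of_pos_of_neg
      · exact mul_pos (by rw [hN] at hε; exact hε) hxm1
      · rw [hN] at hxn; linarith
    rw [hN]
    push_cast at haux
    have haux2 : x * x ^ (m + 1) ≤ ((m : ℝ) + 2) ^ (m + 2) + ((m : ℝ) + 2) * (x - ((m : ℝ) + 2)) * x ^ (m + 1) := by
      have e1 : x ^ (m + 1 + 1) = x * x ^ (m + 1) := by ring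
      have e2 : ((m : ℝ) + 2) ^ (m + 1 + 1) = ((m : ℝ) + 2) ^ (m + 2) := by norm_num
      rw [e1, e2] at haux
      linarith [haux]
    have hsp2 : x ^ (m + 2) = x * x ^ (m + 1) := by ring
    rw [hsp2]
    nlinarith [haux2, hprod]
end

section
/- Let n ≥ 2 be an integer, and let a_+ denote the unique real root of t^{2n+2} + n·t^{2n+1} = 1 lying in (0,1) and a_- the unique real root lying in (−n−1, −n). Set g(t) = (n+1)·t^n + t^{n+1} + t^{−(n+1)}. If n ≥ 3 then |g(a_-)| > g(a_+), while if n = 2 then g(a_+) > |g(a_-)|. -/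
private lemma key_inv (n : ℕ) (t : ℝ) (ht : t ≠ 0)
    (hr : t ^ (2*n+2) + (n:ℝ) * t ^ (2*n+1) = 1) :
    t ^ (-((n:ℤ)+1)) = t ^ n * (t + n) := by
  clear ht
  have h1 : t ^ (n+1) * (t ^ n * (t + n)) = 1 := by
    have h : t ^ (n+1) * (t ^ n * (t + n)) = t ^ (2*n+2) + (n:ℝ) * t ^ (2*n+1) := by ring
    rw [h, hr]
  rw [show -((n:ℤ)+1) = -((n+1:ℕ):ℤ) by push_cast; ring, zpow_neg, zpow_natCast,
    inv_eq_of_mul_eq_one_right h1]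


/-- Let `n ≥ 2`, `a₊ ∈ (0,1)` and `a₋ ∈ (−n−1,−n)` the real roots of
`t^(2n+2) + n·t^(2n+1) = 1`, and `g(t) = (n+1)tⁿ + t^(n+1) + t^(−(n+1))`.
If `n ≥ 3` then `|g(a₋)| > g(a₊)`, while if `n = 2` then `g(a₊) > |g(a₋)|`. -/
theorem stmt_8 (n : ℕ) (hn : 2 ≤ n)
    (ap : ℝ) (hap : ap ∈ Set.Ioo (0 : ℝ) 1)
    (hapr : ap ^ (2 * n + 2) + (n : ℝ) * ap ^ (2 * n + 1) = 1)
    (am : ℝ) (ham : am ∈ Set.Ioo (-(n : ℝ) - 1) (-(n : ℝ)))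
    (hamr : am ^ (2 * n + 2) + (n : ℝ) * am ^ (2 * n + 1) = 1) :
    (3 ≤ n →
      |((n : ℝ) + 1) * am ^ n + am ^ (n + 1) + am ^ (-((n : ℤ) + 1))| >
        ((n : ℝ) + 1) * ap ^ n + ap ^ (n + 1) + ap ^ (-((n : ℤ) + 1))) ∧
    (n = 2 →
      ((n : ℝ) + 1) * ap ^ n + ap ^ (n + 1) + ap ^ (-((n : ℤ) + 1)) >
        |((n : ℝ) + 1) * am ^ n + am ^ (n + 1) + am ^ (-((n : ℤ) + 1))|) := by
  obtain ⟨hap0, hap1⟩ := hap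
  obtain ⟨ham1, ham2⟩ := ham
  have hn2 : (2:ℝ) ≤ n := by exact_mod_cast hn
  have hn1 : (1:ℝ) ≤ n := by linarith
  have hamneg : am < 0 := by linarith
  have hkp := key_inv n ap (ne_of_gt hap0) hapr
  have hkm := key_inv n am (ne_of_lt hamneg) hamr
  have hgp : ((n:ℝ)+1)*ap^n + ap^(n+1) + ap^(-((n:ℤ)+1)) = ap^n * (2*ap + 2*n + 1) := by
    rw [hkp]; ring
  have hgm : ((n:ℝ)+1)*am^n + am^(n+1) + am^(-((n:ℤ)+1)) = am^n * (2*am + 2*n + 1) := by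
    rw [hkm]; ring
  set b : ℝ := -am with hb
  have hbn : (n:ℝ) < b := by rw [hb]; linarith
  have hbn1 : b < (n:ℝ) + 1 := by rw [hb]; linarith
  have hbpos : (0:ℝ) < b := by linarith
  have hb1 : (1:ℝ) ≤ b := by linarith
  have hame : am = -b := by rw [hb]; ring
  have he : (-b)^(2*n+2) = b^(2*n+2) := Even.neg_pow ⟨n+1, by ring⟩ b
  have ho : (-b)^(2*n+1) = -b^(2*n+1) := Odd.neg_pow ⟨n, by ring⟩ b
  rw [hame, he, ho] at hamr
  have hbr : b^(2*n+1)*(b-n) = 1 := by linear_combination hamr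
  clear_value b
  clear hamr he ho hkm hkp
  have hbppos : (0:ℝ) < b^(2*n+1) := by positivity
  have hbd : b - (n:ℝ) = 1/b^(2*n+1) := by
    field_simp
    linear_combination hbr
  have hbd0 : (0:ℝ) < b - n := by rw [hbd]; positivity
  -- b^(2n+1) ≥ b^5 > 2^5 = 32, so b - n < 1/32
  have hp5 : b^5 ≤ b^(2*n+1) := pow_le_pow_right₀ hb1 (by omega)
  have hp5' : (2:ℝ)^5 < b^5 := by
    apply pow_lt_pow_left₀ (by linarith) (by norm_num)
    norm_num
  have hbig32 : (32:ℝ) < b^(2*n+1) := by nlinarith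
  have hd32 : b - (n:ℝ) < 1/32 := by
    rw [hbd]
    rw [div_lt_div_iff₀ hbppos (by norm_num)]
    linarith
  have habs : |am^n*(2*am+2*(n:ℝ)+1)| = b^n * (1-2*(b-(n:ℝ))) := by
    have hc : 2*am+2*(n:ℝ)+1 = 1-2*(b-(n:ℝ)) := by rw [hame]; ring
    rw [abs_mul, abs_pow, abs_of_neg hamneg, hc, abs_of_pos (by linarith), ← hb]
  constructor
  · -- n ≥ 3 : |g(a₋)| > g(a₊)
    intro h3
    have h3r : (3:ℝ) ≤ n := by exact_mod_cast h3
    rw [hgp, hgm, habs]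
    -- b^(2n+1) ≥ b^7 > n^7 ≥ 3^7 = 2187
    have hp7 : b^7 ≤ b^(2*n+1) := pow_le_pow_right₀ hb1 (by omega)
    have hp7' : (n:ℝ)^7 < b^7 := by
      apply pow_lt_pow_left₀ hbn (by positivity)
      norm_num
    have h37 : (2187:ℝ) ≤ (n:ℝ)^7 := by
      calc (2187:ℝ) = 3^7 := by norm_num
        _ ≤ (n:ℝ)^7 := pow_le_pow_left₀ (by norm_num) h3r 7
    have hbig : (2187:ℝ) < b^(2*n+1) := by linarith
    have hd1 : b - (n:ℝ) < 1/2187 := by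
      rw [hbd, div_lt_div_iff₀ hbppos (by norm_num)]
      linarith
    -- b^n > n^n ≥ n^3
    have hbn3 : (n:ℝ)^3 < b^n := by
      calc (n:ℝ)^3 ≤ (n:ℝ)^n := pow_le_pow_right₀ hn1 h3
        _ < b^n := pow_lt_pow_left₀ hbn (by positivity) (by omega)
    -- lower bound for |g(a₋)|
    have hlow : (n:ℝ)^3 * (2185/2187) < b^n * (1-2*(b-(n:ℝ))) := by
      apply mul_lt_mul'' hbn3 (by linarith) (by positivity) (by norm_num)
    -- upper bound for g(a₊)
    have hapn : ap^n < 1 := pow_lt_one₀ hap0.le hap1 (by omega)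
    have hup : ap^n * (2*ap + 2*(n:ℝ) + 1) < 1 * (2*(n:ℝ)+3) :=
      mul_lt_mul'' hapn (by linarith) (by positivity) (by positivity)
    have hc2 : (9:ℝ) ≤ (n:ℝ)^2 := by
      calc (9:ℝ) = 3^2 := by norm_num
        _ ≤ (n:ℝ)^2 := pow_le_pow_left₀ (by norm_num) h3r 2
    have hc3 : 9*(n:ℝ) ≤ (n:ℝ)^3 := by
      calc 9*(n:ℝ) ≤ (n:ℝ)^2*(n:ℝ) := mul_le_mul_of_nonneg_right hc2 (by positivity)
        _ = (n:ℝ)^3 := by ring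
    have hfin : 2*(n:ℝ)+3 < (n:ℝ)^3 * (2185/2187) := by linarith
    calc ap^n * (2*ap + 2*(n:ℝ) + 1) < 1 * (2*(n:ℝ)+3) := hup
      _ = 2*(n:ℝ)+3 := one_mul _
      _ < (n:ℝ)^3 * (2185/2187) := hfin
      _ < b^n * (1-2*(b-(n:ℝ))) := hlow
  · -- n = 2 : g(a₊) > |g(a₋)|
    intro h2
    subst h2
    rw [hgp, hgm, habs]
    norm_num at hapr hbr hbd hbn hbn1 hd32 ⊢
    -- ap > 4/5
    have hap45 : (4:ℝ)/5 < ap := by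
      by_contra h
      push_neg at h
      have h5 : ap^5 ≤ (4/5:ℝ)^5 := pow_le_pow_left₀ hap0.le h 5
      have h6 : ap^6 ≤ (4/5:ℝ)^6 := pow_le_pow_left₀ hap0.le h 6
      norm_num at h5 h6
      linarith
    -- g(a₊) > 528/125
    have ha2 : (4/5:ℝ)^2 < ap^2 := by
      apply pow_lt_pow_left₀ hap45 (by norm_num); norm_num
    have ha3 : (4/5:ℝ)^3 < ap^3 := by
      apply pow_lt_pow_left₀ hap45 (by norm_num); norm_num
    have hgplow : (528:ℝ)/125 < ap^2 * (2*ap + 2*2 + 1) := by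
      norm_num at ha2 ha3
      nlinarith [ha2, ha3]
    -- b < 65/32
    have hb65 : b < 65/32 := by linarith
    -- |g(a₋)| < 4225/1024
    have hgmup : b^2 * (1-2*(b-2)) < 4225/1024 := by
      have h1 : b^2 < (65/32:ℝ)^2 := by
        apply pow_lt_pow_left₀ hb65 (by linarith); norm_num
      norm_num at h1
      have h2 : 1-2*(b-2) ≤ 1 := by linarith
      calc b^2 * (1-2*(b-2)) ≤ b^2 * 1 :=
            mul_le_mul_of_nonneg_left h2 (by positivity)
        _ = b^2 := mul_one _
        _ < 4225/1024 := h1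
    have hnum : (4225:ℝ)/1024 < 528/125 := by norm_num
    push_cast
    linarith [hgplow, hgmup, hnum]
end

section
/- Let n ≥ 2 be an integer, and let a_+ denote the unique real root of t^{2n+2} + n·t^{2n+1} = 1 lying in (0,1). Then for all positive real numbers x_1, …, x_n, y one has x_1 + ⋯ + x_n + y + y^n/(x_1⋯x_n) + 1/y ≥ (n+1)·a_+^n + a_+^{n+1} + a_+^{−(n+1)}, with equality if and only if x_1 = ⋯ = x_n = a_+^n and y = a_+^{n+1}. (That is, the mirror superpotential f(x_1,…,x_n,y) = x_1+⋯+x_n + y + y^n/(x_1⋯x_n) + 1/y attains its global minimum on the positive orthant exactly at the conifold point (a_+^n,…,a_+^n,a_+^{n+1}), and the conifold value is T_con = g(a_+) with g(t) = (n+1)t^n + t^{n+1} + t^{−(n+1)}.) -/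
/-!
Each term `u` of the superpotential exceeds the tangent line of `log` at its conifold value `v`:
`u ≥ v (1 + log u - log v)`, with defect `u · klFun (v / u) ≥ 0` vanishing only at `u = v`.
Summing over the terms `xᵢ, y, yⁿ/∏ xᵢ, 1/y` with conifold values `aⁿ, aⁿ⁺¹, aⁿ, a⁻⁽ⁿ⁺¹⁾`,
every logarithm enters with coefficient a multiple of `aⁿ⁺¹ + n aⁿ - a⁻⁽ⁿ⁺¹⁾`, which is zero
exactly because `a` is a root of `t²ⁿ⁺² + n t²ⁿ⁺¹ = 1`. So the superpotential minus the conifold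
value is a sum of nonnegative defects.
-/

open Real InformationTheory

section KLGap

variable {u v : ℝ}

lemma mul_klFun_div_eq (hu : u ≠ 0) (hv : v ≠ 0) :
    u * klFun (v / u) = u - v + v * (log v - log u) := by
  rw [klFun_apply, log_div hv hu]
  field_simp
  ring

lemma mul_klFun_div_nonneg (hu : 0 < u) (hv : 0 ≤ v) : 0 ≤ u * klFun (v / u) :=
  mul_nonneg hu.le (klFun_nonneg (div_nonneg hv hu.le))

lemma mul_klFun_div_eq_zero_iff (hu : 0 < u) (hv : 0 ≤ v) :
    u * klFun (v / u) = 0 ↔ u = v := by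
  rw [mul_eq_zero_iff_left hu.ne', klFun_eq_zero_iff (div_nonneg hv hu.le),
    div_eq_one_iff_eq hu.ne', eq_comm]

end KLGap

section Superpotential

variable {n : ℕ} {a : ℝ} {x : Fin n → ℝ} {y : ℝ}

noncomputable def superpotential (x : Fin n → ℝ) (y : ℝ) : ℝ :=
  (∑ i, x i) + y + y ^ n / (∏ i, x i) + 1 / y

noncomputable def conifoldGap (a : ℝ) (x : Fin n → ℝ) (y : ℝ) : ℝ :=
  (∑ i, x i * klFun (a ^ n / x i)) + y * klFun (a ^ (n + 1) / y) +
    y ^ n / (∏ i, x i) * klFun (a ^ n / (y ^ n / ∏ i, x i)) +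
    y⁻¹ * klFun ((a ^ (n + 1))⁻¹ / y⁻¹)

lemma inv_pow_succ_eq_of_root (hroot : a ^ (2 * n + 2) + (n : ℝ) * a ^ (2 * n + 1) = 1) :
    (a ^ (n + 1))⁻¹ = a ^ (n + 1) + n * a ^ n := by
  refine inv_eq_of_mul_eq_one_right ?_
  rw [← hroot]
  ring

lemma pow_div_prod_eq_pow_of_eq (ha : a ≠ 0) (hx : ∀ i, x i = a ^ n) (hy : y = a ^ (n + 1)) :
    y ^ n / ∏ i, x i = a ^ n := by
  simp only [hx, hy, Finset.prod_const, Finset.card_univ, Fintype.card_fin]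
  rw [div_eq_iff (by positivity)]
  ring

lemma superpotential_sub_eq_conifoldGap (ha : 0 < a)
    (hroot : a ^ (2 * n + 2) + (n : ℝ) * a ^ (2 * n + 1) = 1)
    (hx : ∀ i, 0 < x i) (hy : 0 < y) :
    superpotential x y - ((n + 1) * a ^ n + a ^ (n + 1) + (a ^ (n + 1))⁻¹) =
      conifoldGap a x y := by
  have hP : 0 < ∏ i, x i := Finset.prod_pos fun i _ => hx i
  have hpos : 0 < a ^ n := by positivity
  have hpos' : 0 < a ^ (n + 1) := by positivity
  rw [conifoldGap, Finset.sum_congr rfl fun i _ => mul_klFun_div_eq (hx i).ne' hpos.ne',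
    mul_klFun_div_eq hy.ne' hpos'.ne', mul_klFun_div_eq (by positivity) hpos.ne',
    mul_klFun_div_eq (by positivity) (by positivity), log_div (by positivity) hP.ne',
    log_prod fun i _ => (hx i).ne', log_inv, log_inv, log_pow, log_pow, log_pow,
    inv_pow_succ_eq_of_root hroot, superpotential]
  simp only [Finset.sum_add_distrib, Finset.sum_sub_distrib, Finset.sum_const, Finset.card_univ,
    Fintype.card_fin, nsmul_eq_mul, ← Finset.mul_sum]
  push_cast
  ring

lemma conifoldGap_nonneg (ha : 0 < a) (hx : ∀ i, 0 < x i) (hy : 0 < y) :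
    0 ≤ conifoldGap a x y := by
  have hpos : 0 < a ^ n := by positivity
  have hpos' : 0 < a ^ (n + 1) := by positivity
  have hQ : 0 < y ^ n / ∏ i, x i := div_pos (by positivity) (Finset.prod_pos fun i _ => hx i)
  exact add_nonneg (add_nonneg (add_nonneg
    (Finset.sum_nonneg fun i _ => mul_klFun_div_nonneg (hx i) hpos.le)
    (mul_klFun_div_nonneg hy hpos'.le)) (mul_klFun_div_nonneg hQ hpos.le))
    (mul_klFun_div_nonneg (inv_pos.2 hy) (inv_pos.2 hpos').le)

lemma conifoldGap_eq_zero_iff (ha : 0 < a) (hx : ∀ i, 0 < x i) (hy : 0 < y) :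
    conifoldGap a x y = 0 ↔ (∀ i, x i = a ^ n) ∧ y = a ^ (n + 1) := by
  have hpos : 0 < a ^ n := by positivity
  have hpos' : 0 < a ^ (n + 1) := by positivity
  have hQ : 0 < y ^ n / ∏ i, x i := div_pos (by positivity) (Finset.prod_pos fun i _ => hx i)
  have hxs := fun i => mul_klFun_div_nonneg (hx i) hpos.le
  have hsum := Finset.sum_nonneg fun i (_ : i ∈ Finset.univ) => hxs i
  have hys := mul_klFun_div_nonneg hy hpos'.le
  have hQs := mul_klFun_div_nonneg hQ hpos.le
  rw [conifoldGap,
    add_eq_zero_iff_of_nonneg (by positivity)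
      (mul_klFun_div_nonneg (inv_pos.2 hy) (inv_pos.2 hpos').le),
    add_eq_zero_iff_of_nonneg (by positivity) hQs, add_eq_zero_iff_of_nonneg hsum hys,
    Finset.sum_eq_zero_iff_of_nonneg fun i _ => hxs i]
  constructor
  · rintro ⟨⟨⟨hxe, hye⟩, -⟩, -⟩
    exact ⟨fun i => (mul_klFun_div_eq_zero_iff (hx i) hpos.le).1 (hxe i (Finset.mem_univ i)),
      (mul_klFun_div_eq_zero_iff hy hpos'.le).1 hye⟩
  · rintro ⟨hxe, hye⟩
    rw [pow_div_prod_eq_pow_of_eq ha.ne' hxe hye]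
    simp [hxe, hye, hpos.ne', hpos'.ne', klFun_one]

end Superpotential

theorem stmt_9_general (n : ℕ)
    (ap : ℝ) (hap : ap ∈ Set.Ioo (0 : ℝ) 1)
    (hapr : ap ^ (2 * n + 2) + (n : ℝ) * ap ^ (2 * n + 1) = 1) :
    ∀ (x : Fin n → ℝ) (y : ℝ), (∀ i, 0 < x i) → 0 < y →
      (((n : ℝ) + 1) * ap ^ n + ap ^ (n + 1) + ap ^ (-((n : ℤ) + 1)) ≤
          (∑ i, x i) + y + y ^ n / (∏ i, x i) + 1 / y) ∧
      ((∑ i, x i) + y + y ^ n / (∏ i, x i) + 1 / y =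
          ((n : ℝ) + 1) * ap ^ n + ap ^ (n + 1) + ap ^ (-((n : ℤ) + 1)) ↔
        (∀ i, x i = ap ^ n) ∧ y = ap ^ (n + 1)) := by
  intro x y hx hy
  have hgap := superpotential_sub_eq_conifoldGap hap.1 hapr hx hy
  have hnonneg := conifoldGap_nonneg hap.1 hx hy
  rw [show ap ^ (-((n : ℤ) + 1)) = (ap ^ (n + 1))⁻¹ by
    rw [zpow_neg, ← zpow_natCast]; push_cast; rfl]
  unfold superpotential at hgap
  refine ⟨by linarith, ?_⟩
  rw [← sub_eq_zero, hgap, conifoldGap_eq_zero_iff hap.1 hx hy]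

/-- Let `n ≥ 2` and let `a₊ ∈ (0,1)` be the real root of
`t^(2n+2) + n·t^(2n+1) = 1` there. Then for all positive reals `x₁,…,xₙ, y`,
`x₁+⋯+xₙ + y + yⁿ/(x₁⋯xₙ) + 1/y ≥ (n+1)a₊ⁿ + a₊^(n+1) + a₊^(−(n+1))`, with equality
iff `x₁ = ⋯ = xₙ = a₊ⁿ` and `y = a₊^(n+1)`. -/
theorem stmt_9 (n : ℕ) (hn : 2 ≤ n)
    (ap : ℝ) (hap : ap ∈ Set.Ioo (0 : ℝ) 1)
    (hapr : ap ^ (2 * n + 2) + (n : ℝ) * ap ^ (2 * n + 1) = 1) :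
    ∀ (x : Fin n → ℝ) (y : ℝ), (∀ i, 0 < x i) → 0 < y →
      (((n : ℝ) + 1) * ap ^ n + ap ^ (n + 1) + ap ^ (-((n : ℤ) + 1)) ≤
          (∑ i, x i) + y + y ^ n / (∏ i, x i) + 1 / y) ∧
      ((∑ i, x i) + y + y ^ n / (∏ i, x i) + 1 / y =
          ((n : ℝ) + 1) * ap ^ n + ap ^ (n + 1) + ap ^ (-((n : ℤ) + 1)) ↔
        (∀ i, x i = ap ^ n) ∧ y = ap ^ (n + 1)) :=
  stmt_9_general n ap hap hapr
end

section
/- Let n ≥ 1 be an integer and let t be a complex number. If both t^{2n+2} + n·t^{2n+1} and 2·t^{n+1} + (2n+1)·t^n are real numbers, then t is real. -/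
open Complex

private lemma real_of' (a b : ℝ) (ha : a ≠ 0) (t : ℂ) (h : (a:ℂ) * t = (b:ℂ)) : t.im = 0 := by
  have h2 := congrArg Complex.im h
  simp only [Complex.mul_im, Complex.ofReal_re, Complex.ofReal_im, zero_mul, add_zero] at h2
  exact (mul_eq_zero.mp h2).resolve_left ha

private lemma aux_pos (n : ℕ) (hn : 1 ≤ n) (s : ℝ) (hs : 0 < s) :
    0 < (((n:ℂ) + ((n:ℂ)+1)*(s:ℂ)^2 - (s:ℂ)*Complex.I)^n * (1 + (s:ℂ)*Complex.I)).im := by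
  set A : ℝ := (n:ℝ) + ((n:ℝ)+1)*s^2 with hA
  set W : ℂ := (n:ℂ) + ((n:ℂ)+1)*(s:ℂ)^2 - (s:ℂ)*Complex.I with hWdef
  have hWeq : W = (A:ℂ) - (s:ℂ)*Complex.I := by rw [hWdef, hA]; push_cast; ring
  have hre : W.re = A := by rw [hWeq]; simp
  have him : W.im = -s := by rw [hWeq]; simp
  have hApos : 0 < A := by rw [hA]; positivity
  have hn1 : (1:ℝ) ≤ (n:ℝ) := by exact_mod_cast hn
  have hnpos : (0:ℝ) < (n:ℝ) := by linarith
  have main : ∀ k : ℕ, k ≤ n → 0 < (W^k).re ∧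
      0 ≤ (n:ℝ)*(W^k).im + (k:ℝ)*s*(W^k).re := by
    intro k
    induction k with
    | zero => intro _; norm_num
    | succ k ih =>
      intro hk
      obtain ⟨hX, hI⟩ := ih (Nat.le_of_succ_le hk)
      have hkn : (k:ℝ) + 1 ≤ (n:ℝ) := by exact_mod_cast hk
      have hk0 : (0:ℝ) ≤ (k:ℝ) := Nat.cast_nonneg k
      set X := (W^k).re with hXd
      set Y := (W^k).im with hYd
      have hre' : (W^(k+1)).re = X*A + Y*s := by
        rw [pow_succ, Complex.mul_re, ← hXd, ← hYd, hre, him]; ring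
      have him' : (W^(k+1)).im = Y*A - s*X := by
        rw [pow_succ, Complex.mul_im, ← hXd, ← hYd, hre, him]; ring
      have e1 : (n:ℝ)*(X*A + Y*s)
          = X*((n:ℝ)*(n:ℝ) + ((n:ℝ)*((n:ℝ)+1) - (k:ℝ))*s^2) + s*((n:ℝ)*Y + (k:ℝ)*s*X) := by
        rw [hA]; ring
      have hk_le : (k:ℝ) ≤ (n:ℝ)*((n:ℝ)+1) := by nlinarith
      have c1 : 0 < (n:ℝ)*(n:ℝ) + ((n:ℝ)*((n:ℝ)+1) - (k:ℝ))*s^2 :=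
        add_pos_of_pos_of_nonneg (by positivity) (mul_nonneg (by linarith) (sq_nonneg s))
      have c2 : 0 < X*((n:ℝ)*(n:ℝ) + ((n:ℝ)*((n:ℝ)+1) - (k:ℝ))*s^2) := mul_pos hX c1
      have c3 : 0 ≤ s*((n:ℝ)*Y + (k:ℝ)*s*X) := mul_nonneg hs.le hI
      have hZn : 0 < (n:ℝ)*(X*A + Y*s) := by rw [e1]; linarith
      have hZ : 0 < X*A + Y*s := by
        by_contra hcon
        push_neg at hcon
        have : (n:ℝ)*(X*A + Y*s) ≤ 0 := mul_nonpos_iff.mpr (Or.inl ⟨hnpos.le, hcon⟩)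
        linarith
      have e2 : (n:ℝ)*((n:ℝ)*(Y*A - s*X) + ((k:ℝ)+1)*s*(X*A + Y*s))
          = ((n:ℝ)*Y + (k:ℝ)*s*X)*((n:ℝ)*A + ((k:ℝ)+1)*s^2)
            + s^3*X*((n:ℝ)*((n:ℝ)+1) - (k:ℝ)*((k:ℝ)+1)) := by
        rw [hA]; ring
      have d1 : 0 ≤ ((n:ℝ)*Y + (k:ℝ)*s*X)*((n:ℝ)*A + ((k:ℝ)+1)*s^2) :=
        mul_nonneg hI (add_nonneg (mul_nonneg hnpos.le hApos.le)
          (mul_nonneg (by linarith) (sq_nonneg s)))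
      have e3 : (n:ℝ)*((n:ℝ)+1) - (k:ℝ)*((k:ℝ)+1) = ((n:ℝ)-(k:ℝ))*((n:ℝ)+(k:ℝ)+1) := by ring
      have d2 : 0 < s^3*X*((n:ℝ)*((n:ℝ)+1) - (k:ℝ)*((k:ℝ)+1)) := by
        apply mul_pos (mul_pos (by positivity) hX)
        rw [e3]
        exact mul_pos (by linarith) (by linarith)
      have hTn : 0 < (n:ℝ)*((n:ℝ)*(Y*A - s*X) + ((k:ℝ)+1)*s*(X*A + Y*s)) := by
        rw [e2]; linarith
      have hT : 0 < (n:ℝ)*(Y*A - s*X) + ((k:ℝ)+1)*s*(X*A + Y*s) := by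
        by_contra hcon
        push_neg at hcon
        have : (n:ℝ)*((n:ℝ)*(Y*A - s*X) + ((k:ℝ)+1)*s*(X*A + Y*s)) ≤ 0 :=
          mul_nonpos_iff.mpr (Or.inl ⟨hnpos.le, hcon⟩)
        linarith
      refine ⟨by rw [hre']; exact hZ, ?_⟩
      rw [hre', him']
      push_cast
      linarith
  have final : 0 < (n:ℝ)*(W^n).im + (n:ℝ)*s*(W^n).re := by
    rcases Nat.exists_eq_add_of_le hn with ⟨k, hkeq⟩
    obtain ⟨hXk, hIk⟩ := main k (by omega)
    have hkn : (k:ℝ) + 1 ≤ (n:ℝ) := by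
      have : k + 1 ≤ n := by omega
      exact_mod_cast this
    have hk0 : (0:ℝ) ≤ (k:ℝ) := Nat.cast_nonneg k
    set X := (W^k).re with hXd
    set Y := (W^k).im with hYd
    have hre' : (W^(k+1)).re = X*A + Y*s := by
      rw [pow_succ, Complex.mul_re, ← hXd, ← hYd, hre, him]; ring
    have him' : (W^(k+1)).im = Y*A - s*X := by
      rw [pow_succ, Complex.mul_im, ← hXd, ← hYd, hre, him]; ring
    have e2 : (n:ℝ)*((n:ℝ)*(Y*A - s*X) + ((k:ℝ)+1)*s*(X*A + Y*s))
        = ((n:ℝ)*Y + (k:ℝ)*s*X)*((n:ℝ)*A + ((k:ℝ)+1)*s^2)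
          + s^3*X*((n:ℝ)*((n:ℝ)+1) - (k:ℝ)*((k:ℝ)+1)) := by
      rw [hA]; ring
    have d1 : 0 ≤ ((n:ℝ)*Y + (k:ℝ)*s*X)*((n:ℝ)*A + ((k:ℝ)+1)*s^2) :=
      mul_nonneg hIk (add_nonneg (mul_nonneg hnpos.le hApos.le)
        (mul_nonneg (by linarith) (sq_nonneg s)))
    have e3 : (n:ℝ)*((n:ℝ)+1) - (k:ℝ)*((k:ℝ)+1) = ((n:ℝ)-(k:ℝ))*((n:ℝ)+(k:ℝ)+1) := by ring
    have d2 : 0 < s^3*X*((n:ℝ)*((n:ℝ)+1) - (k:ℝ)*((k:ℝ)+1)) := by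
      apply mul_pos (mul_pos (by positivity) hXk)
      rw [e3]
      exact mul_pos (by linarith) (by linarith)
    have hTn : 0 < (n:ℝ)*((n:ℝ)*(Y*A - s*X) + ((k:ℝ)+1)*s*(X*A + Y*s)) := by
      rw [e2]; linarith
    have hT : 0 < (n:ℝ)*(Y*A - s*X) + ((k:ℝ)+1)*s*(X*A + Y*s) := by
      by_contra hcon
      push_neg at hcon
      have : (n:ℝ)*((n:ℝ)*(Y*A - s*X) + ((k:ℝ)+1)*s*(X*A + Y*s)) ≤ 0 :=
        mul_nonpos_iff.mpr (Or.inl ⟨hnpos.le, hcon⟩)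
      linarith
    have hneq : n = k + 1 := by omega
    have hcast : (n:ℝ) = (k:ℝ)+1 := by rw [hneq]; push_cast; ring
    have hWre2 : (W^n).re = X*A + Y*s := by rw [hneq]; exact hre'
    have hWim2 : (W^n).im = Y*A - s*X := by rw [hneq]; exact him'
    rw [hWre2, hWim2, hcast]
    rw [hcast] at hT
    exact hT
  have hmi : (W^n * (1 + (s:ℂ)*Complex.I)).im = (W^n).im + s*(W^n).re := by
    rw [Complex.mul_im]; simp; ring
  rw [hmi]
  by_contra hcon
  push_neg at hcon
  have : (n:ℝ)*((W^n).im + s*(W^n).re) ≤ 0 := mul_nonpos_iff.mpr (Or.inl ⟨hnpos.le, hcon⟩)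
  have heq : (n:ℝ)*((W^n).im + s*(W^n).re) = (n:ℝ)*(W^n).im + (n:ℝ)*s*(W^n).re := by ring
  linarith [final]

private lemma aux_ne (n : ℕ) (hn : 1 ≤ n) (s : ℝ) (hs : s ≠ 0) :
    (((n:ℂ) + ((n:ℂ)+1)*(s:ℂ)^2 - (s:ℂ)*Complex.I)^n * (1 + (s:ℂ)*Complex.I)).im ≠ 0 := by
  rcases hs.lt_or_gt with h | h
  · have hp := aux_pos n hn (-s) (by linarith)
    have hconj : ((n:ℂ) + ((n:ℂ)+1)*(s:ℂ)^2 - (s:ℂ)*Complex.I)^n * (1 + (s:ℂ)*Complex.I)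
        = (starRingEnd ℂ) (((n:ℂ) + ((n:ℂ)+1)*((-s:ℝ):ℂ)^2 - ((-s:ℝ):ℂ)*Complex.I)^n
            * (1 + ((-s:ℝ):ℂ)*Complex.I)) := by
      simp only [map_mul, map_pow, map_sub, map_add, map_one, Complex.conj_I,
        Complex.conj_ofReal, Complex.conj_natCast]
      push_cast
      ring
    rw [hconj, Complex.conj_im]
    exact neg_ne_zero.mpr hp.ne'
  · exact (aux_pos n hn s h).ne'

/-- Let `n ≥ 1` and `t ∈ ℂ`. If both `t^(2n+2) + n·t^(2n+1)` and
`2·t^(n+1) + (2n+1)·tⁿ` are real, then `t` is real. -/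
theorem stmt_10 (n : ℕ) (hn : 1 ≤ n) (t : ℂ)
    (h1 : (t ^ (2 * n + 2) + (n : ℂ) * t ^ (2 * n + 1)).im = 0)
    (h2 : (2 * t ^ (n + 1) + (2 * (n : ℂ) + 1) * t ^ n).im = 0) :
    t.im = 0 := by
  by_contra ht
  obtain ⟨c, hc⟩ : ∃ c : ℂ, c = (starRingEnd ℂ) t := ⟨_, rfl⟩
  have hct : c ≠ t := fun h => ht (Complex.conj_eq_iff_im.mp (by rw [← hc]; exact h))
  have ht0 : t ≠ 0 := fun h => ht (by rw [h]; simp)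
  have hc0 : c ≠ 0 := by
    rw [hc, starRingEnd_apply]
    exact star_ne_zero.mpr ht0
  have hcc : (starRingEnd ℂ) c = t := by rw [hc]; exact Complex.conj_conj t
  have hP : c ^ (2*n+2) + (n:ℂ) * c^(2*n+1) = t^(2*n+2) + (n:ℂ)*t^(2*n+1) := by
    have h := Complex.conj_eq_iff_im.mpr h1
    simp only [map_add, map_mul, map_pow, Complex.conj_natCast] at h
    rw [← hc] at h
    exact h
  have hA : 2*c^(n+1) + (2*(n:ℂ)+1)*c^n = 2*t^(n+1) + (2*(n:ℂ)+1)*t^n := by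
    have h := Complex.conj_eq_iff_im.mpr h2
    simp only [map_add, map_mul, map_pow, Complex.conj_natCast, map_ofNat, map_one] at h
    rw [← hc] at h
    exact h
  have hQ : 4*((n:ℂ)+1)*c^(2*n+1) + (2*(n:ℂ)+1)^2*c^(2*n)
      = 4*((n:ℂ)+1)*t^(2*n+1) + (2*(n:ℂ)+1)^2*t^(2*n) := by
    linear_combination (2*c^(n+1) + (2*(n:ℂ)+1)*c^n + 2*t^(n+1) + (2*(n:ℂ)+1)*t^n) * hA - 4*hP
  have hkey : (t*c)^(2*n) * ((t - c) * (4*((n:ℂ)+1)*(t*c) + (2*(n:ℂ)+1)^2*(t+c+(n:ℂ)))) = 0 := by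
    linear_combination (-(4*((n:ℂ)+1)*c^(2*n+1) + (2*(n:ℂ)+1)^2*c^(2*n))) * hP
      + (c^(2*n+2) + (n:ℂ)*c^(2*n+1)) * hQ
  have htc : t*c ≠ 0 := mul_ne_zero ht0 hc0
  have hsub : t - c ≠ 0 := sub_ne_zero.mpr (Ne.symm hct)
  have hR : 4*((n:ℂ)+1)*(t*c) + (2*(n:ℂ)+1)^2*(t+c+(n:ℂ)) = 0 := by
    rcases mul_eq_zero.mp hkey with h | h
    · exact absurd h (pow_ne_zero _ htc)
    · rcases mul_eq_zero.mp h with h | h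
      · exact absurd h hsub
      · exact h
  obtain ⟨q, hq⟩ : ∃ q : ℂ, q = 4*((n:ℂ)+1)*t + (2*(n:ℂ)+1)^2 := ⟨_, rfl⟩
  have hqc : (starRingEnd ℂ) q = 4*((n:ℂ)+1)*c + (2*(n:ℂ)+1)^2 := by
    rw [hq]
    simp only [map_add, map_mul, map_pow, Complex.conj_natCast, map_ofNat, map_one]
    rw [← hc]
  have hcq : c * q = -(2*(n:ℂ)+1)^2*(t+(n:ℂ)) := by
    rw [hq]; linear_combination hR
  have h2t : 2*t + 2*(n:ℂ) + 1 ≠ 0 := by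
    intro h
    exact ht (real_of' 2 (-(2*(n:ℝ))-1) two_ne_zero t (by push_cast; linear_combination h))
  have hA' : t^n * (2*t + 2*(n:ℂ)+1) = c^n*(2*c+2*(n:ℂ)+1) := by
    linear_combination -hA
  have hq2 : q * (2*c + 2*(n:ℂ) + 1) = (2*(n:ℂ)+1)*(2*t+2*(n:ℂ)+1) := by
    linear_combination 2*hcq + (2*(n:ℂ)+1)*hq
  have h5 : (2*t+2*(n:ℂ)+1) * (t^n * q) = (2*t+2*(n:ℂ)+1) * ((2*(n:ℂ)+1)*c^n) := by
    linear_combination q*hA' + c^n*hq2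
  have hF : t^n * q = (2*(n:ℂ)+1)*c^n := mul_left_cancel₀ h2t h5
  have hFc : c^n * (starRingEnd ℂ) q = (2*(n:ℂ)+1)*t^n := by
    have h := congrArg (starRingEnd ℂ) hF
    simp only [map_mul, map_pow, Complex.conj_natCast, map_ofNat, map_one, map_add] at h
    rw [← hc, hcc] at h
    exact h
  have hqq : q * (starRingEnd ℂ) q = (2*(n:ℂ)+1)^2 := by
    have h7 : (t*c)^n * (q * (starRingEnd ℂ) q) = (t*c)^n * ((2*(n:ℂ)+1)^2) := by
      linear_combination (c^n * (starRingEnd ℂ) q)*hF + ((2*(n:ℂ)+1)*c^n)*hFc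
    exact mul_left_cancel₀ (pow_ne_zero n htc) h7
  have hqq' : q * (starRingEnd ℂ) q = (((2*(n:ℝ)+1)^2 : ℝ) : ℂ) := by
    rw [hqq]; push_cast; ring
  have hx : q.re^2 + q.im^2 = (2*(n:ℝ)+1)^2 := by
    have h := congrArg Complex.re hqq'
    rw [Complex.ofReal_re, Complex.mul_re, Complex.conj_re, Complex.conj_im] at h
    linear_combination h
  have hmpos : (0:ℝ) < 2*(n:ℝ)+1 := by positivity
  have h0 : 0 ≤ 2*(n:ℝ)+1+q.re := by nlinarith [sq_nonneg q.im, sq_nonneg (q.re + (2*(n:ℝ)+1))]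
  have hmx : 0 < 2*(n:ℝ)+1+q.re := by
    rcases h0.lt_or_eq with h | h
    · exact h
    · exfalso
      apply ht
      have hxx : q.re = -(2*(n:ℝ)+1) := by linarith
      have hyy : q.im = 0 := by nlinarith
      have hqval : q = ((-(2*(n:ℝ)+1) : ℝ) : ℂ) := by
        rw [← Complex.re_add_im q, hxx, hyy]
        push_cast
        ring
      refine real_of' (4*((n:ℝ)+1)) (-(2*(n:ℝ)+1) - (2*(n:ℝ)+1)^2) (by positivity) t ?_
      push_cast
      push_cast at hqval
      linear_combination hqval - hq
  set s : ℝ := q.im / (2*(n:ℝ)+1+q.re) with hsdef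
  have hsy : s * (2*(n:ℝ)+1+q.re) = q.im := by
    rw [hsdef]; field_simp
  have hmx0 : ((2*(n:ℝ)+1+q.re : ℝ) : ℂ) ≠ 0 := Complex.ofReal_ne_zero.mpr (ne_of_gt hmx)
  have hqexp : (starRingEnd ℂ) q = (q.re:ℂ) - (q.im:ℂ)*Complex.I := by
    apply Complex.ext <;> simp
  have hqexp2 : q = (q.re:ℂ) + (q.im:ℂ)*Complex.I := (Complex.re_add_im q).symm
  have hsyC : (s:ℂ) * (2*(n:ℂ)+1+(q.re:ℂ)) = (q.im:ℂ) := by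
    have h := Complex.ofReal_inj.mpr hsy
    push_cast at h
    linear_combination h
  have e1 : ((2*(n:ℝ)+1+q.re : ℝ):ℂ) * (1 - (s:ℂ)*Complex.I) = (2*(n:ℂ)+1) + (starRingEnd ℂ) q := by
    push_cast
    linear_combination (-Complex.I)*hsyC - hqexp
  have e2 : ((2*(n:ℝ)+1+q.re : ℝ):ℂ) * (1 + (s:ℂ)*Complex.I) = (2*(n:ℂ)+1) + q := by
    push_cast
    linear_combination Complex.I*hsyC - hqexp2
  have key : q * ((2*(n:ℂ)+1) + (starRingEnd ℂ) q) = (2*(n:ℂ)+1)*((2*(n:ℂ)+1) + q) := by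
    linear_combination hqq
  have hu : q * (1 - (s:ℂ)*Complex.I) = (2*(n:ℂ)+1)*(1 + (s:ℂ)*Complex.I) := by
    apply mul_left_cancel₀ hmx0
    calc ((2*(n:ℝ)+1+q.re : ℝ):ℂ) * (q * (1 - (s:ℂ)*Complex.I))
        = q * (((2*(n:ℝ)+1+q.re : ℝ):ℂ) * (1 - (s:ℂ)*Complex.I)) := by ring
      _ = q * ((2*(n:ℂ)+1) + (starRingEnd ℂ) q) := by rw [e1]
      _ = (2*(n:ℂ)+1)*((2*(n:ℂ)+1) + q) := key
      _ = (2*(n:ℂ)+1)*(((2*(n:ℝ)+1+q.re : ℝ):ℂ) * (1 + (s:ℂ)*Complex.I)) := by rw [e2]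
      _ = ((2*(n:ℝ)+1+q.re : ℝ):ℂ) * ((2*(n:ℂ)+1)*(1 + (s:ℂ)*Complex.I)) := by ring
  have hs0 : s ≠ 0 := by
    intro h
    apply ht
    have hq' : q = 2*(n:ℂ)+1 := by
      have h' := hu
      rw [h] at h'
      push_cast at h'
      simpa using h'
    refine real_of' (4*((n:ℝ)+1)) ((2*(n:ℝ)+1) - (2*(n:ℝ)+1)^2) (by positivity) t ?_
    push_cast
    linear_combination hq' - hq
  have hu' : (starRingEnd ℂ) q * (1 + (s:ℂ)*Complex.I) = (2*(n:ℂ)+1)*(1 - (s:ℂ)*Complex.I) := by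
    have h := congrArg (starRingEnd ℂ) hu
    simp only [map_mul, map_sub, map_add, map_one, Complex.conj_I, Complex.conj_ofReal,
      Complex.conj_natCast, map_ofNat] at h
    linear_combination h
  have hQm : (q - (2*(n:ℂ)+1)^2) * (1 - (s:ℂ)*Complex.I)
      = (-2)*(2*(n:ℂ)+1)*((n:ℂ) - ((n:ℂ)+1)*(s:ℂ)*Complex.I) := by
    linear_combination hu
  have hQm' : ((starRingEnd ℂ) q - (2*(n:ℂ)+1)^2) * (1 + (s:ℂ)*Complex.I)
      = (-2)*(2*(n:ℂ)+1)*((n:ℂ) + ((n:ℂ)+1)*(s:ℂ)*Complex.I) := by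
    linear_combination hu'
  have hdt : (4*((n:ℂ)+1)) * t = q - (2*(n:ℂ)+1)^2 := by linear_combination -hq
  have hdc : (4*((n:ℂ)+1)) * c = (starRingEnd ℂ) q - (2*(n:ℂ)+1)^2 := by linear_combination -hqc
  have hFd : (q - (2*(n:ℂ)+1)^2)^n * q = (2*(n:ℂ)+1) * ((starRingEnd ℂ) q - (2*(n:ℂ)+1)^2)^n := by
    calc (q - (2*(n:ℂ)+1)^2)^n * q = ((4*((n:ℂ)+1))*t)^n * q := by rw [hdt]
      _ = (4*((n:ℂ)+1))^n * (t^n * q) := by simp only [mul_pow]; ring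
      _ = (4*((n:ℂ)+1))^n * ((2*(n:ℂ)+1) * c^n) := by rw [hF]
      _ = (2*(n:ℂ)+1) * ((4*((n:ℂ)+1))*c)^n := by simp only [mul_pow]; ring
      _ = (2*(n:ℂ)+1) * ((starRingEnd ℂ) q - (2*(n:ℂ)+1)^2)^n := by rw [hdc]
  have p1 : (q - (2*(n:ℂ)+1)^2)^n * (1 - (s:ℂ)*Complex.I)^n
      = (-2)^n * (2*(n:ℂ)+1)^n * ((n:ℂ) - ((n:ℂ)+1)*(s:ℂ)*Complex.I)^n := by
    rw [← mul_pow, hQm]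
    simp only [mul_pow]
  have p2 : ((starRingEnd ℂ) q - (2*(n:ℂ)+1)^2)^n * (1 + (s:ℂ)*Complex.I)^n
      = (-2)^n * (2*(n:ℂ)+1)^n * ((n:ℂ) + ((n:ℂ)+1)*(s:ℂ)*Complex.I)^n := by
    rw [← mul_pow, hQm']
    simp only [mul_pow]
  have h8 : ((-2)^n * (2*(n:ℂ)+1)^n * (2*(n:ℂ)+1)) *
        (((n:ℂ) - ((n:ℂ)+1)*(s:ℂ)*Complex.I)^n * (1 + (s:ℂ)*Complex.I)^(n+1))
      = ((-2)^n * (2*(n:ℂ)+1)^n * (2*(n:ℂ)+1)) *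
        (((n:ℂ) + ((n:ℂ)+1)*(s:ℂ)*Complex.I)^n * (1 - (s:ℂ)*Complex.I)^(n+1)) := by
    linear_combination (-((2*(n:ℂ)+1)*(1 + (s:ℂ)*Complex.I)^(n+1))) * p1
      - ((q - (2*(n:ℂ)+1)^2)^n * (1 - (s:ℂ)*Complex.I)^n * (1 + (s:ℂ)*Complex.I)^n) * hu
      + ((1 - (s:ℂ)*Complex.I)^(n+1) * (1 + (s:ℂ)*Complex.I)^n) * hFd
      + ((2*(n:ℂ)+1) * (1 - (s:ℂ)*Complex.I)^(n+1)) * p2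
  have hm0 : (2*(n:ℂ)+1) ≠ 0 := by
    have hcast : (2*(n:ℂ)+1) = ((2*(n:ℝ)+1 : ℝ) : ℂ) := by push_cast; ring
    rw [hcast]
    exact Complex.ofReal_ne_zero.mpr (ne_of_gt hmpos)
  have hcancel : ((-2:ℂ))^n * (2*(n:ℂ)+1)^n * (2*(n:ℂ)+1) ≠ 0 :=
    mul_ne_zero (mul_ne_zero (pow_ne_zero _ (by norm_num)) (pow_ne_zero _ hm0)) hm0
  have h9 : ((n:ℂ) - ((n:ℂ)+1)*(s:ℂ)*Complex.I)^n * (1 + (s:ℂ)*Complex.I)^(n+1)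
      = ((n:ℂ) + ((n:ℂ)+1)*(s:ℂ)*Complex.I)^n * (1 - (s:ℂ)*Complex.I)^(n+1) :=
    mul_left_cancel₀ hcancel h8
  have hW : (n:ℂ) + ((n:ℂ)+1)*(s:ℂ)^2 - (s:ℂ)*Complex.I
      = (1 + (s:ℂ)*Complex.I) * ((n:ℂ) - ((n:ℂ)+1)*(s:ℂ)*Complex.I) := by
    linear_combination (((n:ℂ)+1)*(s:ℂ)^2) * Complex.I_sq
  have hW' : (n:ℂ) + ((n:ℂ)+1)*(s:ℂ)^2 + (s:ℂ)*Complex.I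
      = (1 - (s:ℂ)*Complex.I) * ((n:ℂ) + ((n:ℂ)+1)*(s:ℂ)*Complex.I) := by
    linear_combination (((n:ℂ)+1)*(s:ℂ)^2) * Complex.I_sq
  have hWrel : ((n:ℂ) + ((n:ℂ)+1)*(s:ℂ)^2 - (s:ℂ)*Complex.I)^n * (1 + (s:ℂ)*Complex.I)
      = ((n:ℂ) + ((n:ℂ)+1)*(s:ℂ)^2 + (s:ℂ)*Complex.I)^n * (1 - (s:ℂ)*Complex.I) := by
    rw [hW, hW', mul_pow, mul_pow]
    linear_combination h9
  have hconj : (starRingEnd ℂ) (((n:ℂ) + ((n:ℂ)+1)*(s:ℂ)^2 - (s:ℂ)*Complex.I)^n * (1 + (s:ℂ)*Complex.I))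
      = ((n:ℂ) + ((n:ℂ)+1)*(s:ℂ)^2 + (s:ℂ)*Complex.I)^n * (1 - (s:ℂ)*Complex.I) := by
    simp only [map_mul, map_pow, map_sub, map_add, map_one, Complex.conj_I,
      Complex.conj_ofReal, Complex.conj_natCast]
    ring
  have him0 : (((n:ℂ) + ((n:ℂ)+1)*(s:ℂ)^2 - (s:ℂ)*Complex.I)^n * (1 + (s:ℂ)*Complex.I)).im = 0 :=
    Complex.conj_eq_iff_im.mp (hconj.trans hWrel.symm)
  exact aux_ne n hn s hs0 him0
end

section
/- Let (a_n)_{n≥0} be a sequence of real numbers such that a_n ≥ 0 for all but finitely many n, and suppose that T := limsup_{n→∞} |a_n|^{1/n} is finite and strictly positive. Define G(t) = ∑_{n≥0} a_n t^n / n! (the series converges for every real t). Then G(t) > 0 for all sufficiently large t > 0, and limsup_{t→+∞} (log G(t))/t = T. -/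
/-!
Upper bound: if `|aₙ| ≤ M cⁿ` for all `n`, then `G t ≤ M e^{ct}`, and every `c > T` admits such an
`M`. Lower bound: past some `N` all terms of `G` are nonnegative, so `G t` is at least one term
`aₘ tᵐ / m!` plus the polynomial `∑_{k<N} aₖ tᵏ / k!`. For `c < T` there are infinitely many `n`
with `aₙ ≥ cⁿ`; at `t = n / c` the term `aₙ tⁿ / n!` is at least `nⁿ / n!`, which by Stirling
exceeds `e^{(1-ε)n} = e^{(1-ε)ct}`, while the polynomial is negligible. Comparing the polynomial
with a single term `aₘ tᵐ / m!`, `aₘ > 0`, `m ≥ N`, in the same way shows that `G t > 0` eventually.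
-/

open Filter Asymptotics Real
open scoped Nat

noncomputable def invBorel (a : ℕ → ℝ) (t : ℝ) : ℝ := ∑' n, a n * t ^ n / n !

section RootTest

variable {a : ℕ → ℝ} {c : ℝ}

lemma abs_rpow_one_div_pow (x : ℝ) {n : ℕ} (hn : n ≠ 0) : (|x| ^ (1 / (n : ℝ))) ^ n = |x| := by
  rw [one_div, rpow_inv_natCast_pow (abs_nonneg x) hn]

lemma eventually_abs_le_pow_of_limsup_lt
    (hbdd : IsBoundedUnder (· ≤ ·) atTop fun n : ℕ => |a n| ^ (1 / (n : ℝ)))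
    (hc : limsup (fun n : ℕ => |a n| ^ (1 / (n : ℝ))) atTop < c) :
    ∀ᶠ n in atTop, |a n| ≤ c ^ n := by
  filter_upwards [eventually_lt_of_limsup_lt hc hbdd, eventually_ne_atTop 0] with n hn hn0
  rw [← abs_rpow_one_div_pow (a n) hn0]
  exact pow_le_pow_left₀ (by positivity) hn.le n

lemma frequently_pow_le_abs_of_lt_limsup (hc0 : 0 ≤ c)
    (hc : c < limsup (fun n : ℕ => |a n| ^ (1 / (n : ℝ))) atTop) :
    ∃ᶠ n in atTop, c ^ n ≤ |a n| := by
  have hcob : IsCoboundedUnder (· ≤ ·) atTop fun n : ℕ => |a n| ^ (1 / (n : ℝ)) :=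
    isCoboundedUnder_le_of_le atTop fun n => by positivity
  refine ((frequently_lt_of_lt_limsup hcob hc).and_eventually (eventually_ne_atTop 0)).mono ?_
  rintro n ⟨hn, hn0⟩
  rw [← abs_rpow_one_div_pow (a n) hn0]
  exact pow_le_pow_left₀ hc0 hn.le n

lemma exists_abs_le_mul_pow (h : ∀ᶠ n in atTop, |a n| ≤ c ^ n) (hc : 0 < c) :
    ∃ M, ∀ n, |a n| ≤ M * c ^ n := by
  have hO : a =O[cofinite] fun n => c ^ n := by
    rw [Nat.cofinite_eq_atTop]
    refine IsBigO.of_bound 1 ?_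
    simpa [abs_of_pos hc] using h
  obtain ⟨M, hM⟩ := (isBigO_cofinite_iff fun n h => absurd h (pow_ne_zero n hc.ne')).mp hO
  exact ⟨M, fun n => by simpa [abs_of_pos hc] using hM n⟩

end RootTest

lemma limsup_eq_of_eventually_le_of_frequently_ge {ι : Type*} {l : Filter ι} {f : ι → ℝ}
    {b T : ℝ} (hb : b < T) (hle : ∀ c, T < c → ∀ᶠ x in l, f x ≤ c)
    (hge : ∀ c, b < c → c < T → ∃ᶠ x in l, c ≤ f x) :
    limsup f l = T := by
  have hbdd : IsBoundedUnder (· ≤ ·) l f := isBoundedUnder_of_eventually_le (hle _ (lt_add_one T))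
  have hcob : IsCoboundedUnder (· ≤ ·) l f :=
    IsCoboundedUnder.of_frequently_ge (hge ((b + T) / 2) (by linarith) (by linarith))
  refine le_antisymm (le_of_forall_gt_imp_ge_of_dense fun c hc => limsup_le_of_le hcob (hle c hc))
    (le_of_forall_lt_imp_le_of_dense fun c hc => ?_)
  have hbc : b < max c ((b + T) / 2) := (by linarith : b < (b + T) / 2).trans_le (le_max_right _ _)
  calc c ≤ max c ((b + T) / 2) := le_max_left _ _
    _ ≤ limsup f l := le_limsup_of_frequently_le (hge _ hbc (max_lt hc (by linarith))) hbdd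

lemma factorial_le_exp_one_mul_sqrt_mul_pow {n : ℕ} (hn : n ≠ 0) :
    (n ! : ℝ) ≤ exp 1 * √n * (n / exp 1) ^ n := by
  obtain ⟨k, rfl⟩ := Nat.exists_eq_add_one_of_ne_zero hn
  -- `stirlingSeq n = n! / (√(2n) (n/e)ⁿ)` decreases from its value `e / √2` at `n = 1`.
  have h : Stirling.stirlingSeq (k + 1) ≤ exp 1 / √2 := by
    simpa using Stirling.stirlingSeq'_antitone (Nat.zero_le k)
  rw [Stirling.stirlingSeq, div_le_div_iff₀ (by positivity) (by positivity),
    sqrt_mul zero_le_two] at h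
  exact le_of_mul_le_mul_right (h.trans_eq (by ring)) (by positivity : (0 : ℝ) < √2)

lemma eventually_two_mul_exp_le_pow_div_factorial {θ : ℝ} (hθ : θ < 1) :
    ∀ᶠ n : ℕ in atTop, 2 * exp (θ * n) ≤ (n : ℝ) ^ n / n ! := by
  have h := (isLittleO_rpow_exp_pos_mul_atTop (1 / 2) (sub_pos.2 hθ)).bound
    (by positivity : (0 : ℝ) < 1 / (2 * exp 1))
  filter_upwards [tendsto_natCast_atTop_atTop.eventually h, eventually_ne_atTop 0] with n hn hn0
  rw [Real.norm_eq_abs, Real.norm_eq_abs, abs_exp, abs_of_nonneg (by positivity),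
    ← sqrt_eq_rpow] at hn
  rw [le_div_iff₀ (by positivity)]
  calc 2 * exp (θ * n) * n ! ≤ 2 * exp (θ * n) * (exp 1 * √n * (n / exp 1) ^ n) := by
        gcongr; exact factorial_le_exp_one_mul_sqrt_mul_pow hn0
    _ = (2 * exp 1 * √n) * exp (θ * n) * n ^ n / exp n := by
        rw [div_pow, ← exp_nat_mul, mul_one]; ring
    _ ≤ exp ((1 - θ) * n) * exp (θ * n) * n ^ n / exp n := by
        gcongr
        rw [one_div_mul_eq_div, le_div_iff₀ (by positivity)] at hn
        linarith
    _ = n ^ n := by rw [← exp_add]; field_simp; ring_nf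

section InvBorel

variable {a : ℕ → ℝ} {M c t : ℝ}

lemma summable_of_abs_le_mul_pow (hM : ∀ n, |a n| ≤ M * c ^ n) (t : ℝ) :
    Summable fun n => a n * t ^ n / n ! := by
  refine .of_norm_bounded ((Real.summable_pow_div_factorial (c * |t|)).mul_left M) fun n => ?_
  rw [Real.norm_eq_abs, abs_div, abs_mul, abs_pow, Nat.abs_cast, mul_pow, ← mul_div_assoc,
    ← mul_assoc]
  gcongr
  exact hM n

lemma invBorel_le_mul_exp (hM : ∀ n, |a n| ≤ M * c ^ n) (ht : 0 ≤ t) :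
    invBorel a t ≤ M * exp (c * t) := by
  have hexp : HasSum (fun n => M * ((c * t) ^ n / n !)) (M * exp (c * t)) := by
    rw [exp_eq_exp_ℝ]
    exact (NormedSpace.expSeries_div_hasSum_exp (c * t)).mul_left M
  refine hasSum_le (fun n => ?_) (summable_of_abs_le_mul_pow hM t).hasSum hexp
  rw [mul_pow, ← mul_div_assoc, ← mul_assoc]
  gcongr
  exact (le_abs_self _).trans (hM n)

lemma sum_range_add_le_invBorel {N m : ℕ} (hN : ∀ n, N ≤ n → 0 ≤ a n) (hm : N ≤ m) (ht : 0 ≤ t)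
    (hs : Summable fun n => a n * t ^ n / n !) :
    ∑ k ∈ Finset.range N, a k * t ^ k / k ! + a m * t ^ m / m ! ≤ invBorel a t := by
  rw [add_comm, ← Finset.sum_insert (f := fun k => a k * t ^ k / k !) (by simpa using hm)]
  refine hs.sum_le_tsum _ fun n hn => ?_
  have := hN n (by simpa using fun h => hn (Finset.mem_insert_of_mem (Finset.mem_range.2 h)))
  positivity

lemma isLittleO_sum_range {N : ℕ} {f : ℝ → ℝ} (hf : ∀ k < N, (fun t : ℝ => t ^ k) =o[atTop] f) :
    (fun t => ∑ k ∈ Finset.range N, a k * t ^ k / k !) =o[atTop] f := by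
  refine IsLittleO.fun_sum fun k hk => ?_
  simpa only [mul_div_right_comm] using (hf k (Finset.mem_range.1 hk)).const_mul_left (a k / k !)

lemma eventually_invBorel_pos {N : ℕ} (hN : ∀ n, N ≤ n → 0 ≤ a n)
    (hs : ∀ t, Summable fun n => a n * t ^ n / n !) (hpos : ∃ᶠ n in atTop, 0 < a n) :
    ∀ᶠ t in atTop, 0 < invBorel a t := by
  obtain ⟨m, ham, hm⟩ := (hpos.and_eventually (eventually_ge_atTop N)).exists
  have hb : 0 < a m / m ! := by positivity
  have hsmall := (isLittleO_sum_range (a := a) (f := fun t : ℝ => t ^ m) fun k hk =>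
    isLittleO_pow_pow_atTop_of_lt (hk.trans_le hm)).bound (half_pos hb)
  filter_upwards [hsmall, eventually_gt_atTop 0] with t hp ht
  rw [Real.norm_eq_abs, Real.norm_eq_abs, abs_of_pos (pow_pos ht m)] at hp
  have hlow := sum_range_add_le_invBorel hN hm ht.le (hs t)
  have hterm : 0 < a m / m ! / 2 * t ^ m := by positivity
  rw [mul_div_right_comm] at hlow
  linarith [neg_abs_le (∑ k ∈ Finset.range N, a k * t ^ k / k !)]

lemma eventually_log_invBorel_div_le (hM : ∀ n, |a n| ≤ M * c ^ n)
    (hpos : ∀ᶠ t in atTop, 0 < invBorel a t) {c' : ℝ} (hc : c < c') :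
    ∀ᶠ t in atTop, log (invBorel a t) / t ≤ c' := by
  filter_upwards [hpos, eventually_gt_atTop 0, eventually_ge_atTop (log M / (c' - c))]
    with t hG ht htM
  have hle := invBorel_le_mul_exp hM ht.le
  have hM0 : 0 < M := pos_of_mul_pos_left (hG.trans_le hle) (exp_pos _).le
  rw [div_le_iff₀ (sub_pos.2 hc)] at htM
  rw [div_le_iff₀ ht]
  calc log (invBorel a t) ≤ log (M * exp (c * t)) := log_le_log hG hle
    _ = log M + c * t := by rw [log_mul hM0.ne' (exp_pos _).ne', log_exp]
    _ ≤ c' * t := by linarith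

lemma frequently_le_log_invBorel_div {N : ℕ} {c' : ℝ} (hN : ∀ n, N ≤ n → 0 ≤ a n)
    (hs : ∀ t, Summable fun n => a n * t ^ n / n !) (hfreq : ∃ᶠ n in atTop, c ^ n ≤ a n)
    (hc' : 0 < c') (hc : c' < c) :
    ∃ᶠ t in atTop, c' ≤ log (invBorel a t) / t := by
  have hc0 : 0 < c := hc'.trans hc
  have hpoly := (isLittleO_sum_range (a := a) (N := N) fun k _ =>
    isLittleO_pow_exp_pos_mul_atTop k hc').bound one_pos
  have hscale : Tendsto (fun n : ℕ => (n : ℝ) / c) atTop atTop :=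
    tendsto_natCast_atTop_atTop.atTop_div_const hc0
  refine hscale.frequently ((hfreq.and_eventually ((eventually_ge_atTop N).and
    ((eventually_two_mul_exp_le_pow_div_factorial ((div_lt_one hc0).2 hc)).and
    ((hscale.eventually hpoly).and (hscale.eventually (eventually_gt_atTop 0)))))).mono ?_)
  rintro n ⟨han, hNn, hfac, hp, ht⟩
  set t := (n : ℝ) / c
  have hct : c * t = n := mul_div_cancel₀ _ hc0.ne'
  have hterm : (n : ℝ) ^ n / n ! ≤ a n * t ^ n / n ! := by
    rw [← hct, mul_pow]; gcongr
  rw [div_mul_eq_mul_div, mul_div_assoc] at hfac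
  rw [Real.norm_eq_abs, Real.norm_eq_abs, abs_exp, one_mul] at hp
  have hG : exp (c' * t) ≤ invBorel a t := by
    have := sum_range_add_le_invBorel hN hNn ht.le (hs t)
    linarith [neg_abs_le (∑ k ∈ Finset.range N, a k * t ^ k / k !)]
  rw [le_div_iff₀ ht, ← log_exp (c' * t)]
  exact log_le_log (exp_pos _) hG

end InvBorel

/-- Let `(aₙ)` be reals with `aₙ ≥ 0` for all but finitely many `n`, and suppose
`T := limsup |aₙ|^(1/n)` is finite and strictly positive. With `G(t) = ∑ aₙ tⁿ/n!`
(which converges for every real `t`), one has `G(t) > 0` for all sufficiently large `t > 0`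
and `limsup_{t→∞} (log G(t))/t = T`. -/
theorem stmt_12 (a : ℕ → ℝ) (ha : ∀ᶠ n in Filter.cofinite, 0 ≤ a n)
    (T : ℝ) (hTpos : 0 < T)
    (hT : Filter.limsup (fun n : ℕ => |a n| ^ (1 / (n : ℝ))) Filter.atTop = T) :
    (∀ t : ℝ, Summable (fun n : ℕ => a n * t ^ n / (Nat.factorial n))) ∧
    (∀ᶠ t in Filter.atTop, 0 < ∑' n : ℕ, a n * t ^ n / (Nat.factorial n)) ∧
    Filter.limsup
      (fun t : ℝ => Real.log (∑' n : ℕ, a n * t ^ n / (Nat.factorial n)) / t)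
      Filter.atTop = T := by
  rw [Nat.cofinite_eq_atTop] at ha
  have hbdd : IsBoundedUnder (· ≤ ·) atTop fun n : ℕ => |a n| ^ (1 / (n : ℝ)) := by
    -- a real `limsup` of a sequence unbounded above is `0`
    by_contra h
    exact hTpos.ne' (hT ▸ Real.limsup_of_not_isBoundedUnder h)
  have hgrowth : ∀ c, T < c → ∃ M, ∀ n, |a n| ≤ M * c ^ n := fun c hc =>
    exists_abs_le_mul_pow (eventually_abs_le_pow_of_limsup_lt hbdd (hT ▸ hc)) (hTpos.trans hc)
  have hfreq : ∀ c, 0 ≤ c → c < T → ∃ᶠ n in atTop, c ^ n ≤ a n := fun c hc0 hc =>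
    ((frequently_pow_le_abs_of_lt_limsup hc0 (hT ▸ hc)).and_eventually ha).mono
      fun n ⟨h, hn⟩ => abs_of_nonneg hn ▸ h
  obtain ⟨M, hM⟩ := hgrowth (T + 1) (lt_add_one T)
  have hs := summable_of_abs_le_mul_pow hM
  obtain ⟨N, hN⟩ := eventually_atTop.mp ha
  have hpos : ∀ᶠ t in atTop, 0 < invBorel a t := eventually_invBorel_pos hN hs <|
    (hfreq (T / 2) (by positivity) (half_lt_self hTpos)).mono
      fun n hn => (pow_pos (half_pos hTpos) n).trans_le hn
  refine ⟨hs, hpos, limsup_eq_of_eventually_le_of_frequently_ge hTpos (fun c' hc' => ?_)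
    (fun c' hc'0 hc'T => ?_)⟩
  · obtain ⟨M', hM'⟩ := hgrowth ((T + c') / 2) (by linarith)
    exact eventually_log_invBorel_div_le hM' hpos (by linarith)
  · exact frequently_le_log_invBorel_div hN hs (hfreq ((c' + T) / 2) (by linarith) (by linarith))
      hc'0 (by linarith)
end

section
/- Let m ≥ 1 and let S ⊆ ℤ^m be a nonempty finite set of exponent vectors such that 0 lies in the interior of the convex hull of S in ℝ^m, and let c_b > 0 be positive real coefficients for b ∈ S. For n ∈ ℕ set Cst(n) = ∑_{(b_1,…,b_n) ∈ S^n, b_1+⋯+b_n = 0} c_{b_1}⋯c_{b_n}, the constant term of f^n where f(x) = ∑_{b∈S} c_b x^b. Then there exists a unique integer r ≥ 1 such that Cst(n) = 0 whenever r does not divide n, and Cst(rn) > 0 for all but finitely many n ≥ 0; moreover, for this r, the limit lim_{n→∞} Cst(rn)^{1/(rn)} exists. -/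
open Filter

/-- The constant term of `f(x)^n` where `f(x) = ∑_{b ∈ S} c_b x^b`:
`Cst S c n = ∑_{(b₁,…,bₙ) ∈ Sⁿ, b₁+⋯+bₙ = 0} c_{b₁}⋯c_{bₙ}` (with `Cst S c 0 = 1`). -/
noncomputable def Cst {m : ℕ} (S : Finset (Fin m → ℤ)) (c : (Fin m → ℤ) → ℝ) (n : ℕ) : ℝ :=
  ∑ w : Fin n → {b : Fin m → ℤ // b ∈ S},
    if (∑ i, (w i).1) = 0 then ∏ i, c (w i).1 else 0

namespace Stmt14Aux
variable {m : ℕ} {S : Finset (Fin m → ℤ)} {c : (Fin m → ℤ) → ℝ}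

lemma Cst_zero : Cst S c 0 = 1 := by simp [Cst]

private lemma term_nonneg (hc : ∀ b ∈ S, 0 < c b) {n : ℕ}
    (w : Fin n → {b : Fin m → ℤ // b ∈ S}) :
    0 ≤ if (∑ i, (w i).1) = 0 then ∏ i, c (w i).1 else 0 := by
  split
  · exact Finset.prod_nonneg fun i _ => (hc _ (w i).2).le
  · exact le_refl 0

lemma Cst_nonneg (hc : ∀ b ∈ S, 0 < c b) (n : ℕ) : 0 ≤ Cst S c n :=
  Finset.sum_nonneg fun w _ => term_nonneg hc w

lemma Cst_pos_of_word (hc : ∀ b ∈ S, 0 < c b) {n : ℕ}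
    (w : Fin n → {b : Fin m → ℤ // b ∈ S}) (hw : (∑ i, (w i).1) = 0) :
    0 < Cst S c n := by
  have h1 : 0 < (if (∑ i, (w i).1) = 0 then ∏ i, c (w i).1 else 0) := by
    rw [if_pos hw]
    exact Finset.prod_pos fun i _ => hc _ (w i).2
  exact lt_of_lt_of_le h1 <| Finset.single_le_sum
    (f := fun w : Fin n → {b : Fin m → ℤ // b ∈ S} =>
      if (∑ i, (w i).1) = 0 then ∏ i, c (w i).1 else 0)
    (fun v _ => term_nonneg hc v) (Finset.mem_univ w)

lemma Cst_mul_le (hc : ∀ b ∈ S, 0 < c b) (a b : ℕ) :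
    Cst S c a * Cst S c b ≤ Cst S c (a + b) := by
  classical
  set X := {b : Fin m → ℤ // b ∈ S}
  conv_rhs => rw [Cst, ← Equiv.sum_comp (Fin.appendEquiv (α := X) a b)]
  rw [Fintype.sum_prod_type, Cst, Cst, Finset.sum_mul_sum]
  refine Finset.sum_le_sum fun w1 _ => Finset.sum_le_sum fun w2 _ => ?_
  have hsum : (∑ i, ((Fin.appendEquiv a b (w1, w2)) i).1)
      = (∑ i, ((w1 : Fin a → X) i).1) + (∑ i, ((w2 : Fin b → X) i).1) := by
    rw [Fin.sum_univ_add]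
    simp [Fin.appendEquiv]
  have hprod : (∏ i, c ((Fin.appendEquiv a b (w1, w2)) i).1)
      = (∏ i, c ((w1 : Fin a → X) i).1) * (∏ i, c ((w2 : Fin b → X) i).1) := by
    rw [Fin.prod_univ_add]
    simp [Fin.appendEquiv]
  by_cases h1 : (∑ i, ((w1 : Fin a → X) i).1) = 0
  · by_cases h2 : (∑ i, ((w2 : Fin b → X) i).1) = 0
    · rw [if_pos h1, if_pos h2, if_pos (by rw [hsum, h1, h2, add_zero]), hprod]
    · rw [if_pos h1, if_neg h2, mul_zero]
      exact term_nonneg hc _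
  · rw [if_neg h1, zero_mul]
    exact term_nonneg hc _

lemma Cst_le_pow (hc : ∀ b ∈ S, 0 < c b) (n : ℕ) :
    Cst S c n ≤ (∑ b ∈ S, c b) ^ n := by
  classical
  have key : (∑ w : Fin n → {b : Fin m → ℤ // b ∈ S}, ∏ i, c (w i).1)
      = (∑ b ∈ S, c b) ^ n := by
    refine Eq.trans ?_ (Finset.sum_pow' S c n).symm
    exact Finset.sum_bij' (fun (w : Fin n → {b : Fin m → ℤ // b ∈ S}) _ => fun i => (w i).1)
      (fun p hp => fun i => (⟨p i, (Fintype.mem_piFinset.mp hp) i⟩))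
      (fun w _ => Fintype.mem_piFinset.mpr fun i => (w i).2)
      (fun p hp => Finset.mem_univ _) (fun w _ => rfl) (fun p hp => rfl)
      (fun w _ => rfl)
  calc Cst S c n ≤ ∑ w : Fin n → {b : Fin m → ℤ // b ∈ S}, ∏ i, c (w i).1 := by
        refine Finset.sum_le_sum fun w _ => ?_
        split
        · exact le_refl _
        · exact Finset.prod_nonneg fun i _ => (hc _ (w i).2).le
    _ = _ := key


variable {m : ℕ}

def dotR (v w : Fin m → ℝ) : ℝ := ∑ i, v i * w i

lemma dotR_comm (v w : Fin m → ℝ) : dotR v w = dotR w v := by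
  unfold dotR; exact Finset.sum_congr rfl fun i _ => mul_comm _ _

lemma dotR_smul (a : ℝ) (v w : Fin m → ℝ) : dotR (a • v) w = a * dotR v w := by
  unfold dotR; rw [Finset.mul_sum]
  exact Finset.sum_congr rfl fun i _ => by simp [mul_assoc]

lemma dotR_add_left (u v w : Fin m → ℝ) : dotR (u + v) w = dotR u w + dotR v w := by
  unfold dotR; rw [← Finset.sum_add_distrib]
  exact Finset.sum_congr rfl fun i _ => by simp [add_mul]

lemma dotR_self_add (x y : Fin m → ℝ) :
    dotR (x + y) (x + y) = dotR x x + 2 * dotR x y + dotR y y := by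
  rw [dotR_add_left, dotR_comm x (x + y), dotR_comm y (x + y), dotR_add_left, dotR_add_left]
  rw [dotR_comm y x]
  ring

lemma dotR_nonneg_self (v : Fin m → ℝ) : 0 ≤ dotR v v :=
  Finset.sum_nonneg fun i _ => mul_self_nonneg _

lemma sq_le_dotR_self (v : Fin m → ℝ) (i : Fin m) : v i * v i ≤ dotR v v :=
  Finset.single_le_sum (fun j _ => mul_self_nonneg (v j)) (Finset.mem_univ i)

lemma abs_le_sqrt_dotR (v : Fin m → ℝ) (i : Fin m) : |v i| ≤ Real.sqrt (dotR v v) := by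
  rw [← Real.sqrt_mul_self_eq_abs]
  exact Real.sqrt_le_sqrt (sq_le_dotR_self v i)

lemma norm_le_sqrt_dotR (v : Fin m → ℝ) : ‖v‖ ≤ Real.sqrt (dotR v v) := by
  refine (pi_norm_le_iff_of_nonneg (Real.sqrt_nonneg _)).mpr fun i => ?_
  rw [Real.norm_eq_abs]; exact abs_le_sqrt_dotR v i

lemma exists_vertex_le (T : Finset (Fin m → ℝ)) (hT : T.Nonempty) (u : Fin m → ℝ)
    (x : Fin m → ℝ) (hx : x ∈ convexHull ℝ (T : Set (Fin m → ℝ))) :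
    ∃ y ∈ T, dotR y u ≤ dotR x u := by
  obtain ⟨y₀, hy₀T, hy₀⟩ := T.exists_min_image (fun y => dotR y u) hT
  refine ⟨y₀, hy₀T, ?_⟩
  have hC : convexHull ℝ (T : Set (Fin m → ℝ)) ⊆ {z | dotR y₀ u ≤ dotR z u} := by
    refine convexHull_min (fun z hz => hy₀ z (by exact_mod_cast hz)) ?_
    intro z1 hz1 z2 hz2 a b ha hb hab
    simp only [Set.mem_setOf_eq] at hz1 hz2 ⊢
    rw [dotR_add_left, dotR_smul, dotR_smul]
    calc dotR y₀ u = a * dotR y₀ u + b * dotR y₀ u := by rw [← add_mul, hab, one_mul]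
      _ ≤ a * dotR z1 u + b * dotR z2 u :=
        add_le_add (mul_le_mul_of_nonneg_left hz1 ha) (mul_le_mul_of_nonneg_left hz2 hb)
  exact hC hx

lemma exists_zero_word (S : Finset (Fin m → ℤ)) (hS : S.Nonempty)
    (hconv : (0 : Fin m → ℝ) ∈ interior (convexHull ℝ
      ((fun b : Fin m → ℤ => fun i => (b i : ℝ)) '' (S : Set (Fin m → ℤ))))) :
    ∃ n : ℕ, 1 ≤ n ∧ ∃ w : Fin n → {b : Fin m → ℤ // b ∈ S}, (∑ i, (w i).1) = 0 := by
  classical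
  set f : (Fin m → ℤ) → (Fin m → ℝ) := fun b i => (b i : ℝ) with hf
  have hfadd : ∀ v w : Fin m → ℤ, f (v + w) = f v + f w := by
    intro v w; funext i; simp [hf]
  set T : Finset (Fin m → ℝ) := S.image f with hT
  have hTset : (T : Set (Fin m → ℝ)) = f '' (S : Set (Fin m → ℤ)) := Finset.coe_image
  have hTne : T.Nonempty := hS.image f
  -- the ball inside the hull
  obtain ⟨ε, hε, hball⟩ : ∃ ε > 0, Metric.ball (0 : Fin m → ℝ) ε ⊆
      convexHull ℝ (T : Set (Fin m → ℝ)) := by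
    rw [mem_interior_iff_mem_nhds] at hconv
    rcases Metric.mem_nhds_iff.mp hconv with ⟨ε, hε, h⟩
    exact ⟨ε, hε, by rw [hTset]; exact h⟩
  -- the greedy step
  have hstep : ∀ v : Fin m → ℤ, ∃ b ∈ S, ∀ b' ∈ S, dotR (f b) (f v) ≤ dotR (f b') (f v) :=
    fun v => S.exists_min_image (fun b => dotR (f b) (f v)) hS
  choose stp hstpS hstpmin using hstep
  -- key decrease estimate
  have hkey : ∀ v : Fin m → ℤ, v ≠ 0 →
      dotR (f (stp v)) (f v) ≤ -(ε/2) * Real.sqrt (dotR (f v) (f v)) := by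
    intro v hv
    set vr := f v with hvr
    set Q := dotR vr vr with hQ
    have hvr0 : vr ≠ 0 := by
      intro h
      apply hv; funext i
      have := congrFun h i
      simpa [hf, hvr] using this
    have hnvr : 0 < ‖vr‖ := norm_pos_iff.mpr hvr0
    have hQpos : 0 < Q := by
      obtain ⟨i, hi⟩ : ∃ i, vr i ≠ 0 := by
        by_contra h; push_neg at h; exact hvr0 (funext h)
      exact lt_of_lt_of_le (mul_self_pos.mpr hi) (sq_le_dotR_self vr i)
    set p := (ε / (2 * ‖vr‖)) • (-vr) with hp
    have hpnorm : ‖p‖ = ε / 2 := by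
      rw [hp, norm_smul, norm_neg]
      rw [Real.norm_eq_abs, abs_of_pos (by positivity)]
      field_simp
    have hpball : p ∈ Metric.ball (0 : Fin m → ℝ) ε := by
      rw [mem_ball_zero_iff, hpnorm]
      linarith
    obtain ⟨y, hyT, hyle⟩ := exists_vertex_le T hTne vr p (hball hpball)
    obtain ⟨b, hbS, hby⟩ := Finset.mem_image.mp hyT
    have h1 : dotR (f (stp v)) vr ≤ dotR y vr := by
      rw [← hby]; exact hstpmin v b hbS
    have h2 : dotR p vr = -(ε / (2 * ‖vr‖)) * Q := by
      rw [hp]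
      rw [dotR_smul]
      have : dotR (-vr) vr = -Q := by
        have : (-vr) = (-1 : ℝ) • vr := by funext i; simp
        rw [this, dotR_smul]; ring
      rw [this]; ring
    have h3 : -(ε / (2 * ‖vr‖)) * Q ≤ -(ε/2) * Real.sqrt Q := by
      have hs : Real.sqrt Q ≤ Q / ‖vr‖ := by
        have h4 : ‖vr‖ ≤ Real.sqrt Q := norm_le_sqrt_dotR vr
        calc Real.sqrt Q = Q / Real.sqrt Q := (Real.div_sqrt).symm
          _ ≤ Q / ‖vr‖ := div_le_div_of_nonneg_left hQpos.le hnvr h4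
      have : (ε/2) * Real.sqrt Q ≤ (ε / (2 * ‖vr‖)) * Q := by
        rw [div_mul_eq_mul_div, div_mul_eq_mul_div, div_le_div_iff₀ (by norm_num) (by positivity)]
        calc ε * Real.sqrt Q * (2 * ‖vr‖) = (ε * 2) * (Real.sqrt Q * ‖vr‖) := by ring
          _ ≤ (ε * 2) * Q := by
              refine mul_le_mul_of_nonneg_left ?_ (by positivity)
              calc Real.sqrt Q * ‖vr‖ ≤ Real.sqrt Q * Real.sqrt Q :=
                    mul_le_mul_of_nonneg_left (norm_le_sqrt_dotR vr) (Real.sqrt_nonneg _)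
                _ = Q := Real.mul_self_sqrt hQpos.le
          _ = ε * Q * 2 := by ring
      linarith
    calc dotR (f (stp v)) vr ≤ dotR p vr := le_trans h1 hyle
      _ = -(ε / (2 * ‖vr‖)) * Q := h2
      _ ≤ -(ε/2) * Real.sqrt Q := h3
  -- coefficient bounds
  set B1 : ℝ := 1 + ((S.sup' hS fun b => Finset.univ.sup fun i => (b i).natAbs : ℕ) : ℝ) with hB1def
  have hB1one : (1:ℝ) ≤ B1 := by
    have : (0:ℝ) ≤ ((S.sup' hS fun b => Finset.univ.sup fun i => (b i).natAbs : ℕ) : ℝ) :=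
      Nat.cast_nonneg _
    rw [hB1def]; linarith
  have hB1 : ∀ b ∈ S, ∀ i, |f b i| ≤ B1 := by
    intro b hb i
    have h1 : |f b i| = ((b i).natAbs : ℝ) := by
      rw [show f b i = ((b i : ℤ) : ℝ) from rfl, ← Int.cast_abs, Int.abs_eq_natAbs,
        Int.cast_natCast]
    have h2 : (b i).natAbs ≤ (S.sup' hS fun b => Finset.univ.sup fun i => (b i).natAbs) := by
      refine le_trans (Finset.le_sup (f := fun i => (b i).natAbs) (Finset.mem_univ i)) ?_
      exact Finset.le_sup' (fun b => Finset.univ.sup fun i => (b i).natAbs) hb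
    rw [h1, hB1def]
    have := (Nat.cast_le (α := ℝ)).mpr h2
    linarith
  have hB1pos : (0:ℝ) < B1 := lt_of_lt_of_le one_pos hB1one
  set cst1 : ℝ := m * B1^2 with hcst1
  have hcst1nn : 0 ≤ cst1 := by positivity
  have hQb : ∀ b ∈ S, dotR (f b) (f b) ≤ cst1 := by
    intro b hb
    calc dotR (f b) (f b) = ∑ i, f b i * f b i := rfl
      _ ≤ ∑ _i : Fin m, B1^2 := by
          refine Finset.sum_le_sum fun i _ => ?_
          rw [← abs_mul_abs_self (f b i), sq]
          exact mul_le_mul (hB1 b hb i) (hB1 b hb i) (abs_nonneg _) hB1pos.le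
      _ = cst1 := by rw [Finset.sum_const, Finset.card_univ, Fintype.card_fin, nsmul_eq_mul]
  have hdotbound : ∀ b ∈ S, ∀ v : Fin m → ℤ,
      |dotR (f b) (f v)| ≤ m * B1 * Real.sqrt (dotR (f v) (f v)) := by
    intro b hb v
    calc |dotR (f b) (f v)| ≤ ∑ i, |f b i * f v i| := Finset.abs_sum_le_sum_abs _ _
      _ ≤ ∑ _i : Fin m, B1 * Real.sqrt (dotR (f v) (f v)) := by
          refine Finset.sum_le_sum fun i _ => ?_
          rw [abs_mul]
          exact mul_le_mul (hB1 b hb i) (abs_le_sqrt_dotR (f v) i) (abs_nonneg _) hB1pos.le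
      _ = m * B1 * Real.sqrt (dotR (f v) (f v)) := by
          rw [Finset.sum_const, Finset.card_univ, Fintype.card_fin, nsmul_eq_mul]; ring
  -- the walk
  set T0 : ℝ := max 1 ((cst1/ε)^2) with hT0
  have hT0nn : (0:ℝ) ≤ T0 := le_trans zero_le_one (le_max_left _ _)
  set K : ℝ := T0 + 2*(m*B1)*Real.sqrt T0 + cst1 with hK
  have hKnn : 0 ≤ K := by
    have h1 : (0:ℝ) ≤ 2*(m*B1)*Real.sqrt T0 := by positivity
    rw [hK]; linarith
  set g : ℕ → (Fin m → ℤ) := fun n => Nat.rec (0 : Fin m → ℤ) (fun _ v => v + stp v) n with hg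
  have hg0 : g 0 = 0 := rfl
  have hgsucc : ∀ n, g (n+1) = g n + stp (g n) := fun n => rfl
  have hQdef : ∀ n, dotR (f (g (n+1))) (f (g (n+1)))
      = dotR (f (g n)) (f (g n)) + 2 * dotR (f (g n)) (f (stp (g n)))
        + dotR (f (stp (g n))) (f (stp (g n))) := by
    intro n
    rw [hgsucc n, hfadd, dotR_self_add]
  have hQbound : ∀ n, dotR (f (g n)) (f (g n)) ≤ K := by
    intro n
    induction n with
    | zero =>
      have : f (g 0) = 0 := by funext i; simp [hg0, hf]
      rw [this]
      have : dotR (0 : Fin m → ℝ) 0 = 0 := by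
        unfold dotR; simp
      rw [this]; exact hKnn
    | succ k ih =>
      set v := g k with hv
      set Q := dotR (f v) (f v) with hQQ
      have hQnn : 0 ≤ Q := dotR_nonneg_self _
      by_cases hv0 : v = 0
      · have : dotR (f (g (k+1))) (f (g (k+1))) = dotR (f (stp v)) (f (stp v)) := by
          rw [hgsucc k, ← hv, hv0]
          have : (0 : Fin m → ℤ) + stp 0 = stp 0 := zero_add _
          rw [this]
        rw [this]
        refine le_trans (hQb _ (hstpS v)) ?_
        have h1 : (0:ℝ) ≤ 2*(m*B1)*Real.sqrt T0 := by positivity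
        rw [hK]; linarith
      · by_cases hQT : Q ≤ T0
        · have hd := hdotbound (stp v) (hstpS v) v
          rw [hQdef k, ← hv, ← hQQ]
          have h2 : dotR (f v) (f (stp v)) ≤ m * B1 * Real.sqrt Q := by
            rw [dotR_comm]
            exact le_trans (le_abs_self _) hd
          have h3 : Real.sqrt Q ≤ Real.sqrt T0 := Real.sqrt_le_sqrt hQT
          have h4 : m * B1 * Real.sqrt Q ≤ m * B1 * Real.sqrt T0 :=
            mul_le_mul_of_nonneg_left h3 (by positivity)
          have h5 := hQb (stp v) (hstpS v)
          rw [hK]; linarith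
        · push_neg at hQT
          have hd := hkey v hv0
          rw [hQdef k, ← hv, ← hQQ]
          have h2 : dotR (f v) (f (stp v)) ≤ -(ε/2) * Real.sqrt Q := by
            rw [dotR_comm]; exact hd
          have h5 := hQb (stp v) (hstpS v)
          have h6 : cst1 ≤ ε * Real.sqrt Q := by
            have h7 : cst1 / ε ≤ Real.sqrt T0 := by
              have : Real.sqrt ((cst1/ε)^2) ≤ Real.sqrt T0 :=
                Real.sqrt_le_sqrt (le_max_right _ _)
              rwa [Real.sqrt_sq (by positivity)] at this
            have h8 : Real.sqrt T0 ≤ Real.sqrt Q := Real.sqrt_le_sqrt hQT.le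
            have h9 : cst1 / ε ≤ Real.sqrt Q := le_trans h7 h8
            rwa [div_le_iff₀ hε, mul_comm] at h9
          linarith
  -- pigeonhole
  set M : ℤ := ⌈Real.sqrt K⌉ with hM
  have hmem : ∀ n, g n ∈ Finset.Icc (fun _ : Fin m => -M) (fun _ : Fin m => M) := by
    intro n
    rw [Finset.mem_Icc]
    have habs : ∀ i, |g n i| ≤ M := by
      intro i
      have h1 : |f (g n) i| ≤ Real.sqrt K := by
        refine le_trans (abs_le_sqrt_dotR (f (g n)) i) ?_
        exact Real.sqrt_le_sqrt (hQbound n)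
      have h2 : ((|g n i| : ℤ) : ℝ) ≤ (M : ℝ) := by
        rw [Int.cast_abs]
        exact le_trans h1 (le_trans (Int.le_ceil _) (le_refl _))
      exact_mod_cast h2
    constructor
    · intro i; have := (abs_le.mp (habs i)).1; simpa using this
    · intro i; exact (abs_le.mp (habs i)).2
  have hnotinj : ¬ Function.Injective g := by
    intro hinj
    have hfin : (Set.range g).Finite :=
      Set.Finite.subset (Finset.Icc (fun _ : Fin m => -M) (fun _ : Fin m => M)).finite_toSet
        (by rintro _ ⟨n, rfl⟩; exact hmem n)
    exact (Set.infinite_range_of_injective hinj) hfin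
  obtain ⟨i, j, hgij, hij⟩ : ∃ i j, g i = g j ∧ i ≠ j := by
    simp only [Function.Injective, not_forall] at hnotinj
    obtain ⟨i, j, h1, h2⟩ := hnotinj
    exact ⟨i, j, h1, h2⟩
  -- telescoping
  have htel : ∀ k l : ℕ, g (k + l) = g k + ∑ t : Fin l, stp (g (k + t)) := by
    intro k l
    induction l with
    | zero => simp
    | succ l ihl =>
      have h1 : k + (l+1) = (k + l) + 1 := by ring
      rw [h1, hgsucc (k+l)]
      nth_rewrite 1 [ihl]
      rw [Fin.sum_univ_castSucc]
      have h3 : ((Fin.last l : Fin (l+1)) : ℕ) = l := rfl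
      rw [h3]
      have h4 : (∑ t : Fin l, stp (g (k + ((Fin.castSucc t : Fin (l+1)) : ℕ))))
          = ∑ t : Fin l, stp (g (k + (t : ℕ))) := by
        refine Finset.sum_congr rfl fun t _ => by rw [Fin.coe_castSucc]
      rw [h4, add_assoc]
  rcases Ne.lt_or_gt hij with hlt | hlt
  · set n := j - i with hn
    have hjn : j = i + n := by omega
    refine ⟨n, by omega, fun t => ⟨stp (g (i + t)), hstpS _⟩, ?_⟩
    have := htel i n
    rw [← hjn, ← hgij] at this
    have h0 : (∑ t : Fin n, stp (g (i + t))) = 0 := by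
      have := congrArg (fun x => x - g i) this
      simpa using this.symm
    exact h0
  · set n := i - j with hn
    have hjn : i = j + n := by omega
    refine ⟨n, by omega, fun t => ⟨stp (g (j + t)), hstpS _⟩, ?_⟩
    have := htel j n
    rw [← hjn, hgij] at this
    have h0 : (∑ t : Fin n, stp (g (j + t))) = 0 := by
      have := congrArg (fun x => x - g j) this
      simpa using this.symm
    exact h0



lemma nat_semigroup_gcd (P : ℕ → Prop) (P0 : P 0) (Padd : ∀ a b, P a → P b → P (a+b))
    (n₀ : ℕ) (hn₀ : 1 ≤ n₀) (hPn₀ : P n₀) :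
    ∃ r : ℕ, 1 ≤ r ∧ (∀ n, P n → r ∣ n) ∧ ∃ N, ∀ n, N ≤ n → P (r * n) := by
  classical
  have Pmul : ∀ k x, P x → P (k * x) := by
    intro k x hx
    induction k with
    | zero => simpa using P0
    | succ j ih => rw [Nat.succ_mul]; exact Padd _ _ ih hx
  set H : AddSubgroup ℤ :=
    { carrier := {z : ℤ | ∃ a b : ℕ, P a ∧ P b ∧ z = (a : ℤ) - b}
      zero_mem' := ⟨0, 0, P0, P0, by simp⟩
      add_mem' := by
        rintro x y ⟨a, b, ha, hb, rfl⟩ ⟨a', b', ha', hb', rfl⟩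
        exact ⟨a + a', b + b', Padd _ _ ha ha', Padd _ _ hb hb', by push_cast; ring⟩
      neg_mem' := by
        rintro x ⟨a, b, ha, hb, rfl⟩
        exact ⟨b, a, hb, ha, by ring⟩ } with hH
  obtain ⟨g, hg⟩ := Int.subgroup_cyclic H
  have hmemH : ∀ z : ℤ, z ∈ H ↔ g ∣ z := by
    intro z
    rw [hg, ← AddSubgroup.zmultiples_eq_closure, Int.mem_zmultiples_iff]
  have hn₀H : (n₀ : ℤ) ∈ H := ⟨n₀, 0, hPn₀, P0, by simp⟩
  have hgne : g ≠ 0 := by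
    intro h
    rw [h] at hmemH
    have := (hmemH _).mp hn₀H
    simp at this
    omega
  set r : ℕ := g.natAbs with hr
  have hr1 : 1 ≤ r := by
    rw [hr]; omega
  have hdvd : ∀ n : ℕ, P n → r ∣ n := by
    intro n hn
    have : (n : ℤ) ∈ H := ⟨n, 0, hn, P0, by simp⟩
    have := (hmemH _).mp this
    have : (r : ℤ) ∣ (n : ℤ) := (Int.natAbs_dvd).mpr this
    exact_mod_cast this
  -- r = a - b with P a, P b
  have hrH : (r : ℤ) ∈ H := by
    rw [hmemH]
    rcases Int.natAbs_eq g with h | h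
    · exact Dvd.intro 1 (by omega)
    · exact Dvd.intro (-1) (by omega)
  obtain ⟨a, b, ha, hb, hab⟩ := hrH
  have hab' : a = b + r := by omega
  obtain ⟨q, hq⟩ := hdvd b hb
  refine ⟨r, hr1, hdvd, ?_⟩
  by_cases hq0 : q = 0
  · refine ⟨0, fun n _ => ?_⟩
    have hbr : b = 0 := by rw [hq0, mul_zero] at hq; exact hq
    have hPr : P r := by
      have := ha
      rw [hab', hbr, zero_add] at this
      exact this
    have := Pmul n r hPr
    rwa [mul_comm] at this
  · refine ⟨q * q, fun n hn => ?_⟩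
    set t := n / q with ht
    set s := n % q with hs
    have hq1 : 1 ≤ q := by omega
    have hsq : s < q := Nat.mod_lt _ (by omega)
    have hts : q ≤ t := by
      rw [ht]
      exact (Nat.le_div_iff_mul_le (by omega)).mpr hn
    have hnts : n = t * q + s := by
      rw [ht, hs, Nat.mul_comm]
      exact (Nat.div_add_mod n q).symm
    have key : r * n = (t - s) * b + s * a := by
      have h1 : t - s + s = t := by omega
      have h2 : (t - s) * b + s * a = (t - s) * b + s * b + s * r := by
        rw [hab']; ring
      rw [h2, ← Nat.add_mul, h1, hq, hnts]
      ring
    rw [key]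
    exact Padd _ _ (Pmul _ _ hb) (Pmul _ _ ha)



lemma fekete (u : ℕ → ℝ) (N : ℕ) (hN : 1 ≤ N)
    (hsuper : ∀ a b, N ≤ a → N ≤ b → u a + u b ≤ u (a + b))
    (D : ℝ) (hbd : ∀ n, N ≤ n → u n / n ≤ D) :
    ∃ L : ℝ, Tendsto (fun n : ℕ => u n / n) atTop (nhds L) := by
  classical
  set A : Set ℝ := (fun n : ℕ => u n / n) '' {n | N ≤ n} with hA
  have hAne : A.Nonempty := ⟨u N / N, N, le_refl N, rfl⟩
  have hAbdd : BddAbove A := ⟨D, by rintro x ⟨n, hn, rfl⟩; exact hbd n hn⟩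
  set L := sSup A with hL
  have hmemle : ∀ n, N ≤ n → u n / n ≤ L := fun n hn => le_csSup hAbdd ⟨n, hn, rfl⟩
  refine ⟨L, Metric.tendsto_atTop.mpr fun ε hε => ?_⟩
  obtain ⟨x, hxA, hxlt⟩ := exists_lt_of_lt_csSup hAne (show L - ε/2 < L by linarith)
  obtain ⟨k, hkN, hkx⟩ := hxA
  rw [← hkx] at hxlt
  simp only [Set.mem_setOf_eq] at hkN
  have hxlt' : L - ε/2 < u k / (k:ℝ) := hxlt
  have hk1 : 1 ≤ k := le_trans hN hkN
  have hk0 : (0:ℝ) < (k:ℝ) := by exact_mod_cast hk1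
  set a : ℝ := u k / k with ha
  have huk : u k = a * k := by rw [ha]; field_simp
  -- chain lemma
  have hchain : ∀ q s : ℕ, N ≤ s → (q:ℝ) * u k + u s ≤ u (q * k + s) := by
    intro q s hs
    induction q with
    | zero => simp
    | succ j ih =>
      have h1 : (j+1) * k + s = k + (j*k + s) := by ring
      rw [h1]
      have h2 : N ≤ j*k + s := le_trans hs (Nat.le_add_left _ _)
      calc ((j+1 : ℕ):ℝ) * u k + u s = u k + ((j:ℝ) * u k + u s) := by push_cast; ring
        _ ≤ u k + u (j*k+s) := by linarith [ih]
        _ ≤ u (k + (j*k+s)) := hsuper k _ hkN h2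
  -- min on the window
  have hIccne : (Finset.Icc N (N+k)).Nonempty := ⟨N, Finset.mem_Icc.mpr ⟨le_refl _, Nat.le_add_right _ _⟩⟩
  set B : ℝ := (Finset.Icc N (N+k)).inf' hIccne u with hB
  have hBle : ∀ s, N ≤ s → s ≤ N + k → B ≤ u s := fun s h1 h2 =>
    Finset.inf'_le u (Finset.mem_Icc.mpr ⟨h1, h2⟩)
  set E : ℝ := ((N:ℝ)+k) * |a| + |B| + 1 with hE
  have hEpos : 0 < E := by positivity
  obtain ⟨n₁, hn₁⟩ := exists_nat_gt (2*E/ε)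
  refine ⟨max N n₁, fun n hn => ?_⟩
  have hnN : N ≤ n := le_trans (le_max_left _ _) hn
  have hnn₁ : (n₁:ℝ) ≤ (n:ℝ) := by exact_mod_cast le_trans (le_max_right _ _) hn
  have hn0 : (0:ℝ) < (n:ℝ) := by
    have : 1 ≤ n := le_trans hN hnN
    exact_mod_cast this
  have hEn : E < ε/2 * n := by
    have h1 : 2*E/ε < (n:ℝ) := lt_of_lt_of_le hn₁ hnn₁
    rw [div_lt_iff₀ hε] at h1
    linarith
  -- decomposition n = q k + s
  set q : ℕ := (n - N) / k with hq
  set s : ℕ := N + (n - N) % k with hs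
  have hmod : (n - N) % k < k := Nat.mod_lt _ (by omega)
  have hqs : n = q * k + s := by
    have h := Nat.div_add_mod (n - N) k
    have h2 : q * k = k * ((n - N) / k) := Nat.mul_comm _ _
    omega
  have hsN : N ≤ s := Nat.le_add_right _ _
  have hsle : s ≤ N + k := by omega
  have hsn : s ≤ n := by omega
  -- lower bound for u n
  have h3 : (q:ℝ) * u k + u s ≤ u n := by
    have := hchain q s hsN
    rwa [← hqs] at this
  have h4 : B ≤ u s := hBle s hsN hsle
  have hqk : ((q * k : ℕ) : ℝ) = (n:ℝ) - (s:ℝ) := by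
    have h5 : q * k = n - s := by omega
    rw [h5]
    push_cast [hsn]
    ring
  have h6 : (q:ℝ) * u k = ((n:ℝ) - s) * a := by
    rw [huk, ← hqk]
    push_cast
    ring
  have h7 : ((n:ℝ) - s) * a + B ≤ u n := by
    rw [← h6]; linarith
  -- the key estimate
  have hsa : (s:ℝ) * a - B ≤ E := by
    have hs0 : (0:ℝ) ≤ (s:ℝ) := Nat.cast_nonneg _
    have hsle' : (s:ℝ) ≤ (N:ℝ) + k := by exact_mod_cast hsle
    have h8 : (s:ℝ) * a ≤ ((N:ℝ)+k) * |a| := by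
      calc (s:ℝ) * a ≤ (s:ℝ) * |a| := mul_le_mul_of_nonneg_left (le_abs_self a) hs0
        _ ≤ ((N:ℝ)+k) * |a| := mul_le_mul_of_nonneg_right hsle' (abs_nonneg a)
    have h9 : -B ≤ |B| := neg_le_abs B
    rw [hE]
    linarith
  have hlow : L - ε < u n / n := by
    rw [lt_div_iff₀ hn0]
    have hring : ((n:ℝ) - s) * a = (n:ℝ)*a - (s:ℝ)*a := by ring
    have h10 : (n:ℝ) * a - E ≤ ((n:ℝ) - s) * a + B := by
      rw [hring]; linarith
    have h11 : (L - ε/2) * n < (n:ℝ) * a := by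
      have h12 : L - ε/2 < a := by rw [ha]; exact hxlt'
      calc (L - ε/2) * n < a * n := mul_lt_mul_of_pos_right h12 hn0
        _ = (n:ℝ) * a := mul_comm _ _
    have hring2 : (L - ε) * n = (L - ε/2) * n - ε/2 * n := by ring
    rw [hring2]
    linarith
  have hhigh : u n / n ≤ L := hmemle n hnN
  rw [Real.dist_eq, abs_sub_lt_iff]
  constructor <;> linarith


end Stmt14Aux

open Stmt14Aux in
/-- For a convenient Laurent polynomial `f(x) = ∑_{b∈S} x^b` with positive
coefficients (the origin lies in the interior of the convex hull of `S`), there is a unique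
integer `r ≥ 1` such that `Cst(n) = 0` when `r ∤ n` and `Cst(rn) > 0` for all but finitely
many `n`; moreover, for this `r`, the limit `lim Cst(rn)^(1/(rn))` exists. -/
theorem stmt_14 (m : ℕ) (hm : 1 ≤ m) (S : Finset (Fin m → ℤ)) (hS : S.Nonempty)
    (hconv : (0 : Fin m → ℝ) ∈
      interior (convexHull ℝ ((fun b : Fin m → ℤ => fun i => (b i : ℝ)) '' (S : Set (Fin m → ℤ)))))
    (c : (Fin m → ℤ) → ℝ) (hc : ∀ b ∈ S, 0 < c b) :
    (∃! r : ℕ, 1 ≤ r ∧ (∀ n : ℕ, ¬ r ∣ n → Cst S c n = 0) ∧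
      (∀ᶠ n in Filter.cofinite, 0 < Cst S c (r * n))) ∧
    (∀ r : ℕ, 1 ≤ r → (∀ n : ℕ, ¬ r ∣ n → Cst S c n = 0) →
      (∀ᶠ n in Filter.cofinite, 0 < Cst S c (r * n)) →
      ∃ L : ℝ, Filter.Tendsto (fun n : ℕ => (Cst S c (r * n)) ^ (1 / ((r * n : ℕ) : ℝ)))
        Filter.atTop (nhds L)) := by
  classical
  obtain ⟨n₀, hn₀1, w, hw⟩ := exists_zero_word S hS hconv
  have hPn₀ : 0 < Cst S c n₀ := Cst_pos_of_word hc w hw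
  have Padd : ∀ a b, 0 < Cst S c a → 0 < Cst S c b → 0 < Cst S c (a+b) :=
    fun a b ha hb => lt_of_lt_of_le (mul_pos ha hb) (Cst_mul_le hc a b)
  obtain ⟨r, hr1, hdvd, N, hNall⟩ := nat_semigroup_gcd (fun n => 0 < Cst S c n)
    (by show 0 < Cst S c 0; rw [Cst_zero]; norm_num) Padd n₀ hn₀1 hPn₀
  have hzero : ∀ n, ¬ r ∣ n → Cst S c n = 0 := by
    intro n hnd
    rcases (Cst_nonneg hc n).eq_or_lt with h | h
    · exact h.symm
    · exact absurd (hdvd n h) hnd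
  have hevent : ∀ᶠ n in Filter.cofinite, 0 < Cst S c (r * n) := by
    rw [Nat.cofinite_eq_atTop, eventually_atTop]
    exact ⟨N, fun n hn => hNall n hn⟩
  constructor
  · refine ⟨r, ⟨hr1, hzero, hevent⟩, ?_⟩
    rintro r' ⟨hr'1, h1', h2'⟩
    rw [Nat.cofinite_eq_atTop, eventually_atTop] at h2'
    obtain ⟨N', hN'⟩ := h2'
    have hd1 : r ∣ r' := by
      have e1 : r ∣ r' * N' := hdvd _ (hN' N' le_rfl)
      have e2 : r ∣ r' * (N'+1) := hdvd _ (hN' _ (by omega))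
      have e3 : r' * (N'+1) - r' * N' = r' := by rw [Nat.mul_succ]; omega
      have := Nat.dvd_sub e2 e1
      rwa [e3] at this
    have hd2 : r' ∣ r := by
      have e1 : r' ∣ r * N := by
        by_contra hcon
        exact absurd (h1' _ hcon) (ne_of_gt (hNall N le_rfl))
      have e2 : r' ∣ r * (N+1) := by
        by_contra hcon
        exact absurd (h1' _ hcon) (ne_of_gt (hNall (N+1) (by omega)))
      have e3 : r * (N+1) - r * N = r := by rw [Nat.mul_succ]; omega
      have := Nat.dvd_sub e2 e1
      rwa [e3] at this
    exact Nat.dvd_antisymm hd2 hd1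
  · intro r hr1 h1 h2
    rw [Nat.cofinite_eq_atTop, eventually_atTop] at h2
    obtain ⟨N₀, hN₀⟩ := h2
    set N' : ℕ := max N₀ 1 with hN'def
    set u : ℕ → ℝ := fun n => Real.log (Cst S c (r * n)) with hu
    have hC : (0:ℝ) < ∑ b ∈ S, c b := Finset.sum_pos (fun b hb => hc b hb) hS
    have hsuper : ∀ a b, N' ≤ a → N' ≤ b → u a + u b ≤ u (a + b) := by
      intro a b haN hbN
      have hpa : 0 < Cst S c (r*a) := hN₀ a (le_trans (le_max_left _ _) haN)
      have hpb : 0 < Cst S c (r*b) := hN₀ b (le_trans (le_max_left _ _) hbN)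
      have hle : Cst S c (r*a) * Cst S c (r*b) ≤ Cst S c (r*(a+b)) := by
        have := Cst_mul_le hc (r*a) (r*b)
        rwa [← Nat.mul_add] at this
      show Real.log (Cst S c (r*a)) + Real.log (Cst S c (r*b)) ≤ Real.log (Cst S c (r*(a+b)))
      rw [← Real.log_mul (ne_of_gt hpa) (ne_of_gt hpb)]
      exact Real.log_le_log (mul_pos hpa hpb) hle
    have hbd : ∀ n, N' ≤ n → u n / n ≤ (r:ℝ) * Real.log (∑ b ∈ S, c b) := by
      intro n hn
      have hn1 : 1 ≤ n := le_trans (le_max_right _ _) hn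
      have hpos : (0:ℝ) < (n:ℝ) := by exact_mod_cast hn1
      rw [div_le_iff₀ hpos]
      have hx : Cst S c (r*n) ≤ (∑ b ∈ S, c b)^(r*n) := Cst_le_pow hc (r*n)
      have hy : u n ≤ Real.log ((∑ b ∈ S, c b)^(r*n)) :=
        Real.log_le_log (hN₀ n (le_trans (le_max_left _ _) hn)) hx
      rw [Real.log_pow] at hy
      calc u n ≤ ((r*n : ℕ):ℝ) * Real.log (∑ b ∈ S, c b) := hy
        _ = (r:ℝ) * Real.log (∑ b ∈ S, c b) * n := by push_cast; ring
    obtain ⟨L₀, hL₀⟩ := fekete u N' (le_max_right _ _) hsuper _ hbd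
    refine ⟨Real.exp (L₀ / r), ?_⟩
    have hr0 : (0:ℝ) < (r:ℝ) := by exact_mod_cast hr1
    have h3 : Filter.Tendsto (fun n : ℕ => u n / n / r) atTop (nhds (L₀ / r)) :=
      hL₀.div_const _
    have h4 : Filter.Tendsto (fun n : ℕ => Real.exp (u n / n / r)) atTop
        (nhds (Real.exp (L₀/r))) := (Real.continuous_exp.tendsto _).comp h3
    refine Filter.Tendsto.congr' ?_ h4
    rw [Filter.EventuallyEq, eventually_atTop]
    refine ⟨N', fun n hn => ?_⟩
    have hn1 : 1 ≤ n := le_trans (le_max_right _ _) hn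
    have hnpos : (0:ℝ) < (n:ℝ) := by exact_mod_cast hn1
    have hp : 0 < Cst S c (r*n) := hN₀ n (le_trans (le_max_left _ _) hn)
    rw [Real.rpow_def_of_pos hp, Real.exp_eq_exp]
    show u n / n / r = Real.log (Cst S c (r*n)) * (1 / ((r*n : ℕ):ℝ))
    have hcast : ((r*n : ℕ):ℝ) = (r:ℝ)*(n:ℝ) := by push_cast; ring
    have hun : u n = Real.log (Cst S c (r*n)) := rfl
    rw [hcast, hun, mul_one_div, div_div, mul_comm ((n:ℝ)) ((r:ℝ))]
end

section
/- Let n ≥ 4 be an even integer, let a₀ ∈ (0,1) and β ∈ (√(n−3/2), √(n−1)) be such that the real roots of the polynomial P(t) = t^{2n+2} + (n−1)·t^{2n} − 1 are exactly a₀ and −a₀, and iβ, −iβ are (purely imaginary) roots of P. Set g₀(t) = (n+1)·t^{n−1} + t^{n+1} + t^{−(n+1)}. Then: (1) for every complex root α of P with α ∉ {a₀, −a₀, iβ, −iβ}, one has |g₀(α)| < g₀(a₀); moreover g₀(a₀) = −g₀(−a₀) and g₀(a₀) < 2n+2; (2) the complex number i^{n+1}·g₀(iβ) is real, equals i^{n−1}·g₀(−iβ),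 and satisfies 2(n−1)^{(n−1)/2} < i^{n+1}·g₀(iβ) < 2(n−1)^{(n−1)/2} + 1. -/
/-!
Put `z = α²`: the roots of `P` are the solutions of `zⁿ (z + n - 1) = 1`, and on them
`g₀ α = 2 α^(n-1) (α² + n) = 2 φ(α)` with `φ t = t^(n-1) + t^(-(n+1))` (`gHalf`). Hence
`‖g₀ α‖ ≤ 2 φ(‖α‖)`, with equality at `a₀`.

Since `‖z‖ⁿ (‖z‖ + n - 1) ≥ 1 = a₀²ⁿ (a₀² + n - 1)`, every root has `‖α‖ ≥ a₀`, with equality only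
when the triangle inequality is sharp, i.e. `α = ±a₀`. If `z` lies within `1/(n-1)` of `-(n-1)`,
then `z ↦ z⁻ⁿ - (n-1)` is a contraction there, so `z = -β²` and `α = ±iβ`; otherwise
`‖α‖²ⁿ < n - 1 < a₀⁻²ⁿ`. So `a₀ < ‖α‖ < a₀⁻¹`, and strict convexity of `φ` together with
`φ(a₀⁻¹) ≤ φ(a₀)` gives `φ(‖α‖) < φ(a₀)`.

For (2), `i^(n+1) g₀(iβ) = 2 φ(β)`, which is compared with `2 √(n-1)^(n-1)` through the identity
`√(n-1)² - β² = β⁻²ⁿ`.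
-/

open Complex Set

lemma one_add_pow_le_inv_one_sub_mul {u : ℝ} (hu : 0 ≤ u) (m : ℕ) (hmu : m * u < 1) :
    (1 + u) ^ m ≤ (1 - m * u)⁻¹ := by
  rcases m.eq_zero_or_pos with rfl | hm
  · simp
  have hu1 : u ≤ 1 := by
    have : (1 : ℝ) ≤ m := by exact_mod_cast hm
    nlinarith
  rw [← one_div, le_div_iff₀ (by linarith)]
  calc (1 + u) ^ m * (1 - m * u) ≤ (1 + u) ^ m * (1 - u) ^ m := by
        gcongr
        simpa [← sub_eq_add_neg] using one_add_mul_le_pow (a := -u) (by linarith) m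
    _ = (1 - u ^ 2) ^ m := by rw [← mul_pow]; ring
    _ ≤ 1 := pow_le_one₀ (by nlinarith) (by nlinarith)

lemma norm_pow_sub_pow_le_s16 {R : Type*} [SeminormedCommRing R] [NormOneClass R] {a b : R} {M : ℝ}
    (ha : ‖a‖ ≤ M) (hb : ‖b‖ ≤ M) (q : ℕ) :
    ‖a ^ q - b ^ q‖ ≤ q * M ^ (q - 1) * ‖a - b‖ := by
  have hM : 0 ≤ M := (norm_nonneg a).trans ha
  have hterm (i : ℕ) (hi : i ∈ Finset.range q) : ‖a ^ i * b ^ (q - 1 - i)‖ ≤ M ^ (q - 1) :=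
    calc ‖a ^ i * b ^ (q - 1 - i)‖ ≤ ‖a‖ ^ i * ‖b‖ ^ (q - 1 - i) :=
          (norm_mul_le _ _).trans (by gcongr <;> exact norm_pow_le _ _)
      _ ≤ M ^ i * M ^ (q - 1 - i) := by gcongr
      _ = M ^ (q - 1) := by
          rw [← pow_add, Nat.add_sub_cancel' (Nat.le_sub_one_of_lt (Finset.mem_range.1 hi))]
  rw [← geom_sum₂_mul]
  refine (norm_mul_le _ _).trans (mul_le_mul_of_nonneg_right ?_ (norm_nonneg _))
  simpa using (norm_sum_le _ _).trans (Finset.sum_le_card_nsmul _ _ _ hterm)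

lemma norm_inv_pow_sub_inv_pow_le {𝕜 : Type*} [NormedField 𝕜] {z w : 𝕜} {A M : ℝ} (hA : 0 < A)
    (hz : ‖z‖ ∈ Icc A M) (hw : ‖w‖ ∈ Icc A M) (q : ℕ) :
    ‖(z ^ q)⁻¹ - (w ^ q)⁻¹‖ ≤ q * M ^ (q - 1) / (A ^ 2) ^ q * ‖z - w‖ := by
  have hz0 : z ≠ 0 := norm_pos_iff.1 (hA.trans_le hz.1)
  have hw0 : w ≠ 0 := norm_pos_iff.1 (hA.trans_le hw.1)
  have hM : 0 ≤ M := hA.le.trans (hz.1.trans hz.2)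
  rw [inv_sub_inv (pow_ne_zero q hz0) (pow_ne_zero q hw0), norm_div, norm_mul, norm_pow, norm_pow,
    ← norm_neg (z - w), neg_sub, div_mul_eq_mul_div, ← mul_pow]
  refine div_le_div₀ (by positivity) (norm_pow_sub_pow_le_s16 hw.2 hz.2 q) (pow_pos (pow_pos hA 2) q) ?_
  rw [sq]
  gcongr
  exacts [hz.1, hw.1]

lemma eq_norm_of_norm_add_eq {z : ℂ} {c : ℝ} (hc : 0 < c) (h : ‖z + c‖ = ‖z‖ + c) :
    z = ‖z‖ := by
  replace h : ‖z + c‖ = ‖z‖ + ‖(c : ℂ)‖ := by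
    rwa [Complex.norm_real, Real.norm_of_nonneg hc.le]
  rcases Complex.norm_add_eq_iff.1 h with hz | hc0 | harg
  · simp [hz]
  · exact absurd (Complex.ofReal_eq_zero.1 hc0) hc.ne'
  · rw [Complex.arg_ofReal_of_nonneg hc.le] at harg
    exact Complex.eq_coe_norm_of_nonneg (Complex.arg_eq_zero_iff_zero_le.1 harg)

section Field

variable {K : Type*} [Field K] {n : ℕ}

def g₀ (n : ℕ) (t : K) : K := ((n : K) + 1) * t ^ (n - 1) + t ^ (n + 1) + t ^ (-((n : ℤ) + 1))

def gHalf (n : ℕ) (t : K) : K := t ^ (n - 1) + t ^ (-((n : ℤ) + 1))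

lemma root_iff_sq_pow_mul (t : K) :
    t ^ (2 * n + 2) + ((n : K) - 1) * t ^ (2 * n) - 1 = 0 ↔
      (t ^ 2) ^ n * (t ^ 2 + ((n : K) - 1)) = 1 := by
  rw [sub_eq_zero, ← pow_mul]
  constructor <;> intro h <;> linear_combination h

lemma zpow_neg_add_one_eq (hn : n ≠ 0) {t : K} (ht : t ≠ 0) :
    t ^ (-((n : ℤ) + 1)) = t ^ (n - 1) * ((t ^ 2) ^ n)⁻¹ := by
  obtain ⟨m, rfl⟩ := Nat.exists_eq_succ_of_ne_zero hn
  rw [zpow_neg, ← pow_mul, show ((m.succ : ℤ) + 1) = ((2 * (m + 1) - m : ℕ) : ℤ) by omega,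
    zpow_natCast, pow_sub₀ _ ht (by omega)]
  simp

lemma ne_zero_of_sq_pow_mul_eq_one {t : K} (h : (t ^ 2) ^ n * (t ^ 2 + ((n : K) - 1)) = 1)
    (hn : n ≠ 0) : t ≠ 0 := by
  rintro rfl
  simp [hn] at h

lemma gHalf_eq_of_root (hn : n ≠ 0) {t : K} (h : (t ^ 2) ^ n * (t ^ 2 + ((n : K) - 1)) = 1) :
    gHalf n t = t ^ (n - 1) * (t ^ 2 + n) := by
  have ht := ne_zero_of_sq_pow_mul_eq_one h hn
  rw [gHalf, zpow_neg_add_one_eq hn ht, ← eq_inv_of_mul_eq_one_right h]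
  ring

lemma g₀_eq_two_mul_gHalf (hn : n ≠ 0) {t : K}
    (h : (t ^ 2) ^ n * (t ^ 2 + ((n : K) - 1)) = 1) : g₀ n t = 2 * gHalf n t := by
  have ht := ne_zero_of_sq_pow_mul_eq_one h hn
  rw [g₀, gHalf_eq_of_root hn h, zpow_neg_add_one_eq hn ht, ← eq_inv_of_mul_eq_one_right h]
  obtain ⟨m, rfl⟩ := Nat.exists_eq_succ_of_ne_zero hn
  simp only [Nat.succ_eq_add_one, Nat.add_sub_cancel]
  push_cast
  ring

lemma g₀_neg (hn : Even n) (hn0 : n ≠ 0) (t : K) : g₀ n (-t) = -g₀ n t := by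
  have hodd : Odd (n - 1) := Nat.Even.sub_odd (by omega) hn odd_one
  have hoddz : Odd (-((n : ℤ) + 1)) := (by exact_mod_cast hn : Even (n : ℤ)).add_one.neg
  rw [g₀, g₀, hodd.neg_pow, hn.add_one.neg_pow, hoddz.neg_zpow]
  ring

end Field

section Real

variable {n : ℕ}

lemma strictConvexOn_gHalf : StrictConvexOn ℝ (Ioi 0) (gHalf (K := ℝ) n) :=
  ((convexOn_pow (n - 1)).subset Ioi_subset_Ici_self (convex_Ioi 0)).add_strictConvexOn
    (strictConvexOn_zpow (by omega) (by omega))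

lemma gHalf_inv_le (hn : n ≠ 0) {a : ℝ} (ha : 0 < a) (ha1 : a ≤ 1) :
    gHalf n a⁻¹ ≤ gHalf n a := by
  obtain ⟨m, rfl⟩ := Nat.exists_eq_succ_of_ne_zero hn
  have hzpow (x : ℝ) : x ^ (-((m.succ : ℤ) + 1)) = (x ^ (m + 2))⁻¹ := by
    rw [zpow_neg, show ((m.succ : ℤ) + 1) = ((m + 2 : ℕ) : ℤ) by push_cast; ring, zpow_natCast]
  simp only [gHalf, Nat.succ_sub_one, hzpow, inv_pow, inv_inv]
  have key : a ^ m + (a ^ (m + 2))⁻¹ - ((a ^ m)⁻¹ + a ^ (m + 2))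
      = (1 - a ^ 2) * (a ^ m + (a ^ (m + 2))⁻¹) := by
    field_simp
    ring
  have : 0 ≤ (1 - a ^ 2) * (a ^ m + (a ^ (m + 2))⁻¹) :=
    mul_nonneg (by nlinarith) (by positivity)
  linarith

lemma gHalf_lt_of_mem_Ioo (hn : n ≠ 0) {a r : ℝ} (ha : 0 < a) (ha1 : a < 1)
    (hr : r ∈ Ioo a a⁻¹) : gHalf n r < gHalf n a := by
  have ha_lt : a < a⁻¹ := hr.1.trans hr.2
  have := (strictConvexOn_gHalf (n := n)).lt_on_openSegment ha (inv_pos.2 ha) ha_lt.ne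
    (by rwa [openSegment_eq_Ioo ha_lt])
  exact this.trans_le (max_le le_rfl (gHalf_inv_le hn ha ha1.le))

lemma g₀_lt_of_root (hn : n ≠ 0) {a : ℝ} (ha : 0 < a) (ha1 : a < 1)
    (ha_root : (a ^ 2) ^ n * (a ^ 2 + ((n : ℝ) - 1)) = 1) : g₀ n a < 2 * n + 2 := by
  rw [g₀_eq_two_mul_gHalf hn ha_root, gHalf_eq_of_root hn ha_root]
  have h1 : a ^ (n - 1) ≤ 1 := pow_le_one₀ ha.le ha1.le
  have h2 : a ^ 2 < 1 := by nlinarith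
  nlinarith [pow_pos ha (n - 1)]

lemma pow_lt_two_mul_pow (hn : 4 ≤ n) {b β : ℝ} (hb : 0 ≤ b) (hβ : 0 < β)
    (hb2 : b ^ 2 = n - 1) (hβ2 : (n : ℝ) - 3 / 2 < β ^ 2) : b ^ n < 2 * β ^ n := by
  have hn' : (4 : ℝ) ≤ n := by exact_mod_cast hn
  set ε : ℝ := (4 * n - 6)⁻¹ with hε
  have hε0 : 0 < ε := inv_pos.2 (by linarith)
  have hnε : n * ε ≤ 2 / 5 := by
    rw [hε, ← div_eq_mul_inv, div_le_iff₀ (by linarith)]; linarith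
  have hb_lt : b < (1 + ε) * β := by
    refine (pow_lt_pow_iff_left₀ hb (by positivity) two_ne_zero).1 ?_
    have h2ε : 2 * ε * ((n : ℝ) - 3 / 2) = 1 / 2 := by
      linear_combination mul_inv_cancel₀ (show (4 * n - 6 : ℝ) ≠ 0 by linarith) / 2
    rw [hb2, mul_pow]
    nlinarith [sq_nonneg ε]
  calc b ^ n ≤ ((1 + ε) * β) ^ n := pow_le_pow_left₀ hb hb_lt.le n
    _ = (1 + ε) ^ n * β ^ n := mul_pow _ _ _
    _ ≤ (1 - n * ε)⁻¹ * β ^ n := by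
        gcongr; exact one_add_pow_le_inv_one_sub_mul hε0.le n (by linarith)
    _ < 2 * β ^ n := by
        gcongr
        rw [inv_lt_comm₀ (by linarith) two_pos]; linarith

lemma rpow_sub_one_div_two (hn : 1 ≤ n) :
    ((n : ℝ) - 1) ^ (((n : ℝ) - 1) / 2) = √((n : ℝ) - 1) ^ (n - 1) := by
  rw [Real.rpow_div_two_eq_sqrt _ (by simpa using (by exact_mod_cast hn : (1 : ℝ) ≤ n)),
    ← Nat.cast_one, ← Nat.cast_sub hn, Real.rpow_natCast]

lemma sqrt_pow_lt_gHalf (hn : 4 ≤ n) {β : ℝ} (hβ : 0 < β) (hβ2 : (n : ℝ) - 3 / 2 < β ^ 2)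
    (hβ_root : (β ^ 2) ^ n * ((n : ℝ) - 1 - β ^ 2) = 1) :
    √((n : ℝ) - 1) ^ (n - 1) < gHalf n β := by
  have hn' : (4 : ℝ) ≤ n := by exact_mod_cast hn
  set b := √((n : ℝ) - 1)
  have hb2 : b ^ 2 = n - 1 := Real.sq_sqrt (by linarith)
  have hb : 0 ≤ b := Real.sqrt_nonneg _
  have hgap : (b - β) * (b + β) = ((β ^ 2) ^ n)⁻¹ := by
    rw [← eq_inv_of_mul_eq_one_right hβ_root, ← hb2]; ring
  have hβb : β < b := by
    refine (pow_lt_pow_iff_left₀ hβ.le hb two_ne_zero).1 ?_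
    nlinarith [inv_pos.2 (pow_pos (pow_pos hβ 2) n)]
  have hmvt : b ^ (n - 1) - β ^ (n - 1) ≤ (b - β) * ((n : ℝ) - 1) * b ^ (n - 2) := by
    have := abs_pow_sub_pow_le b β (n - 1)
    rwa [abs_of_pos (sub_pos.2 hβb), abs_of_nonneg hb, abs_of_pos hβ, max_eq_left hβb.le,
      Nat.cast_sub (by omega), Nat.cast_one, Nat.sub_sub, abs_of_pos] at this
    exact sub_pos.2 (pow_lt_pow_left₀ hβb hβ.le (by omega))
  have hkey : ((n : ℝ) - 1) * b ^ (n - 2) < (b + β) * β ^ (n - 1) := by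
    have hbn : ((n : ℝ) - 1) * b ^ (n - 2) = b ^ n := by
      rw [← hb2, ← pow_add]; congr 1; omega
    have hβn : β ^ n = β * β ^ (n - 1) := by rw [← pow_succ']; congr 1; omega
    rw [hbn]
    calc b ^ n < 2 * β ^ n := pow_lt_two_mul_pow hn hb hβ hb2 hβ2
      _ = (β + β) * β ^ (n - 1) := by rw [hβn]; ring
      _ < (b + β) * β ^ (n - 1) := by gcongr
  rw [gHalf, zpow_neg_add_one_eq (by omega) hβ.ne', ← hgap]
  nlinarith [sub_pos.2 hβb]

lemma gHalf_lt_sqrt_pow_add_half (hn : 4 ≤ n) {β : ℝ} (hβ : 0 < β)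
    (hβ2 : (n : ℝ) - 3 / 2 < β ^ 2) (hβ2' : β ^ 2 < (n : ℝ) - 1) :
    gHalf n β < √((n : ℝ) - 1) ^ (n - 1) + 1 / 2 := by
  have hn' : (4 : ℝ) ≤ n := by exact_mod_cast hn
  have hβb : β < √((n : ℝ) - 1) := Real.lt_sqrt_of_sq_lt hβ2'
  have hpow : 2 < β ^ (n + 1) :=
    calc (2 : ℝ) < (β ^ 2) ^ 2 := by nlinarith
      _ ≤ β ^ (n + 1) := by
          rw [← pow_mul]; exact pow_le_pow_right₀ (by nlinarith) (by omega)
  have hzpow : β ^ (-((n : ℤ) + 1)) = (β ^ (n + 1))⁻¹ := by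
    rw [zpow_neg, ← Nat.cast_succ, zpow_natCast]
  rw [gHalf, hzpow]
  have := pow_lt_pow_left₀ hβb hβ.le (show n - 1 ≠ 0 by omega)
  have : (β ^ (n + 1))⁻¹ < 1 / 2 := by
    rw [inv_lt_comm₀ (by linarith) (by norm_num)]; linarith
  linarith

end Real

section Complex

variable {n : ℕ}

lemma norm_natCast_sub_one (hn : 1 ≤ n) : ‖(n : ℂ) - 1‖ = (n : ℝ) - 1 := by
  rw [← Nat.cast_one, ← Nat.cast_sub hn, Complex.norm_natCast, Nat.cast_sub hn, Nat.cast_one]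

lemma norm_pow_mul_norm_add_eq_one {z : ℂ} (hz : z ^ n * (z + ((n : ℂ) - 1)) = 1) :
    ‖z‖ ^ n * ‖z + ((n : ℂ) - 1)‖ = 1 := by
  simpa using congrArg norm hz

lemma norm_g₀_le (hn : n ≠ 0) {α : ℂ} (h : (α ^ 2) ^ n * (α ^ 2 + ((n : ℂ) - 1)) = 1) :
    ‖g₀ n α‖ ≤ 2 * gHalf n ‖α‖ := by
  have hα : ‖α‖ ≠ 0 := norm_ne_zero_iff.2 (ne_zero_of_sq_pow_mul_eq_one h hn)
  have hnorm : ‖α ^ 2 + ((n : ℂ) - 1)‖ = ((‖α‖ ^ 2) ^ n)⁻¹ := by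
    rw [← norm_pow, eq_inv_of_mul_eq_one_right (norm_pow_mul_norm_add_eq_one h)]
  rw [g₀_eq_two_mul_gHalf hn h, gHalf_eq_of_root hn h, gHalf, zpow_neg_add_one_eq hn hα,
    show α ^ 2 + n = (α ^ 2 + ((n : ℂ) - 1)) + 1 by ring]
  calc ‖2 * (α ^ (n - 1) * (α ^ 2 + ((n : ℂ) - 1) + 1))‖
      ≤ 2 * (‖α‖ ^ (n - 1) * (‖α ^ 2 + ((n : ℂ) - 1)‖ + 1)) := by
        rw [norm_mul, norm_mul, norm_pow, Complex.norm_two]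
        gcongr
        exact norm_add_le _ _ |>.trans_eq (by rw [norm_one])
    _ = 2 * (‖α‖ ^ (n - 1) + ‖α‖ ^ (n - 1) * ((‖α‖ ^ 2) ^ n)⁻¹) := by rw [hnorm]; ring

lemma lt_norm_or_eq_of_root (hn : 2 ≤ n) {s : ℝ} (hs : 0 < s)
    (hs_root : s ^ n * (s + ((n : ℝ) - 1)) = 1) {z : ℂ}
    (hz : z ^ n * (z + ((n : ℂ) - 1)) = 1) : s < ‖z‖ ∨ z = s := by
  have hn' : (2 : ℝ) ≤ n := by exact_mod_cast hn
  have hnorm := norm_pow_mul_norm_add_eq_one hz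
  have htri : ‖z + ((n : ℂ) - 1)‖ ≤ ‖z‖ + ((n : ℝ) - 1) :=
    (norm_add_le _ _).trans_eq (by rw [norm_natCast_sub_one (by omega)])
  rcases lt_trichotomy s ‖z‖ with hlt | heq | hgt
  · exact .inl hlt
  · right
    have h : ‖z + (((n : ℝ) - 1 : ℝ) : ℂ)‖ = ‖z‖ + ((n : ℝ) - 1) := by
      push_cast
      refine mul_left_cancel₀ (pow_ne_zero n (hs.trans_eq heq).ne') ?_
      rw [hnorm, ← heq, hs_root]
    rw [eq_norm_of_norm_add_eq (by linarith) h, ← heq]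
  · have hle := hnorm.symm.le.trans (mul_le_mul_of_nonneg_left htri (by positivity))
    have hlt : ‖z‖ ^ n * (‖z‖ + ((n : ℝ) - 1)) < s ^ n * (s + ((n : ℝ) - 1)) :=
      mul_lt_mul'' (pow_lt_pow_left₀ hgt (norm_nonneg _) (by omega)) (by linarith)
        (by positivity) (by linarith [norm_nonneg z])
    linarith

lemma norm_lt_inv_of_root_far (hn : 2 ≤ n) {s : ℝ} (hs : 0 < s)
    (hs_root : s ^ n * (s + ((n : ℝ) - 1)) = 1) {z : ℂ}
    (hz : z ^ n * (z + ((n : ℂ) - 1)) = 1) (hfar : ((n : ℝ) - 1)⁻¹ < ‖z + ((n : ℂ) - 1)‖) :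
    ‖z‖ < s⁻¹ := by
  have hn' : (2 : ℝ) ≤ n := by exact_mod_cast hn
  have hnorm := norm_pow_mul_norm_add_eq_one hz
  refine lt_of_pow_lt_pow_left₀ n (by positivity) ?_
  calc ‖z‖ ^ n = ‖z + ((n : ℂ) - 1)‖⁻¹ := eq_inv_of_mul_eq_one_left hnorm
    _ < (n : ℝ) - 1 := (inv_lt_comm₀ ((inv_pos.2 (by linarith)).trans hfar) (by linarith)).2 hfar
    _ < s + ((n : ℝ) - 1) := by linarith
    _ = (s⁻¹) ^ n := by rw [inv_pow, eq_inv_of_mul_eq_one_right hs_root]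

lemma norm_mem_Icc_of_near (hn : 4 ≤ n) {z : ℂ}
    (hz : ‖z + ((n : ℂ) - 1)‖ ≤ ((n : ℝ) - 1)⁻¹) : ‖z‖ ∈ Icc ((n : ℝ) - 3 / 2) n := by
  have hn' : (4 : ℝ) ≤ n := by exact_mod_cast hn
  have hc := norm_natCast_sub_one (n := n) (by omega)
  have hinv : ((n : ℝ) - 1)⁻¹ ≤ 1 / 2 := by
    rw [inv_le_comm₀ (by linarith) (by norm_num)]; linarith
  have h1 := norm_sub_le (z + ((n : ℂ) - 1)) z
  have h2 := norm_sub_le (z + ((n : ℂ) - 1)) ((n : ℂ) - 1)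
  simp only [add_sub_cancel_left, add_sub_cancel_right, hc] at h1 h2
  constructor <;> linarith

lemma eq_of_root_near (hn : 4 ≤ n) {z w : ℂ}
    (hz : z ^ n * (z + ((n : ℂ) - 1)) = 1) (hw : w ^ n * (w + ((n : ℂ) - 1)) = 1)
    (hz' : ‖z + ((n : ℂ) - 1)‖ ≤ ((n : ℝ) - 1)⁻¹) (hw' : ‖w + ((n : ℂ) - 1)‖ ≤ ((n : ℝ) - 1)⁻¹) :
    z = w := by
  have hn' : (4 : ℝ) ≤ n := by exact_mod_cast hn
  have hsub : z - w = (z ^ n)⁻¹ - (w ^ n)⁻¹ := by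
    rw [← eq_inv_of_mul_eq_one_right hz, ← eq_inv_of_mul_eq_one_right hw]; ring
  -- roots near `-(n - 1)` are fixed points of `z ↦ z⁻ⁿ - (n - 1)`, a contraction there
  have hK : (n : ℝ) * n ^ (n - 1) / (((n : ℝ) - 3 / 2) ^ 2) ^ n < 1 := by
    rw [← pow_succ', Nat.sub_add_cancel (by omega), div_lt_one (pow_pos (by nlinarith) n)]
    exact pow_lt_pow_left₀ (by nlinarith) (by positivity) (by omega)
  have hle : ‖z - w‖ ≤ (n : ℝ) * n ^ (n - 1) / (((n : ℝ) - 3 / 2) ^ 2) ^ n * ‖z - w‖ := by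
    conv_lhs => rw [hsub]
    exact norm_inv_pow_sub_inv_pow_le (by linarith) (norm_mem_Icc_of_near hn hz')
      (norm_mem_Icc_of_near hn hw') n
  have : ‖z - w‖ = 0 := by nlinarith [norm_nonneg (z - w)]
  exact sub_eq_zero.1 (norm_eq_zero.1 this)

lemma norm_add_le_inv_of_root (hn : 2 ≤ n) {w : ℂ} (hw : w ^ n * (w + ((n : ℂ) - 1)) = 1)
    (hw1 : 1 ≤ ‖w‖) (hwn : (n : ℝ) - 1 ≤ ‖w‖ ^ 2) :
    ‖w + ((n : ℂ) - 1)‖ ≤ ((n : ℝ) - 1)⁻¹ := by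
  have hnorm := norm_pow_mul_norm_add_eq_one hw
  rw [eq_inv_of_mul_eq_one_right hnorm]
  have hn' : (2 : ℝ) ≤ n := by exact_mod_cast hn
  exact inv_anti₀ (by linarith) (hwn.trans (pow_le_pow_right₀ hw1 hn))

lemma norm_mem_Ioo_of_root (hn : 4 ≤ n) {a β : ℝ} (ha : 0 < a)
    (ha_root : (a ^ 2) ^ n * (a ^ 2 + ((n : ℝ) - 1)) = 1) (hβ : (n : ℝ) - 3 / 2 < β ^ 2)
    (hβ_root : ((I * β) ^ 2) ^ n * ((I * β) ^ 2 + ((n : ℂ) - 1)) = 1) {α : ℂ}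
    (hα : (α ^ 2) ^ n * (α ^ 2 + ((n : ℂ) - 1)) = 1) (h₁ : α ≠ a) (h₂ : α ≠ -a)
    (h₃ : α ≠ I * β) (h₄ : α ≠ -(I * β)) : ‖α‖ ∈ Ioo a a⁻¹ := by
  have hn' : (4 : ℝ) ≤ n := by exact_mod_cast hn
  have ha2 : (0 : ℝ) < a ^ 2 := by positivity
  constructor
  · rcases lt_norm_or_eq_of_root (by omega) ha2 ha_root hα with hlt | heq
    · rw [norm_pow] at hlt
      exact (pow_lt_pow_iff_left₀ ha.le (norm_nonneg _) two_ne_zero).1 hlt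
    · push_cast at heq
      rcases sq_eq_sq_iff_eq_or_eq_neg.1 heq with h | h <;> contradiction
  · by_cases hnear : ‖α ^ 2 + ((n : ℂ) - 1)‖ ≤ ((n : ℝ) - 1)⁻¹
    · have hIβ : ‖(I * β) ^ 2‖ = β ^ 2 := by simp
      have hβnear := norm_add_le_inv_of_root (by omega) hβ_root (by rw [hIβ]; linarith)
        (by rw [hIβ]; nlinarith)
      rcases sq_eq_sq_iff_eq_or_eq_neg.1 (eq_of_root_near hn hα hβ_root hnear hβnear)
        with h | h <;> contradiction
    · have hlt := norm_lt_inv_of_root_far (by omega) ha2 ha_root hα (not_le.1 hnear)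
      rw [norm_pow, ← inv_pow] at hlt
      exact (pow_lt_pow_iff_left₀ (norm_nonneg _) (by positivity) two_ne_zero).1 hlt

lemma I_pow_succ_mul_gHalf_I_mul (hn : Even n) (hn0 : n ≠ 0) (x : ℂ) :
    I ^ (n + 1) * gHalf n (I * x) = gHalf n x := by
  have hI2n : I ^ (n + 1) * I ^ (n - 1) = 1 := by
    rw [← pow_add, show n + 1 + (n - 1) = 2 * n by omega, pow_mul, I_sq, hn.neg_one_pow]
  have hIzpow : I ^ (n + 1) * I ^ (-((n : ℤ) + 1)) = 1 := by
    rw [zpow_neg, ← Nat.cast_succ, zpow_natCast, mul_inv_cancel₀ (pow_ne_zero _ I_ne_zero)]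
  rw [gHalf, gHalf, mul_pow, mul_zpow, mul_add, ← mul_assoc, ← mul_assoc, hI2n, hIzpow,
    one_mul, one_mul]

lemma I_pow_succ_mul_g₀_eq (hn : Even n) (hn0 : n ≠ 0) (x : ℂ) :
    I ^ (n + 1) * g₀ n x = I ^ (n - 1) * g₀ n (-x) := by
  rw [g₀_neg hn hn0, show n + 1 = n - 1 + 2 by omega, pow_add, I_sq]
  ring

lemma real_root_of_I_mul (hn : Even n) {β : ℝ}
    (h : ((I * β) ^ 2) ^ n * ((I * β) ^ 2 + ((n : ℂ) - 1)) = 1) :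
    (β ^ 2) ^ n * ((n : ℝ) - 1 - β ^ 2) = 1 := by
  rw [mul_pow, I_sq, neg_one_mul, hn.neg_pow] at h
  exact_mod_cast (show ((β : ℂ) ^ 2) ^ n * ((n : ℂ) - 1 - (β : ℂ) ^ 2) = 1 by
    linear_combination h)

end Complex

theorem stmt_16_general (n : ℕ) (hn : 4 ≤ n) (hne : Even n)
    (a0 : ℝ) (ha0 : a0 ∈ Set.Ioo (0 : ℝ) 1)
    (β : ℝ) (hβ : β ∈ Set.Ioo (Real.sqrt ((n : ℝ) - 3 / 2)) (Real.sqrt ((n : ℝ) - 1)))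
    (hreal : ∀ t : ℝ, t ^ (2 * n + 2) + ((n : ℝ) - 1) * t ^ (2 * n) - 1 = 0 ↔
      t = a0 ∨ t = -a0)
    (hI : (Complex.I * β) ^ (2 * n + 2) + ((n : ℂ) - 1) * (Complex.I * β) ^ (2 * n) - 1 = 0) :
    ((∀ α : ℂ, α ^ (2 * n + 2) + ((n : ℂ) - 1) * α ^ (2 * n) - 1 = 0 →
        α ≠ (a0 : ℂ) → α ≠ (-a0 : ℝ) → α ≠ Complex.I * β → α ≠ -(Complex.I * β) →
        ‖((n : ℂ) + 1) * α ^ (n - 1) + α ^ (n + 1) + α ^ (-((n : ℤ) + 1))‖ <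
          ((n : ℝ) + 1) * a0 ^ (n - 1) + a0 ^ (n + 1) + a0 ^ (-((n : ℤ) + 1))) ∧
      ((n : ℝ) + 1) * a0 ^ (n - 1) + a0 ^ (n + 1) + a0 ^ (-((n : ℤ) + 1)) =
        -(((n : ℝ) + 1) * (-a0) ^ (n - 1) + (-a0) ^ (n + 1) + (-a0) ^ (-((n : ℤ) + 1))) ∧
      ((n : ℝ) + 1) * a0 ^ (n - 1) + a0 ^ (n + 1) + a0 ^ (-((n : ℤ) + 1)) < 2 * n + 2) ∧
    (∃ v : ℝ,
      Complex.I ^ (n + 1) * (((n : ℂ) + 1) * (Complex.I * β) ^ (n - 1)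
          + (Complex.I * β) ^ (n + 1) + (Complex.I * β) ^ (-((n : ℤ) + 1))) = (v : ℂ) ∧
      Complex.I ^ (n + 1) * (((n : ℂ) + 1) * (Complex.I * β) ^ (n - 1)
          + (Complex.I * β) ^ (n + 1) + (Complex.I * β) ^ (-((n : ℤ) + 1))) =
        Complex.I ^ (n - 1) * (((n : ℂ) + 1) * (-(Complex.I * β)) ^ (n - 1)
          + (-(Complex.I * β)) ^ (n + 1) + (-(Complex.I * β)) ^ (-((n : ℤ) + 1))) ∧
      2 * ((n : ℝ) - 1) ^ (((n : ℝ) - 1) / 2) < v ∧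
      v < 2 * ((n : ℝ) - 1) ^ (((n : ℝ) - 1) / 2) + 1) := by
  obtain ⟨ha, ha1⟩ := ha0
  have hn0 : n ≠ 0 := by omega
  have hβ0 : 0 < β := (Real.sqrt_nonneg _).trans_lt hβ.1
  have hβ_lo : (n : ℝ) - 3 / 2 < β ^ 2 := (Real.sqrt_lt' hβ0).1 hβ.1
  have hβ_hi : β ^ 2 < (n : ℝ) - 1 := (Real.lt_sqrt hβ0.le).1 hβ.2
  have ha_root := (root_iff_sq_pow_mul a0).1 ((hreal a0).2 (.inl rfl))
  have hIβ_root := (root_iff_sq_pow_mul _).1 hI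
  refine ⟨⟨fun α hα h₁ h₂ h₃ h₄ => ?_, ?_, g₀_lt_of_root hn0 ha ha1 ha_root⟩,
    2 * gHalf n β, ?_, I_pow_succ_mul_g₀_eq hne hn0 _, ?_, ?_⟩
  · have hα' := (root_iff_sq_pow_mul α).1 hα
    have hloc := norm_mem_Ioo_of_root hn ha ha_root hβ_lo hIβ_root hα' h₁
      (by simpa using h₂) h₃ h₄
    calc ‖g₀ n α‖ ≤ 2 * gHalf n ‖α‖ := norm_g₀_le hn0 hα'
      _ < 2 * gHalf n a0 := by gcongr; exact gHalf_lt_of_mem_Ioo hn0 ha ha1 hloc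
      _ = g₀ n a0 := (g₀_eq_two_mul_gHalf hn0 ha_root).symm
  · show g₀ n a0 = -g₀ n (-a0)
    rw [g₀_neg hne hn0, neg_neg]
  · show I ^ (n + 1) * g₀ n (I * β) = _
    rw [g₀_eq_two_mul_gHalf hn0 hIβ_root, mul_left_comm, I_pow_succ_mul_gHalf_I_mul hne hn0]
    simp [gHalf]
  · rw [rpow_sub_one_div_two (by omega)]
    linarith [sqrt_pow_lt_gHalf hn hβ0 hβ_lo (real_root_of_I_mul hne hIβ_root)]
  · rw [rpow_sub_one_div_two (by omega)]
    linarith [gHalf_lt_sqrt_pow_add_half hn hβ0 hβ_lo hβ_hi]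

/-- Let `n ≥ 4` be even, `a₀ ∈ (0,1)`, `β ∈ (√(n−3/2), √(n−1))` with the real
roots of `P(t) = t^(2n+2) + (n−1)t^(2n) − 1` exactly `±a₀`, and `±iβ` roots of `P`. Set
`g₀(t) = (n+1)t^(n−1) + t^(n+1) + t^(−(n+1))`. Then (1) every complex root
`α ∉ {a₀, −a₀, iβ, −iβ}` satisfies `|g₀(α)| < g₀(a₀)`; moreover `g₀(a₀) = −g₀(−a₀)` and
`g₀(a₀) < 2n+2`; and (2) `i^(n+1)·g₀(iβ)` is real, equals `i^(n−1)·g₀(−iβ)`, and lies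
strictly between `2(n−1)^((n−1)/2)` and `2(n−1)^((n−1)/2) + 1`. -/
theorem stmt_16 (n : ℕ) (hn : 4 ≤ n) (hne : Even n)
    (a0 : ℝ) (ha0 : a0 ∈ Set.Ioo (0 : ℝ) 1)
    (β : ℝ) (hβ : β ∈ Set.Ioo (Real.sqrt ((n : ℝ) - 3 / 2)) (Real.sqrt ((n : ℝ) - 1)))
    (hreal : ∀ t : ℝ, t ^ (2 * n + 2) + ((n : ℝ) - 1) * t ^ (2 * n) - 1 = 0 ↔
      t = a0 ∨ t = -a0)
    (hI : (Complex.I * β) ^ (2 * n + 2) + ((n : ℂ) - 1) * (Complex.I * β) ^ (2 * n) - 1 = 0)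
    (hI' : (-(Complex.I * β)) ^ (2 * n + 2)
      + ((n : ℂ) - 1) * (-(Complex.I * β)) ^ (2 * n) - 1 = 0) :
    ((∀ α : ℂ, α ^ (2 * n + 2) + ((n : ℂ) - 1) * α ^ (2 * n) - 1 = 0 →
        α ≠ (a0 : ℂ) → α ≠ (-a0 : ℝ) → α ≠ Complex.I * β → α ≠ -(Complex.I * β) →
        ‖((n : ℂ) + 1) * α ^ (n - 1) + α ^ (n + 1) + α ^ (-((n : ℤ) + 1))‖ <
          ((n : ℝ) + 1) * a0 ^ (n - 1) + a0 ^ (n + 1) + a0 ^ (-((n : ℤ) + 1))) ∧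
      ((n : ℝ) + 1) * a0 ^ (n - 1) + a0 ^ (n + 1) + a0 ^ (-((n : ℤ) + 1)) =
        -(((n : ℝ) + 1) * (-a0) ^ (n - 1) + (-a0) ^ (n + 1) + (-a0) ^ (-((n : ℤ) + 1))) ∧
      ((n : ℝ) + 1) * a0 ^ (n - 1) + a0 ^ (n + 1) + a0 ^ (-((n : ℤ) + 1)) < 2 * n + 2) ∧
    (∃ v : ℝ,
      Complex.I ^ (n + 1) * (((n : ℂ) + 1) * (Complex.I * β) ^ (n - 1)
          + (Complex.I * β) ^ (n + 1) + (Complex.I * β) ^ (-((n : ℤ) + 1))) = (v : ℂ) ∧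
      Complex.I ^ (n + 1) * (((n : ℂ) + 1) * (Complex.I * β) ^ (n - 1)
          + (Complex.I * β) ^ (n + 1) + (Complex.I * β) ^ (-((n : ℤ) + 1))) =
        Complex.I ^ (n - 1) * (((n : ℂ) + 1) * (-(Complex.I * β)) ^ (n - 1)
          + (-(Complex.I * β)) ^ (n + 1) + (-(Complex.I * β)) ^ (-((n : ℤ) + 1))) ∧
      2 * ((n : ℝ) - 1) ^ (((n : ℝ) - 1) / 2) < v ∧
      v < 2 * ((n : ℝ) - 1) ^ (((n : ℝ) - 1) / 2) + 1) :=
  stmt_16_general n hn hne a0 ha0 β hβ hreal hI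
end

section
/- For every integer m ≥ 1, the polynomial t^{2m+2} + 2m·t^{2m+1} − 1 is squarefree over ℂ, and there exist real numbers a_{1+} ∈ (0,1) and a_{1−} ∈ (−2m−1, −2m) such that a real number t satisfies t^{2m+2} + 2m·t^{2m+1} = 1 if and only if t = a_{1+} or t = a_{1−}. -/
open Polynomial

lemma sq17_cx (m : ℕ) (hm : 1 ≤ m) :
    Squarefree ((X : ℂ[X]) ^ (2 * m + 2) + C ((2 * m : ℕ) : ℂ) * X ^ (2 * m + 1) - 1) := by
  rw [← PerfectField.separable_iff_squarefree, separable_def,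
    Polynomial.isCoprime_iff_aeval_ne_zero_of_isAlgClosed (k := ℂ) ℂ]
  intro z
  by_contra h
  push_neg at h
  obtain ⟨h1, h2⟩ := h
  simp only [map_sub, map_add, map_mul, map_pow, aeval_X, aeval_C, aeval_one,
    map_one, derivative_sub, derivative_add, derivative_one, derivative_mul,
    derivative_C, derivative_natCast, derivative_X_pow, zero_mul, zero_add, sub_zero,
    map_natCast] at h1 h2
  have hz : z ≠ 0 := by
    rintro rfl
    simp [pow_succ] at h1
  have hM1 : (1:ℝ) ≤ (m:ℝ) := by exact_mod_cast hm
  have h3 : (2*(m:ℂ)+2) * z + (2*(m:ℂ)) * (2*(m:ℂ)+1) = 0 := by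
    have hzp : z ^ (2*m) ≠ 0 := pow_ne_zero _ hz
    have key : z ^ (2*m) * ((2*(m:ℂ)+2) * z + (2*(m:ℂ)) * (2*(m:ℂ)+1)) = 0 := by
      push_cast at h2
      rw [← h2]; ring
    rcases mul_eq_zero.1 key with h | h
    · exact absurd h hzp
    · exact h
  set M : ℝ := (m:ℝ) with hMdef
  set r : ℝ := -(2*M*(2*M+1))/(2*M+2) with hr
  have hdR : (2*M+2) ≠ 0 := by linarith
  have hdC : (2*(m:ℂ)+2) ≠ 0 := by
    intro h
    have : ((2*M+2 : ℝ) : ℂ) = 0 := by push_cast [hMdef]; linear_combination h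
    exact hdR (by exact_mod_cast this)
  have hzr : z = (r : ℂ) := by
    have : (r : ℂ) = -(2*(m:ℂ)*(2*(m:ℂ)+1))/(2*(m:ℂ)+2) := by
      rw [hr, hMdef]; push_cast; ring
    rw [this, eq_div_iff hdC]
    linear_combination h3
  have hreal : r ^ (2*m+2) + 2*M*r^(2*m+1) - 1 = 0 := by
    rw [hzr] at h1
    have : ((r ^ (2*m+2) + 2*M*r^(2*m+1) - 1 : ℝ) : ℂ) = 0 := by
      push_cast [hMdef]
      push_cast at h1
      linear_combination h1
    exact_mod_cast this
  have hrkey : r * (2*M+2) = -(2*M*(2*M+1)) := by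
    rw [hr]; field_simp
  have hrneg : r < 0 := by nlinarith
  have hrgt : r + 2*M > 0 := by nlinarith
  have hodd : Odd (2*m+1) := odd_two_mul_add_one m
  have hpow : r ^ (2*m+1) < 0 := hodd.pow_neg hrneg
  have : r ^ (2*m+2) + 2*M*r^(2*m+1) = r^(2*m+1) * (r + 2*M) := by ring
  nlinarith [mul_neg_of_neg_of_pos hpow hrgt]

lemma sq17_real (m : ℕ) (hm : 1 ≤ m) :
    ∃ a1p ∈ Set.Ioo (0 : ℝ) 1, ∃ a1m ∈ Set.Ioo (-(2 * (m : ℝ)) - 1) (-(2 * (m : ℝ))),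
      ∀ t : ℝ, t ^ (2 * m + 2) + 2 * (m : ℝ) * t ^ (2 * m + 1) = 1 ↔
        t = a1p ∨ t = a1m := by
  have hM1 : (1:ℝ) ≤ (m:ℝ) := by exact_mod_cast hm
  set M : ℝ := (m:ℝ) with hMdef
  set F : ℝ → ℝ := fun t => t ^ (2*m+1) * (t + 2*M) with hF
  have hFeq : ∀ t : ℝ, t ^ (2*m+2) + 2*M*t^(2*m+1) = F t := by
    intro t; rw [hF]; ring
  have hcont : Continuous F := by fun_prop
  have hmono : StrictMonoOn F (Set.Ici 0) := by
    intro a ha b hb hab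
    simp only [Set.mem_Ici] at ha hb
    exact mul_lt_mul' (pow_le_pow_left₀ ha hab.le _) (by linarith)
      (by linarith) (pow_pos (lt_of_le_of_lt ha hab) _)
  have hFswap : ∀ t : ℝ, F t = (-t) ^ (2*m+1) * (-t - 2*M) := by
    intro t
    rw [hF, (odd_two_mul_add_one m).neg_pow]
    ring
  have hanti : StrictAntiOn F (Set.Iic (-(2*M))) := by
    intro a ha b hb hab
    simp only [Set.mem_Iic] at ha hb
    rw [hFswap a, hFswap b]
    exact mul_lt_mul' (pow_le_pow_left₀ (by linarith) (by linarith) _) (by linarith)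
      (by linarith) (pow_pos (by linarith) _)
  have hiv1 : (1:ℝ) ∈ Set.Ioo (F 0) (F 1) := by
    constructor
    · rw [hF]; simp [pow_succ]
    · rw [hF]; simp only [one_pow, one_mul]; linarith
  obtain ⟨a1p, hap, hFap⟩ := intermediate_value_Ioo (by norm_num : (0:ℝ) ≤ 1)
    hcont.continuousOn hiv1
  have hFb : F (-(2*M)) = 0 := by rw [hF]; simp
  have hFa : F (-(2*M)-1) = (2*M+1)^(2*m+1) := by
    rw [hFswap]; ring_nf
  have hiv2 : (1:ℝ) ∈ Set.Ioo (F (-(2*M))) (F (-(2*M)-1)) := by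
    rw [hFb, hFa]
    exact ⟨one_pos, one_lt_pow₀ (by linarith) (by omega)⟩
  obtain ⟨a1m, ham, hFam⟩ := intermediate_value_Ioo' (by linarith : -(2*M)-1 ≤ -(2*M))
    hcont.continuousOn hiv2
  refine ⟨a1p, hap, a1m, ⟨by linarith [ham.1], ham.2⟩, fun t => ?_⟩
  rw [hFeq]
  constructor
  · intro ht
    rcases le_or_gt 0 t with h0 | h0
    · left
      exact hmono.injOn h0 (le_of_lt hap.1) (by rw [ht, hFap])
    rcases le_or_gt t (-(2*M)) with h1 | h1
    · right
      exact hanti.injOn h1 (le_of_lt ham.2) (by rw [ht, hFam])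
    · exfalso
      have : F t < 0 := mul_neg_of_neg_of_pos ((odd_two_mul_add_one m).pow_neg h0)
        (by linarith)
      linarith
  · rintro (rfl | rfl)
    · exact hFap
    · exact hFam

/-- For every integer `m ≥ 1`, the polynomial `t^(2m+2) + 2m·t^(2m+1) − 1` is
squarefree over ℂ, and there exist `a₁₊ ∈ (0,1)` and `a₁₋ ∈ (−2m−1, −2m)` such that a real
`t` satisfies `t^(2m+2) + 2m·t^(2m+1) = 1` iff `t = a₁₊` or `t = a₁₋`. -/
theorem stmt_17 (m : ℕ) (hm : 1 ≤ m) :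
    Squarefree ((X : ℂ[X]) ^ (2 * m + 2) + C ((2 * m : ℕ) : ℂ) * X ^ (2 * m + 1) - 1) ∧
    ∃ a1p ∈ Set.Ioo (0 : ℝ) 1, ∃ a1m ∈ Set.Ioo (-(2 * (m : ℝ)) - 1) (-(2 * (m : ℝ))),
      ∀ t : ℝ, t ^ (2 * m + 2) + 2 * (m : ℝ) * t ^ (2 * m + 1) = 1 ↔
        t = a1p ∨ t = a1m :=
  ⟨sq17_cx m hm, sq17_real m hm⟩
end

section
/- Fix an integer m ≥ 1, let a_{1+} ∈ (0,1) and a_{1−} ∈ (−2m−1, −2m) be the two real roots of t^{2m+2} + 2m·t^{2m+1} = 1, and set g₁(t) = (2m+2)·t^m + t^{m+1} + t^{−(m+1)}. Then: (1) for every complex root α of t^{2m+2} + 2m·t^{2m+1} = 1 with α ≠ a_{1+} and α ≠ a_{1−}, one has |g₁(α)| < g₁(a_{1+}), and g₁(a_{1+}) < 4m+4; (2) 2·(2m)^m − 1 < (−1)^m · g₁(a_{1−}) < 2·(2m)^m; (3) if m ≥ 2 then |g₁(a_{1−})| > g₁(a_{1+}), while if m = 1 then g₁(a_{1+}) > |g₁(a_{1−})|.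 -/
/-! At a root `t` of `t^(2m+1) (t + 2m) = 1` one has `t^(-(m+1)) = t^m (t + 2m)`, hence
`g₁(t) = 2 t^m (t + 2m + 1)`.

For a complex root `α` with `|α| ≤ 1`, comparing `|α|^(2m+1) (|α| + 2m) ≥ 1` with the
increasing function `x^(2m+1) (x + 2m)` gives `|α| ≥ a₁₊`, and
`|g₁(α)| ≤ 2 |α|^m (|α + 2m| + 1) = 2 (|α|^(-(m+1)) + |α|^m)`; the right side decreases on
`(0, 1]`, and the first inequality is strict unless `α` is real. A root with `|α| > 1` has
`|α| > 3/2`, and `a₁₋` and `α` are both fixed points of `z ↦ z^(-(2m+1)) - 2m`, which is a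
contraction between them.

Writing `a₁₋ = -(2m + s)` turns `(-1)^m g₁(a₁₋)` into `2 (2m + s)^m (1 - s)` with
`s (2m + s)^(2m+1) = 1`, so `s` is tiny, and (2), (3) are elementary estimates. -/

open Set

theorem g₁_eq_of_root {K : Type*} [Field K] {m : ℕ} {x : K}
    (hx : x ^ (2 * m + 1) * (x + 2 * m) = 1) :
    (2 * (m : K) + 2) * x ^ m + x ^ (m + 1) + x ^ (-((m : ℤ) + 1)) =
      2 * x ^ m * (x + 2 * m + 1) := by
  have hx0 : x ≠ 0 := by
    rintro rfl
    simp at hx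
  rw [show -((m : ℤ) + 1) = -((m + 1 : ℕ) : ℤ) by push_cast; ring, zpow_neg, zpow_natCast]
  field_simp
  linear_combination -hx

theorem pow_mul_add_one_eq {K : Type*} [Field K] {m : ℕ} {r w : K}
    (h : r ^ (2 * m + 1) * w = 1) : r ^ m * (w + 1) = (r ^ (m + 1))⁻¹ + r ^ m := by
  have hr : r ≠ 0 := by
    rintro rfl
    simp at h
  field_simp
  linear_combination h

theorem strictMonoOn_pow_mul_add (m : ℕ) :
    StrictMonoOn (fun x : ℝ => x ^ (2 * m + 1) * (x + 2 * m)) (Ioi 0) := by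
  intro x hx y _ hxy
  have hx : 0 < x := hx
  exact mul_lt_mul (pow_lt_pow_left₀ hxy hx.le (by omega)) (by linarith) (by positivity)
    (pow_pos (hx.trans hxy) _).le

theorem eq_of_root_of_abs_le_one {m : ℕ} (hm : 1 ≤ m) {a x : ℝ} (ha : 0 < a)
    (hax : a ^ (2 * m + 1) * (a + 2 * m) = 1) (hx : x ^ (2 * m + 1) * (x + 2 * m) = 1)
    (hx1 : |x| ≤ 1) : x = a := by
  rcases le_or_gt x 0 with hx0 | hx0
  · have hm1 : (1 : ℝ) ≤ m := by exact_mod_cast hm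
    have : x ^ (2 * m + 1) * (x + 2 * m) ≤ 0 :=
      mul_nonpos_of_nonpos_of_nonneg (Odd.pow_nonpos ⟨m, rfl⟩ hx0)
        (by linarith [neg_abs_le x])
    linarith
  · exact (strictMonoOn_pow_mul_add m).injOn hx0 ha (hx.trans hax.symm)

theorem antitoneOn_inv_pow_add_pow (m : ℕ) :
    AntitoneOn (fun r : ℝ => (r ^ (m + 1))⁻¹ + r ^ m) (Ioc 0 1) := by
  rintro a ⟨ha, -⟩ r ⟨-, hr1⟩ har
  have hr : 0 < r := ha.trans_le har
  have hpow : a ^ m ≤ r ^ m := pow_le_pow_left₀ ha.le har m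
  have hprod : (a * r) ^ (m + 1) ≤ r :=
    (pow_le_of_le_one (by positivity) (by nlinarith) (by omega)).trans (by nlinarith)
  have key : (a * r) ^ (m + 1) * (r ^ m - a ^ m) ≤ r ^ (m + 1) - a ^ (m + 1) := by
    calc (a * r) ^ (m + 1) * (r ^ m - a ^ m) ≤ r * (r ^ m - a ^ m) :=
          mul_le_mul_of_nonneg_right hprod (sub_nonneg.2 hpow)
      _ ≤ r ^ (m + 1) - a ^ (m + 1) := by
          rw [pow_succ, pow_succ]; nlinarith [pow_nonneg ha.le m]
  simp only
  rw [← sub_nonneg]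
  have e : (a ^ (m + 1))⁻¹ + a ^ m - ((r ^ (m + 1))⁻¹ + r ^ m) =
      ((r ^ (m + 1) - a ^ (m + 1)) - (a * r) ^ (m + 1) * (r ^ m - a ^ m)) /
        (a * r) ^ (m + 1) := by
    field_simp
    ring
  rw [e]
  exact div_nonneg (by linarith) (by positivity)

theorem pow_add_mul_one_sub_lt {m : ℕ} (hm : 0 < m) {s : ℝ} (hs : 0 < s) :
    (2 * m + s) ^ m * (1 - s) < (2 * m) ^ m := by
  have hm' : (0 : ℝ) < 2 * m := by positivity
  have hgrow : (2 * m + s) ^ m ≤ (2 * m) ^ m * Real.exp (s / 2) := by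
    calc (2 * m + s) ^ m = (2 * m) ^ m * (1 + s / (2 * m)) ^ m := by
          rw [← mul_pow]; congr 1; field_simp
      _ ≤ (2 * m) ^ m * Real.exp (s / (2 * m)) ^ m := by
          gcongr
          linarith [Real.add_one_le_exp (s / (2 * m))]
      _ = (2 * m) ^ m * Real.exp (s / 2) := by
          rw [← Real.exp_nat_mul]; congr 2; field_simp
  calc (2 * m + s) ^ m * (1 - s) ≤ (2 * m + s) ^ m * Real.exp (-s) := by
        gcongr; linarith [Real.add_one_le_exp (-s)]
    _ ≤ (2 * m) ^ m * Real.exp (s / 2) * Real.exp (-s) := by gcongr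
    _ = (2 * m) ^ m * Real.exp (-(s / 2)) := by rw [mul_assoc, ← Real.exp_add]; ring_nf
    _ < (2 * m) ^ m :=
        mul_lt_of_lt_one_right (by positivity) (Real.exp_lt_one_iff.2 (by linarith))

theorem lt_pow_add_mul_one_sub {m : ℕ} (hm : 0 < m) {s : ℝ} (hs0 : 0 < s) (hs1 : s < 1)
    (hs : s * (2 * m + s) ^ (2 * m + 1) = 1) :
    (2 * m) ^ m - 1 / 2 < (2 * m + s) ^ m * (1 - s) := by
  have hm' : (2 : ℝ) ≤ 2 * m := by
    have : (1 : ℝ) ≤ m := by exact_mod_cast hm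
    linarith
  -- `s ≈ (2m)^(-(2m+1))` is tiny
  have hsmall : s * (2 * m) ^ m * 2 ≤ 1 := by
    calc s * (2 * m) ^ m * 2 ≤ s * (2 * m) ^ m * (2 * m) ^ (m + 1) := by
          gcongr
          exact hm'.trans (le_self_pow₀ (by linarith) (by omega))
      _ = s * (2 * m) ^ (2 * m + 1) := by ring
      _ ≤ s * (2 * m + s) ^ (2 * m + 1) := by gcongr; linarith
      _ = 1 := hs
  calc (2 * m) ^ m - 1 / 2 ≤ (2 * m) ^ m * (1 - s) := by linarith
    _ < (2 * m + s) ^ m * (1 - s) :=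
        mul_lt_mul_of_pos_right (pow_lt_pow_left₀ (by linarith) (by positivity) hm.ne')
          (by linarith)

theorem neg_one_pow_mul_mem_of_root {m : ℕ} (hm : 0 < m) {a : ℝ}
    (ha : a ∈ Ioo (-(2 * (m : ℝ)) - 1) (-(2 * (m : ℝ))))
    (hroot : a ^ (2 * m + 1) * (a + 2 * m) = 1) :
    (-1) ^ m * (2 * a ^ m * (a + 2 * m + 1)) ∈
      Ioo (2 * (2 * (m : ℝ)) ^ m - 1) (2 * (2 * m) ^ m) := by
  obtain ⟨s, rfl⟩ : ∃ s : ℝ, a = -(2 * m + s) := ⟨-a - 2 * m, by ring⟩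
  have hs : s * (2 * m + s) ^ (2 * m + 1) = 1 := by
    rw [Odd.neg_pow ⟨m, rfl⟩] at hroot
    linear_combination hroot
  have e : (-1) ^ m * (2 * (-(2 * m + s)) ^ m * (-(2 * m + s) + 2 * m + 1)) =
      2 * ((2 * m + s) ^ m * (1 - s)) := by
    have hsign : ((-1 : ℝ) ^ m) * (-1) ^ m = 1 := by rw [← mul_pow]; norm_num
    rw [neg_pow (2 * (m : ℝ) + s)]
    linear_combination (2 * (2 * m + s) ^ m * (1 - s)) * hsign
  rw [e]
  constructor
  · linarith [lt_pow_add_mul_one_sub hm (s := s) (by linarith [ha.2]) (by linarith [ha.1]) hs]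
  · linarith [pow_add_mul_one_sub_lt hm (s := s) (by linarith [ha.2])]

theorem abs_eq_neg_one_pow_mul_of_pos {m : ℕ} {x : ℝ} (h : 0 < (-1) ^ m * x) :
    |x| = (-1) ^ m * x := by
  rw [← abs_of_pos h, abs_mul, abs_neg_one_pow, one_mul]

theorem Complex.norm_add_one_lt_of_im_ne_zero {z : ℂ} (h : z.im ≠ 0) : ‖z + 1‖ < ‖z‖ + 1 := by
  have hre : z.re < ‖z‖ := (le_abs_self _).trans_lt (Complex.abs_re_lt_norm.2 h)
  have hsq : ‖z + 1‖ ^ 2 < (‖z‖ + 1) ^ 2 := by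
    have e : ‖z + 1‖ ^ 2 = ‖z‖ ^ 2 + 2 * z.re + 1 := by
      simp only [Complex.sq_norm, Complex.normSq_apply, Complex.add_re, Complex.add_im,
        Complex.one_re, Complex.one_im]
      ring
    rw [e]
    linarith
  exact lt_of_pow_lt_pow_left₀ 2 (by positivity) hsq

theorem norm_pow_sub_pow_le_of_norm_le_one {R : Type*} [SeminormedRing R] [NormOneClass R]
    {u v : R} (hu : ‖u‖ ≤ 1) (hv : ‖v‖ ≤ 1) (n : ℕ) : ‖u ^ n - v ^ n‖ ≤ n * ‖u - v‖ := by
  induction n with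
  | zero => simp
  | succ n ih =>
    have hvn : ‖v ^ n‖ ≤ 1 := (norm_pow_le v n).trans (pow_le_one₀ (norm_nonneg _) hv)
    calc ‖u ^ (n + 1) - v ^ (n + 1)‖ = ‖u * (u ^ n - v ^ n) + (u - v) * v ^ n‖ := by
          rw [pow_succ', pow_succ']; noncomm_ring
      _ ≤ ‖u‖ * ‖u ^ n - v ^ n‖ + ‖u - v‖ * ‖v ^ n‖ :=
          (norm_add_le _ _).trans (add_le_add (norm_mul_le _ _) (norm_mul_le _ _))
      _ ≤ 1 * (n * ‖u - v‖) + ‖u - v‖ * 1 := by gcongr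
      _ = (n + 1 : ℕ) * ‖u - v‖ := by push_cast; ring

theorem norm_inv_pow_sub_inv_pow_le_s18 {𝕜 : Type*} [NormedField 𝕜] {x y : 𝕜}
    (hx : 1 ≤ ‖x‖) (hy : 1 ≤ ‖y‖) (n : ℕ) :
    ‖(x ^ n)⁻¹ - (y ^ n)⁻¹‖ ≤ n * ‖x - y‖ / (‖x‖ * ‖y‖) := by
  have hx0 : x ≠ 0 := norm_pos_iff.1 (by linarith)
  have hy0 : y ≠ 0 := norm_pos_iff.1 (by linarith)
  rw [← inv_pow, ← inv_pow]
  calc ‖x⁻¹ ^ n - y⁻¹ ^ n‖ ≤ n * ‖x⁻¹ - y⁻¹‖ :=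
        norm_pow_sub_pow_le_of_norm_le_one (by rw [norm_inv]; exact inv_le_one_of_one_le₀ hx)
          (by rw [norm_inv]; exact inv_le_one_of_one_le₀ hy) n
    _ = n * ‖x - y‖ / (‖x‖ * ‖y‖) := by
        rw [inv_sub_inv hx0 hy0, norm_div, norm_mul, norm_sub_rev]; ring

theorem norm_two_mul_natCast (m : ℕ) : ‖(2 * m : ℂ)‖ = 2 * m := by simp

theorem three_halves_lt_norm_of_root {m : ℕ} (hm : 1 ≤ m) {α : ℂ}
    (hα : α ^ (2 * m + 1) * (α + 2 * m) = 1) (h1 : 1 < ‖α‖) : 3 / 2 < ‖α‖ := by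
  set r := ‖α‖
  have hnorm : r ^ (2 * m + 1) * ‖α + 2 * m‖ = 1 := by
    simpa only [norm_mul, norm_pow, norm_one] using congrArg norm hα
  have hdist : 2 * m - r ≤ ‖α + 2 * m‖ := by
    have := norm_sub_norm_le (2 * m : ℂ) (-α)
    rw [norm_two_mul_natCast, norm_neg, sub_neg_eq_add, add_comm] at this
    exact this
  have hm' : (1 : ℝ) ≤ m := by exact_mod_cast hm
  by_contra! hr
  have hpow : r ^ 3 ≤ r ^ (2 * m + 1) := pow_le_pow_right₀ h1.le (by omega)
  -- `r^3 (2 - r) - 1 = (r - 1)(1 + r + r^2 - r^3)` is positive on `(1, 3/2]`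
  have hcubic : 1 < r ^ 3 * (2 - r) := by
    have : 0 < 1 + r + r ^ 2 - r ^ 3 := by nlinarith
    nlinarith [mul_pos (sub_pos.2 h1) this]
  have : r ^ 3 * (2 - r) ≤ 1 := by
    calc r ^ 3 * (2 - r) ≤ r ^ (2 * m + 1) * (2 * m - r) := by
          gcongr <;> linarith
      _ ≤ 1 := by rw [← hnorm]; gcongr
  linarith

theorem eq_of_root_of_one_lt_norm {m : ℕ} (hm : 1 ≤ m) {α β : ℂ}
    (hα : α ^ (2 * m + 1) * (α + 2 * m) = 1) (hβ : β ^ (2 * m + 1) * (β + 2 * m) = 1)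
    (hα1 : 1 < ‖α‖) (hβ1 : 2 * m < ‖β‖) : α = β := by
  have hm' : (1 : ℝ) ≤ m := by exact_mod_cast hm
  have hα32 := three_halves_lt_norm_of_root hm hα hα1
  -- both are fixed points of `z ↦ (z ^ (2m+1))⁻¹ - 2m`, which contracts by
  -- `(2m+1) / (‖α‖ ‖β‖) < 1`
  have hlip := norm_inv_pow_sub_inv_pow_le_s18 hα1.le (by linarith) (2 * m + 1)
  rw [← eq_inv_of_mul_eq_one_right hα, ← eq_inv_of_mul_eq_one_right hβ,
    add_sub_add_right_eq_sub] at hlip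
  have hcontr : ((2 * m + 1 : ℕ) : ℝ) < ‖α‖ * ‖β‖ := by push_cast; nlinarith
  by_contra hne
  have hpos : 0 < ‖α - β‖ := norm_pos_iff.2 (sub_ne_zero.2 hne)
  rw [le_div_iff₀ (by nlinarith)] at hlip
  nlinarith

theorem norm_lt_of_root_of_norm_le_one {m : ℕ} (hm : 1 ≤ m) {a : ℝ} (ha : 0 < a)
    (har : a ^ (2 * m + 1) * (a + 2 * m) = 1) {α : ℂ} (hα : α ^ (2 * m + 1) * (α + 2 * m) = 1)
    (hα1 : ‖α‖ ≤ 1) (hne : α ≠ a) :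
    ‖2 * α ^ m * (α + 2 * m + 1)‖ < 2 * a ^ m * (a + 2 * m + 1) := by
  set r := ‖α‖
  have hnorm : r ^ (2 * m + 1) * ‖α + 2 * m‖ = 1 := by
    simpa only [norm_mul, norm_pow, norm_one] using congrArg norm hα
  have hr : 0 < r := norm_pos_iff.2 (by rintro rfl; simp at hα)
  have har_le : a ≤ r := by
    refine ((strictMonoOn_pow_mul_add m).le_iff_le ha hr).1 ?_
    calc a ^ (2 * m + 1) * (a + 2 * m) = r ^ (2 * m + 1) * ‖α + 2 * m‖ :=
          har.trans hnorm.symm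
      _ ≤ r ^ (2 * m + 1) * (r + 2 * m) := by
          gcongr
          exact (norm_add_le _ _).trans_eq (by rw [norm_two_mul_natCast])
  have him : α.im ≠ 0 := by
    intro him
    have hreal : α = (α.re : ℂ) := Complex.ext rfl (by simp [him])
    rw [hreal] at hα hne
    exact hne (congrArg _ (eq_of_root_of_abs_le_one hm ha har (by exact_mod_cast hα)
      ((Complex.abs_re_le_norm α).trans hα1)))
  calc ‖2 * α ^ m * (α + 2 * m + 1)‖ = 2 * (r ^ m * ‖α + 2 * m + 1‖) := by
        rw [norm_mul, norm_mul, norm_pow, Complex.norm_two, mul_assoc]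
    _ < 2 * (r ^ m * (‖α + 2 * m‖ + 1)) := by
        gcongr
        exact Complex.norm_add_one_lt_of_im_ne_zero (by simpa using him)
    _ = 2 * ((r ^ (m + 1))⁻¹ + r ^ m) := by rw [pow_mul_add_one_eq hnorm]
    _ ≤ 2 * ((a ^ (m + 1))⁻¹ + a ^ m) := by
        gcongr 2 * ?_
        exact antitoneOn_inv_pow_add_pow m ⟨ha, har_le.trans hα1⟩ ⟨hr, hα1⟩ har_le
    _ = 2 * a ^ m * (a + 2 * m + 1) := by rw [← pow_mul_add_one_eq har]; ring

theorem four_lt_of_pow_three_mul_add_two_eq_one {a : ℝ} (ha : 0 < a) (har : a ^ 3 * (a + 2) = 1) :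
    4 < 2 * a * (a + 3) := by
  have : 3 / 5 < a := by
    by_contra! h
    nlinarith [pow_le_pow_left₀ ha.le h 3]
  nlinarith

/-- Fix `m ≥ 1`, let `a₁₊ ∈ (0,1)` and `a₁₋ ∈ (−2m−1, −2m)` be the two real
roots of `t^(2m+2) + 2m·t^(2m+1) = 1`, and set `g₁(t) = (2m+2)tᵐ + t^(m+1) + t^(−(m+1))`.
Then: (1) every complex root `α ∉ {a₁₊, a₁₋}` satisfies `|g₁(α)| < g₁(a₁₊)`, and
`g₁(a₁₊) < 4m+4`; (2) `2(2m)ᵐ − 1 < (−1)ᵐ·g₁(a₁₋) < 2(2m)ᵐ`; (3) if `m ≥ 2` then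
`|g₁(a₁₋)| > g₁(a₁₊)`, while if `m = 1` then `g₁(a₁₊) > |g₁(a₁₋)|`. -/
theorem stmt_18 (m : ℕ) (hm : 1 ≤ m)
    (a1p : ℝ) (ha1p : a1p ∈ Set.Ioo (0 : ℝ) 1)
    (ha1pr : a1p ^ (2 * m + 2) + 2 * (m : ℝ) * a1p ^ (2 * m + 1) = 1)
    (a1m : ℝ) (ha1m : a1m ∈ Set.Ioo (-(2 * (m : ℝ)) - 1) (-(2 * (m : ℝ))))
    (ha1mr : a1m ^ (2 * m + 2) + 2 * (m : ℝ) * a1m ^ (2 * m + 1) = 1) :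
    ((∀ α : ℂ, α ^ (2 * m + 2) + 2 * (m : ℂ) * α ^ (2 * m + 1) = 1 →
        α ≠ (a1p : ℂ) → α ≠ (a1m : ℂ) →
        ‖(2 * (m : ℂ) + 2) * α ^ m + α ^ (m + 1) + α ^ (-((m : ℤ) + 1))‖ <
          (2 * (m : ℝ) + 2) * a1p ^ m + a1p ^ (m + 1) + a1p ^ (-((m : ℤ) + 1))) ∧
      (2 * (m : ℝ) + 2) * a1p ^ m + a1p ^ (m + 1) + a1p ^ (-((m : ℤ) + 1)) <
        4 * m + 4) ∧
    (2 * (2 * (m : ℝ)) ^ m - 1 <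
      (-1 : ℝ) ^ m *
        ((2 * (m : ℝ) + 2) * a1m ^ m + a1m ^ (m + 1) + a1m ^ (-((m : ℤ) + 1))) ∧
      (-1 : ℝ) ^ m *
        ((2 * (m : ℝ) + 2) * a1m ^ m + a1m ^ (m + 1) + a1m ^ (-((m : ℤ) + 1))) <
        2 * (2 * (m : ℝ)) ^ m) ∧
    ((2 ≤ m →
      |(2 * (m : ℝ) + 2) * a1m ^ m + a1m ^ (m + 1) + a1m ^ (-((m : ℤ) + 1))| >
        (2 * (m : ℝ) + 2) * a1p ^ m + a1p ^ (m + 1) + a1p ^ (-((m : ℤ) + 1))) ∧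
     (m = 1 →
      (2 * (m : ℝ) + 2) * a1p ^ m + a1p ^ (m + 1) + a1p ^ (-((m : ℤ) + 1)) >
        |(2 * (m : ℝ) + 2) * a1m ^ m + a1m ^ (m + 1) + a1m ^ (-((m : ℤ) + 1))|)) := by
  obtain ⟨hp0, hp1⟩ := ha1p
  have hp : a1p ^ (2 * m + 1) * (a1p + 2 * m) = 1 := by linear_combination ha1pr
  have hn : a1m ^ (2 * m + 1) * (a1m + 2 * m) = 1 := by linear_combination ha1mr
  rw [g₁_eq_of_root hp, g₁_eq_of_root hn]
  obtain ⟨hnlow, hnupp⟩ := neg_one_pow_mul_mem_of_root hm ha1m hn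
  have hpupp : 2 * a1p ^ m * (a1p + 2 * m + 1) < 4 * m + 4 := by
    have : a1p ^ m < 1 := pow_lt_one₀ hp0.le hp1 (by omega)
    nlinarith [pow_pos hp0 m]
  have habs := abs_eq_neg_one_pow_mul_of_pos (x := 2 * a1m ^ m * (a1m + 2 * m + 1))
    (by linarith [one_le_pow₀ (M₀ := ℝ) (a := 2 * m) (n := m) (by norm_cast; omega)])
  refine ⟨⟨fun α hα hαp hαn => ?_, hpupp⟩, ⟨hnlow, hnupp⟩, fun hm2 => ?_, fun hm1 => ?_⟩
  · have hα' : α ^ (2 * m + 1) * (α + 2 * m) = 1 := by linear_combination hα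
    rw [g₁_eq_of_root hα']
    rcases le_or_gt ‖α‖ 1 with h | h
    · exact norm_lt_of_root_of_norm_le_one hm hp0 hp hα' h hαp
    · refine absurd (eq_of_root_of_one_lt_norm hm hα' ?_ h ?_) hαn
      · exact_mod_cast hn
      · rw [Complex.norm_real, Real.norm_eq_abs, abs_of_neg (by linarith [ha1m.2])]
        linarith [ha1m.2]
  · have : (2 * m) ^ 2 ≤ (2 * (m : ℝ)) ^ m := pow_le_pow_right₀ (by norm_cast; omega) hm2
    have : (2 : ℝ) ≤ m := by exact_mod_cast hm2
    rw [habs]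
    nlinarith
  · subst hm1
    rw [habs]
    norm_num at hp hnupp ⊢
    linarith [four_lt_of_pow_three_mul_add_two_eq_one hp0 hp]
end
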